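/- arXiv:math/0702681 — 10 statements merged into one kernel-verified Lean document; each statement's English description precedes it below -/
import Mathlib

section
/- Let $F/K$ be a finite Galois extension whose Galois group is $G_1 \times G_2$ with $G_i = \langle \sigma_i \rangle$ cyclic. Let $N_i$ denote the norm map of $F$ over the fixed field of $\sigma_i$. If $x_1, x_2 \in F^\times$ satisfy $N_1(x_1) = 1$, $N_2(x_2) = 1$, and $\sigma_2(x_1)/x_1 = \sigma_1(x_2)/x_2$, then there exists $y \in F^\times$ with $x_1 = \sigma_1(y)/y$ and $x_2 = \sigma_2(y)/y$. -/
section BicyclicAux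

variable {K F : Type*} [Field K] [Field F] [Algebra K F]

/-- Partial "norm" product `x · σ(x) · ... · σ^(n-1)(x)`. -/
noncomputable def bchP (σ : F ≃ₐ[K] F) (x : F) (n : ℕ) : F :=
  ∏ k ∈ Finset.range n, (σ ^ k) x

lemma bchP_zero (σ : F ≃ₐ[K] F) (x : F) : bchP σ x 0 = 1 :=
  Finset.prod_range_zero _

lemma bchP_succ (σ : F ≃ₐ[K] F) (x : F) (n : ℕ) :
    bchP σ x (n + 1) = bchP σ x n * (σ ^ n) x :=
  Finset.prod_range_succ _ _

lemma bchP_one (σ : F ≃ₐ[K] F) (x : F) : bchP σ x 1 = x := by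
  simp [bchP]

lemma bchP_add (σ : F ≃ₐ[K] F) (x : F) (m n : ℕ) :
    bchP σ x (m + n) = bchP σ x m * (σ ^ m) (bchP σ x n) := by
  rw [bchP, Finset.prod_range_add, bchP, bchP, map_prod]
  congr 1
  refine Finset.prod_congr rfl fun k _ => ?_
  rw [pow_add, AlgEquiv.mul_apply]

lemma bchP_ne_zero (σ : F ≃ₐ[K] F) {x : F} (hx : x ≠ 0) (n : ℕ) :
    bchP σ x n ≠ 0 :=
  Finset.prod_ne_zero_iff.2 fun k _ h =>
    hx (by simpa only [AlgEquiv.symm_apply_apply, map_zero] using congrArg (σ ^ k).symm h)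

lemma bchP_periodic (σ : F ≃ₐ[K] F) (x : F) (h : bchP σ x (orderOf σ) = 1) :
    Function.Periodic (bchP σ x) (orderOf σ) := fun n => by
  rw [bchP_add, h, map_one, mul_one]

lemma bchP_congr (σ : F ≃ₐ[K] F) (x : F) (h : bchP σ x (orderOf σ) = 1)
    {a b : ℕ} (hab : a % orderOf σ = b % orderOf σ) :
    bchP σ x a = bchP σ x b := by
  rw [← (bchP_periodic σ x h).map_mod_nat a, ← (bchP_periodic σ x h).map_mod_nat b, hab]

lemma alg_swap {σ₁ σ₂ : F ≃ₐ[K] F} (hcomm : σ₁ * σ₂ = σ₂ * σ₁)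
    (i j : ℕ) (z : F) : (σ₂ ^ j) ((σ₁ ^ i) z) = (σ₁ ^ i) ((σ₂ ^ j) z) := by
  rw [← AlgEquiv.mul_apply, ← AlgEquiv.mul_apply,
    (Commute.pow_pow ((hcomm : Commute σ₁ σ₂).symm) j i)]

lemma bch_crossA {σ₁ σ₂ : F ≃ₐ[K] F} (hcomm : σ₁ * σ₂ = σ₂ * σ₁) {x₁ x₂ : F}
    (h3 : σ₂ x₁ * x₂ = σ₁ x₂ * x₁) (j : ℕ) :
    (σ₂ ^ j) x₁ * bchP σ₂ x₂ j = σ₁ (bchP σ₂ x₂ j) * x₁ := by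
  induction j with
  | zero => simp [bchP_zero]
  | succ j ih =>
    have hm := congrArg (σ₂ ^ j) h3
    simp only [map_mul] at hm
    have hc : σ₁ ((σ₂ ^ j) x₂) = (σ₂ ^ j) (σ₁ x₂) := by
      simpa using (alg_swap hcomm 1 j x₂).symm
    rw [bchP_succ, pow_succ, AlgEquiv.mul_apply, map_mul, hc]
    linear_combination bchP σ₂ x₂ j * hm + (σ₂ ^ j) (σ₁ x₂) * ih

lemma bch_cross {σ₁ σ₂ : F ≃ₐ[K] F} (hcomm : σ₁ * σ₂ = σ₂ * σ₁) {x₁ x₂ : F}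
    (h3 : σ₂ x₁ * x₂ = σ₁ x₂ * x₁) (i j : ℕ) :
    (σ₂ ^ j) (bchP σ₁ x₁ i) * bchP σ₂ x₂ j
      = (σ₁ ^ i) (bchP σ₂ x₂ j) * bchP σ₁ x₁ i := by
  induction i with
  | zero => simp [bchP_zero]
  | succ i ih =>
    have hA := congrArg (σ₁ ^ i) (bch_crossA hcomm h3 j)
    simp only [map_mul] at hA
    rw [bchP_succ, map_mul, pow_succ, AlgEquiv.mul_apply, alg_swap hcomm i j x₁]
    linear_combination ((σ₁ ^ i) ((σ₂ ^ j) x₁)) * ih + bchP σ₁ x₁ i * hA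


lemma toNat_emod_add_helper {n : ℕ} (hn : 0 < n) (i i' : ℤ) :
    ((i + i') % (n : ℤ)).toNat % n
      = (((i % (n : ℤ)).toNat) + ((i' % (n : ℤ)).toNat)) % n := by
  have hn' : (n : ℤ) ≠ 0 := by exact_mod_cast hn.ne'
  have t1 : ((((i + i') % (n : ℤ)).toNat : ℤ)) = (i + i') % (n : ℤ) :=
    Int.toNat_of_nonneg (Int.emod_nonneg _ hn')
  have t2 : (((i % (n : ℤ)).toNat : ℤ)) = i % (n : ℤ) :=
    Int.toNat_of_nonneg (Int.emod_nonneg _ hn')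
  have t3 : (((i' % (n : ℤ)).toNat : ℤ)) = i' % (n : ℤ) :=
    Int.toNat_of_nonneg (Int.emod_nonneg _ hn')
  have : ((((i + i') % (n : ℤ)).toNat : ℤ)) % (n : ℤ)
      = ((((i % (n : ℤ)).toNat) + ((i' % (n : ℤ)).toNat) : ℕ) : ℤ) % (n : ℤ) := by
    push_cast
    rw [t1, t2, t3, Int.emod_emod_of_dvd _ dvd_rfl, Int.add_emod]
  exact_mod_cast this

lemma toNat_one_emod_helper {n : ℕ} (hn : 0 < n) :
    (((1 : ℤ) % (n : ℤ)).toNat) % n = 1 % n := by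
  have hn' : (n : ℤ) ≠ 0 := by exact_mod_cast hn.ne'
  have t1 : ((((1 : ℤ) % (n : ℤ)).toNat : ℤ)) = (1 : ℤ) % (n : ℤ) :=
    Int.toNat_of_nonneg (Int.emod_nonneg _ hn')
  have : ((((1 : ℤ) % (n : ℤ)).toNat : ℤ)) % (n : ℤ) = ((1 % n : ℕ) : ℤ) := by
    push_cast
    rw [t1, Int.emod_emod_of_dvd _ dvd_rfl]
  exact_mod_cast this

end BicyclicAux

/-- Bicyclic Hilbert 90: `F/K` finite Galois with group `⟨σ₁⟩ × ⟨σ₂⟩` (internal direct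
product of the cyclic subgroups generated by `σ₁` and `σ₂`).  `Nᵢ`, the norm of `F` over
the fixed field of `σᵢ`, is the product of the conjugates `σᵢ^k x` for `0 ≤ k < orderOf σᵢ`. -/
theorem bicyclic_hilbert90 {K F : Type*} [Field K] [Field F] [Algebra K F]
    [FiniteDimensional K F] [IsGalois K F]
    (σ₁ σ₂ : F ≃ₐ[K] F)
    (hcomm : σ₁ * σ₂ = σ₂ * σ₁)
    (hgen : ∀ g : F ≃ₐ[K] F, ∃ i j : ℤ, g = σ₁ ^ i * σ₂ ^ j)
    (hdisj : Subgroup.zpowers σ₁ ⊓ Subgroup.zpowers σ₂ = ⊥)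
    (x₁ x₂ : Fˣ)
    (h1 : ∏ k ∈ Finset.range (orderOf σ₁), (σ₁ ^ k) (x₁ : F) = 1)
    (h2 : ∏ k ∈ Finset.range (orderOf σ₂), (σ₂ ^ k) (x₂ : F) = 1)
    (h3 : σ₂ (x₁ : F) / (x₁ : F) = σ₁ (x₂ : F) / (x₂ : F)) :
    ∃ y : Fˣ, (x₁ : F) = σ₁ (y : F) / (y : F) ∧ (x₂ : F) = σ₂ (y : F) / (y : F) := by
  classical
  set n₁ := orderOf σ₁ with hn₁def
  set n₂ := orderOf σ₂ with hn₂def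
  have hn₁ : 0 < n₁ := orderOf_pos σ₁
  have hn₂ : 0 < n₂ := orderOf_pos σ₂
  have h1' : bchP σ₁ (x₁ : F) n₁ = 1 := h1
  have h2' : bchP σ₂ (x₂ : F) n₂ = 1 := h2
  have hx1 : (x₁ : F) ≠ 0 := x₁.ne_zero
  have hx2 : (x₂ : F) ≠ 0 := x₂.ne_zero
  have h3m : σ₂ (x₁ : F) * (x₂ : F) = σ₁ (x₂ : F) * (x₁ : F) := by
    field_simp at h3
    linear_combination h3
  -- reduction of integer powers to natural powers
  have red₁ : ∀ i : ℤ, σ₁ ^ i = σ₁ ^ ((i % (n₁ : ℤ)).toNat) := by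
    intro i
    rw [← zpow_natCast, Int.toNat_of_nonneg (Int.emod_nonneg i (by exact_mod_cast hn₁.ne'))]
    exact (zpow_mod_orderOf σ₁ i).symm
  have red₂ : ∀ j : ℤ, σ₂ ^ j = σ₂ ^ ((j % (n₂ : ℤ)).toNat) := by
    intro j
    rw [← zpow_natCast, Int.toNat_of_nonneg (Int.emod_nonneg j (by exact_mod_cast hn₂.ne'))]
    exact (zpow_mod_orderOf σ₂ j).symm
  set D₁ : ℤ → F := fun i => bchP σ₁ (x₁ : F) ((i % (n₁ : ℤ)).toNat) with hD₁def
  set D₂ : ℤ → F := fun j => bchP σ₂ (x₂ : F) ((j % (n₂ : ℤ)).toNat) with hD₂def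
  have hD₁add : ∀ i i' : ℤ, D₁ (i + i') = D₁ i * (σ₁ ^ i) (D₁ i') := by
    intro i i'
    simp only [hD₁def]
    rw [bchP_congr σ₁ (x₁ : F) h1' (toNat_emod_add_helper hn₁ i i'),
      bchP_add, red₁ i]
  have hD₂add : ∀ j j' : ℤ, D₂ (j + j') = D₂ j * (σ₂ ^ j) (D₂ j') := by
    intro j j'
    simp only [hD₂def]
    rw [bchP_congr σ₂ (x₂ : F) h2' (toNat_emod_add_helper hn₂ j j'),
      bchP_add, red₂ j]
  have hcross : ∀ i j : ℤ, (σ₂ ^ j) (D₁ i) * D₂ j = (σ₁ ^ i) (D₂ j) * D₁ i := by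
    intro i j
    rw [red₁ i, red₂ j]
    exact bch_cross hcomm h3m _ _
  have hzswap : ∀ (i j : ℤ) (z : F), (σ₂ ^ j) ((σ₁ ^ i) z) = (σ₁ ^ i) ((σ₂ ^ j) z) := by
    intro i j z
    rw [red₁ i, red₂ j]
    exact alg_swap hcomm _ _ z
  have hD₁ne : ∀ i : ℤ, D₁ i ≠ 0 := fun i => bchP_ne_zero σ₁ hx1 _
  have hD₂ne : ∀ j : ℤ, D₂ j ≠ 0 := fun j => bchP_ne_zero σ₂ hx2 _
  have hmapne : ∀ (g : F ≃ₐ[K] F) (z : F), z ≠ 0 → g z ≠ 0 := fun g z hz h =>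
    hz (by simpa using congrArg g.symm h)
  set V : ℤ → ℤ → F := fun i j => D₁ i * (σ₁ ^ i) (D₂ j) with hVdef
  have hVne : ∀ i j, V i j ≠ 0 := fun i j =>
    mul_ne_zero (hD₁ne i) (hmapne _ _ (hD₂ne j))
  -- key cocycle identity
  have keyV : ∀ i j i' j' : ℤ,
      V (i + i') (j + j') = V i j * ((σ₁ ^ i) * (σ₂ ^ j)) (V i' j') := by
    intro i j i' j'
    have hA := congrArg (σ₁ ^ i) (hcross i' j)
    simp only [map_mul] at hA
    have hs : (σ₁ ^ i) ((σ₂ ^ j) ((σ₁ ^ i') (D₂ j')))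
        = (σ₁ ^ i) ((σ₁ ^ i') ((σ₂ ^ j) (D₂ j'))) :=
      congrArg (σ₁ ^ i) (hzswap i' j (D₂ j'))
    simp only [hVdef, AlgEquiv.mul_apply]
    rw [hD₁add i i', hD₂add j j', zpow_add, AlgEquiv.mul_apply]
    simp only [map_mul]
    linear_combination
      (-(D₁ i * (σ₁ ^ i) (D₂ j) * (σ₁ ^ i) ((σ₂ ^ j) (D₁ i')))) * hs
        + (-(D₁ i * (σ₁ ^ i) ((σ₁ ^ i') ((σ₂ ^ j) (D₂ j'))))) * hA
  -- well-definedness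
  have welldef : ∀ i j i' j' : ℤ, σ₁ ^ i * σ₂ ^ j = σ₁ ^ i' * σ₂ ^ j' →
      V i j = V i' j' := by
    intro i j i' j' heq
    have key : σ₁ ^ (i - i') = σ₂ ^ (j' - j) := by
      calc σ₁ ^ (i - i') = σ₁ ^ (-i') * (σ₁ ^ i * σ₂ ^ j) * σ₂ ^ (-j) := by group
        _ = σ₁ ^ (-i') * (σ₁ ^ i' * σ₂ ^ j') * σ₂ ^ (-j) := by rw [heq]
        _ = σ₂ ^ (j' - j) := by group
    have hmem : σ₁ ^ (i - i') ∈ Subgroup.zpowers σ₁ ⊓ Subgroup.zpowers σ₂ := by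
      refine Subgroup.mem_inf.2 ⟨⟨i - i', rfl⟩, ?_⟩
      rw [key]; exact ⟨j' - j, rfl⟩
    rw [hdisj, Subgroup.mem_bot] at hmem
    have hone₂ : σ₂ ^ (j' - j) = 1 := by rw [← key, hmem]
    have hd₁ : (n₁ : ℤ) ∣ i - i' := orderOf_dvd_iff_zpow_eq_one.2 hmem
    have hd₂ : (n₂ : ℤ) ∣ j' - j := orderOf_dvd_iff_zpow_eq_one.2 hone₂
    have hm₁ : i % (n₁ : ℤ) = i' % (n₁ : ℤ) := Int.ModEq.symm (Int.modEq_iff_dvd.2 hd₁)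
    have hm₂ : j % (n₂ : ℤ) = j' % (n₂ : ℤ) := Int.modEq_iff_dvd.2 hd₂
    simp only [hVdef, hD₁def, hD₂def]
    rw [hm₁, hm₂, red₁ i, red₁ i', hm₁]
  -- the 1-cocycle on the whole Galois group
  choose I J hIJ using hgen
  set fco : (F ≃ₐ[K] F) → Fˣ := fun g => Units.mk0 (V (I g) (J g)) (hVne _ _) with hfcodef
  have hfval : ∀ g, (fco g : F) = V (I g) (J g) := fun g => rfl
  have hzz : ∀ a b : ℤ, σ₂ ^ a * σ₁ ^ b = σ₁ ^ b * σ₂ ^ a := fun a b =>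
    (Commute.zpow_zpow (Commute.symm (show Commute σ₁ σ₂ from hcomm)) a b)
  have hcoc : groupCohomology.IsMulCocycle₁ fco := by
    intro g h
    have hgh : g * h = σ₁ ^ (I g + I h) * σ₂ ^ (J g + J h) := by
      calc g * h = (σ₁ ^ I g * σ₂ ^ J g) * (σ₁ ^ I h * σ₂ ^ J h) := by
            rw [← hIJ g, ← hIJ h]
        _ = σ₁ ^ I g * (σ₂ ^ J g * σ₁ ^ I h) * σ₂ ^ J h := by group
        _ = σ₁ ^ I g * (σ₁ ^ I h * σ₂ ^ J g) * σ₂ ^ J h := by rw [hzz]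
        _ = σ₁ ^ (I g + I h) * σ₂ ^ (J g + J h) := by group
    have e1 : V (I (g * h)) (J (g * h)) = V (I g + I h) (J g + J h) :=
      welldef _ _ _ _ (by rw [← hIJ (g * h), hgh])
    refine Units.ext ?_
    rw [Units.val_mul]
    simp only [AlgEquiv.smul_units_def, Units.coe_map, MonoidHom.coe_coe]
    rw [hfval, hfval, hfval, e1, keyV, ← hIJ g, mul_comm]
  obtain ⟨β, hβ⟩ :=
    groupCohomology.isMulCoboundary₁_of_isMulCocycle₁_of_aut_to_units fco hcoc
  refine ⟨β, ?_, ?_⟩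
  · have h := congrArg Units.val (hβ σ₁)
    simp only [AlgEquiv.smul_units_def, Units.val_div_eq_div_val, Units.coe_map,
      MonoidHom.coe_coe] at h
    rw [hfval] at h
    have e1 : V (I σ₁) (J σ₁) = V 1 0 :=
      welldef _ _ _ _ (by rw [← hIJ σ₁, zpow_one, zpow_zero, mul_one])
    have e2 : V 1 0 = (x₁ : F) := by
      simp only [hVdef, hD₁def, hD₂def]
      rw [show ((0 : ℤ) % (n₂ : ℤ)).toNat = 0 by simp, bchP_zero, map_one, mul_one]
      rw [bchP_congr σ₁ (x₁ : F) h1'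
        (toNat_one_emod_helper hn₁), bchP_one]
    rw [e1, e2] at h
    exact h.symm
  · have h := congrArg Units.val (hβ σ₂)
    simp only [AlgEquiv.smul_units_def, Units.val_div_eq_div_val, Units.coe_map,
      MonoidHom.coe_coe] at h
    rw [hfval] at h
    have e1 : V (I σ₂) (J σ₂) = V 0 1 :=
      welldef _ _ _ _ (by rw [← hIJ σ₂, zpow_one, zpow_zero, one_mul])
    have e2 : V 0 1 = (x₂ : F) := by
      simp only [hVdef, hD₁def, hD₂def]
      rw [show ((0 : ℤ) % (n₁ : ℤ)).toNat = 0 by simp, bchP_zero, one_mul, zpow_zero]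
      rw [bchP_congr σ₂ (x₂ : F) h2'
        (toNat_one_emod_helper hn₂), bchP_one]
      simp
    rw [e1, e2] at h
    exact h.symm
end

section
/- Let $F/K$ be a finite Galois extension with group $\langle \sigma_1 \rangle \times \cdots \times \langle \sigma_r \rangle$ a product of cyclic groups, and let $N_i$ be the norm of $F$ over the fixed field of $\sigma_i$. If elements $x_1, \ldots, x_r \in F^\times$ satisfy $N_i(x_i) = 1$ for all $i$ and $\sigma_i(x_j)/x_j = \sigma_j(x_i)/x_i$ for all $i, j$, then there exists $y \in F^\times$ with $x_i = \sigma_i(y)/y$ for all $i$. -/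
open Finset

section ListLemmas
variable {G : Type*} [Group G]

lemma mh_commute_listProd {g : G} {r : ℕ} {f : Fin r → G} (h : ∀ i, Commute g (f i)) :
    Commute g (List.ofFn f).prod :=
  Commute.list_prod_right _ _ (by
    intro y hy
    rw [List.mem_ofFn] at hy
    obtain ⟨i, rfl⟩ := hy
    exact h i)

lemma mh_listProd_mul {r : ℕ} (u v : Fin r → G) (h : ∀ i j, Commute (u i) (v j)) :
    (List.ofFn fun i => u i * v i).prod = (List.ofFn u).prod * (List.ofFn v).prod := by
  induction r with
  | zero => simp
  | succ r ih =>
    simp only [List.ofFn_succ, List.prod_cons]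
    rw [ih (fun i => u i.succ) (fun i => v i.succ) (fun i j => h i.succ j.succ)]
    have hc : Commute (v 0) (List.ofFn fun i => u i.succ).prod :=
      mh_commute_listProd (fun i => (h i.succ 0).symm)
    rw [mul_assoc, mul_assoc, ← mul_assoc (v 0), hc.eq, mul_assoc]

lemma mh_listProd_extract {r : ℕ} (f : Fin r → G) (hc : ∀ i j, Commute (f i) (f j)) (i : Fin r) :
    (List.ofFn f).prod = f i * (List.ofFn (Function.update f i 1)).prod := by
  induction r with
  | zero => exact absurd i.2 (by simp)
  | succ r ih =>
    rcases Fin.eq_zero_or_eq_succ i with rfl | ⟨i', rfl⟩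
    · simp only [List.ofFn_succ, List.prod_cons, Function.update_self]
      rw [one_mul]
      have : (fun i : Fin r => Function.update f 0 1 i.succ) = fun i : Fin r => f i.succ := by
        funext j
        rw [Function.update_of_ne (Fin.succ_ne_zero j)]
      rw [this]
    · simp only [List.ofFn_succ, List.prod_cons]
      have htail : (fun j : Fin r => Function.update f i'.succ 1 j.succ)
          = Function.update (fun j : Fin r => f j.succ) i' 1 := by
        funext j
        rcases eq_or_ne j i' with rfl | hne
        · simp
        · rw [Function.update_of_ne (fun h => hne (Fin.succ_injective _ h)),
            Function.update_of_ne hne]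
      rw [ih (fun j => f j.succ) (fun a b => hc a.succ b.succ) i']
      rw [htail, Function.update_of_ne (Ne.symm (Fin.succ_ne_zero i'))]
      rw [← mul_assoc, ← mul_assoc, (hc 0 i'.succ).eq]
end ListLemmas

section Core
variable {G : Type*} [Group G] {M : Type*} [CommGroup M] [MulDistribMulAction G M]
variable {r : ℕ}

/-- product of the `σ i ^ a i` -/
def mhT (σ : Fin r → G) (a : Fin r → ℕ) : G := (List.ofFn fun i => σ i ^ a i).prod

/-- partial norms -/
def mhp (σ : Fin r → G) (x : Fin r → M) (i : Fin r) (m : ℕ) : M :=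
  ∏ k ∈ range m, (σ i ^ k) • x i

lemma mh_smul_prod {ι : Type*} (g : G) (s : Finset ι) (f : ι → M) :
    g • ∏ i ∈ s, f i = ∏ i ∈ s, g • f i := by
  exact map_prod (MulDistribMulAction.toMonoidHom M g) f s

lemma mhp_zero (σ : Fin r → G) (x : Fin r → M) (i : Fin r) : mhp σ x i 0 = 1 := by
  simp [mhp]

lemma mhp_succ (σ : Fin r → G) (x : Fin r → M) (i : Fin r) (m : ℕ) :
    mhp σ x i (m + 1) = mhp σ x i m * (σ i ^ m) • x i := by
  simp [mhp, prod_range_succ]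

lemma mhp_one (σ : Fin r → G) (x : Fin r → M) (i : Fin r) : mhp σ x i 1 = x i := by
  simp [mhp]

lemma mhp_add (σ : Fin r → G) (x : Fin r → M) (i : Fin r) (m l : ℕ) :
    mhp σ x i (m + l) = mhp σ x i m * (σ i ^ m) • mhp σ x i l := by
  simp only [mhp, prod_range_add, mh_smul_prod]
  congr 1
  refine prod_congr rfl fun k _ => ?_
  rw [← mul_smul, pow_add]

lemma mhp_mod (σ : Fin r → G) (x : Fin r → M) {n : Fin r → ℕ} (hpos : ∀ i, 0 < n i)
    (hnorm : ∀ i, mhp σ x i (n i) = 1) (i : Fin r) (m : ℕ) :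
    mhp σ x i m = mhp σ x i (m % n i) := by
  induction m using Nat.strong_induction_on with
  | _ m ih =>
    rcases lt_or_ge m (n i) with h | h
    · rw [Nat.mod_eq_of_lt h]
    · have h1 : m = m - n i + n i := (Nat.sub_add_cancel h).symm
      have h2 : m - n i < m := Nat.sub_lt (lt_of_lt_of_le (hpos i) h) (hpos i)
      rw [Nat.mod_eq_sub_mod h, ← ih _ h2]
      conv_lhs => rw [h1]
      rw [mhp_add, hnorm i, smul_one, mul_one]

variable (σ : Fin r → G) (x : Fin r → M)

lemma mh_claim1 (hc : ∀ i j, Commute (σ i) (σ j))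
    (hcompat : ∀ i j, σ i • x j * x i = σ j • x i * x j) (i j : Fin r) (l : ℕ) :
    (σ j ^ l) • x i * mhp σ x j l = σ i • mhp σ x j l * x i := by
  induction l with
  | zero => simp [mhp]
  | succ l ih =>
    have e1 : (σ j ^ (l + 1)) • x i * (σ j ^ l) • x j
        = (σ j ^ l) • (σ i • x j) * (σ j ^ l) • x i := by
      rw [pow_succ, mul_smul, ← smul_mul', ← hcompat i j, smul_mul']
    have e2 : (σ j ^ l) • (σ i • x j) = σ i • ((σ j ^ l) • x j) := by
      rw [← mul_smul, ← mul_smul, ((hc i j).pow_right l).eq]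
    calc (σ j ^ (l + 1)) • x i * mhp σ x j (l + 1)
        = ((σ j ^ (l + 1)) • x i * (σ j ^ l) • x j) * mhp σ x j l := by
          rw [mhp_succ]; simp [mul_comm, mul_left_comm, mul_assoc]
      _ = σ i • ((σ j ^ l) • x j) * ((σ j ^ l) • x i * mhp σ x j l) := by
          rw [e1, e2]; simp [mul_comm, mul_left_comm, mul_assoc]
      _ = σ i • ((σ j ^ l) • x j) * (σ i • mhp σ x j l * x i) := by rw [ih]
      _ = σ i • mhp σ x j (l + 1) * x i := by
          rw [mhp_succ, smul_mul']; simp [mul_comm, mul_left_comm, mul_assoc]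

lemma mh_claim2 (hc : ∀ i j, Commute (σ i) (σ j))
    (hcompat : ∀ i j, σ i • x j * x i = σ j • x i * x j) (i j : Fin r) (m l : ℕ) :
    (σ j ^ l) • mhp σ x i m * mhp σ x j l = (σ i ^ m) • mhp σ x j l * mhp σ x i m := by
  induction m with
  | zero => simp [mhp]
  | succ m ih =>
    have e3 : (σ j ^ l) • ((σ i ^ m) • x i) = (σ i ^ m) • ((σ j ^ l) • x i) := by
      rw [← mul_smul, ← mul_smul, ((hc i j).pow_pow m l).eq]
    have e4 : mhp σ x j l * (σ j ^ l) • x i = σ i • mhp σ x j l * x i := by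
      rw [mul_comm, mh_claim1 σ x hc hcompat i j l]
    calc (σ j ^ l) • mhp σ x i (m + 1) * mhp σ x j l
        = ((σ j ^ l) • mhp σ x i m * mhp σ x j l) * (σ i ^ m) • ((σ j ^ l) • x i) := by
          rw [mhp_succ, smul_mul', e3]; simp [mul_comm, mul_left_comm, mul_assoc]
      _ = ((σ i ^ m) • mhp σ x j l * mhp σ x i m) * (σ i ^ m) • ((σ j ^ l) • x i) := by rw [ih]
      _ = (σ i ^ m) • (mhp σ x j l * (σ j ^ l) • x i) * mhp σ x i m := by
          rw [smul_mul']; simp [mul_comm, mul_left_comm, mul_assoc]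
      _ = (σ i ^ m) • (σ i • mhp σ x j l * x i) * mhp σ x i m := by rw [e4]
      _ = (σ i ^ (m + 1)) • mhp σ x j l * mhp σ x i (m + 1) := by
          rw [mhp_succ, smul_mul', pow_succ, mul_smul]
          simp [mul_comm, mul_left_comm, mul_assoc]



/-- truncation of exponent vectors -/
def mhtr (k : ℕ) (a : Fin r → ℕ) : Fin r → ℕ := fun i => if (i : ℕ) < k then a i else 0


lemma mhT_congr {a b : Fin r → ℕ} (h : ∀ i, σ i ^ a i = σ i ^ b i) : mhT σ a = mhT σ b := by
  unfold mhT
  congr 1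
  exact congrArg List.ofFn (funext h)

lemma mhT_add (hc : ∀ i j, Commute (σ i) (σ j)) (a b : Fin r → ℕ) :
    mhT σ (fun i => a i + b i) = mhT σ a * mhT σ b := by
  unfold mhT
  rw [← mh_listProd_mul _ _ (fun i j => (hc i j).pow_pow _ _)]
  congr 1
  exact congrArg List.ofFn (funext fun i => pow_add _ _ _)

lemma mhT_zero : mhT σ (fun _ => 0) = 1 := by
  unfold mhT
  simp

lemma mhT_single (hc : ∀ i j, Commute (σ i) (σ j)) (j : Fin r) (c : ℕ) :
    mhT σ (Pi.single j c) = σ j ^ c := by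
  unfold mhT
  rw [mh_listProd_extract _ (fun a b => (hc a b).pow_pow _ _) j, Pi.single_eq_same]
  have h1 : Function.update (fun i => σ i ^ Pi.single j c i) j 1 = fun _ => (1 : G) := by
    funext i
    rcases eq_or_ne i j with rfl | hne
    · simp
    · rw [Function.update_of_ne hne, Pi.single_eq_of_ne hne, pow_zero]
  rw [h1]
  simp

lemma mhtr_full (a : Fin r → ℕ) : mhtr r a = a := by
  funext i
  simp [mhtr, i.isLt]

lemma mhtr_zero (a : Fin r → ℕ) : mhtr 0 a = fun _ => 0 := by
  funext i
  simp [mhtr]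

lemma mhtr_step (a : Fin r → ℕ) (k : ℕ) (hk : k < r) :
    mhtr (k + 1) a = fun i => mhtr k a i + (Pi.single (⟨k, hk⟩ : Fin r) (a ⟨k, hk⟩) : Fin r → ℕ) i := by
  funext i
  simp only [mhtr]
  rcases lt_trichotomy (i : ℕ) k with h | h | h
  · rw [if_pos (Nat.lt_succ_of_lt h), if_pos h,
      Pi.single_eq_of_ne (fun he => absurd (congrArg Fin.val he) (by simp [Nat.ne_of_lt h])), add_zero]
  · have : i = ⟨k, hk⟩ := Fin.ext h
    subst this
    rw [if_pos (Nat.lt_succ_self k), if_neg (lt_irrefl _), Pi.single_eq_same, zero_add]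
  · rw [if_neg (by omega), if_neg (by omega),
      Pi.single_eq_of_ne (fun he => absurd (congrArg Fin.val he) (by simp; omega)), add_zero]

lemma mhT_trstep (hc : ∀ i j, Commute (σ i) (σ j)) (a : Fin r → ℕ) (k : ℕ) (hk : k < r) :
    mhT σ (mhtr (k + 1) a) = mhT σ (mhtr k a) * σ ⟨k, hk⟩ ^ a ⟨k, hk⟩ := by
  rw [mhtr_step a k hk, mhT_add σ hc, mhT_single σ hc]



/-- the candidate cocycle on exponent vectors -/
def mhC (σ : Fin r → G) (x : Fin r → M) (a : Fin r → ℕ) : M :=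
  ∏ i : Fin r, mhT σ (mhtr i.1 a) • mhp σ x i (a i)

lemma mhC_zero : mhC σ x (fun _ => 0) = 1 := by
  unfold mhC
  simp [mhp_zero]

lemma mh_A1 (hc : ∀ i j, Commute (σ i) (σ j))
    (hcompat : ∀ i j, σ i • x j * x i = σ j • x i * x j)
    (a : Fin r → ℕ) (j : Fin r) :
    mhC σ x (fun i => a i + (Pi.single j 1 : Fin r → ℕ) i)
      = mhC σ x a * mhT σ a • x j := by
  set a' : Fin r → ℕ := fun i => a i + (Pi.single j 1 : Fin r → ℕ) i with ha'
  set h : ℕ → M := fun k => mhT σ (mhtr k a) • x j with hh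
  set D : ℕ → M := fun k =>
    if (j : ℕ) < k then h (k + 1) / h k else if k = (j : ℕ) then h ((j : ℕ) + 1) else 1 with hD
  have htr1 : ∀ k : ℕ, k ≤ (j : ℕ) → mhtr k a' = mhtr k a := by
    intro k hk
    funext i
    simp only [mhtr, ha']
    rcases lt_or_ge (i : ℕ) k with h1 | h1
    · rw [if_pos h1, if_pos h1, Pi.single_eq_of_ne
        (fun he => by have := congrArg Fin.val he; omega), add_zero]
    · rw [if_neg (not_lt.2 h1), if_neg (not_lt.2 h1)]
  have htr2 : ∀ k : ℕ, (j : ℕ) < k → mhT σ (mhtr k a') = mhT σ (mhtr k a) * σ j := by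
    intro k hk
    have : mhtr k a' = fun i => mhtr k a i + (Pi.single j 1 : Fin r → ℕ) i := by
      funext i
      simp only [mhtr, ha']
      rcases lt_or_ge (i : ℕ) k with h1 | h1
      · rw [if_pos h1, if_pos h1]
      · rw [if_neg (not_lt.2 h1), if_neg (not_lt.2 h1), Pi.single_eq_of_ne
          (fun he => by have := congrArg Fin.val he; omega), add_zero]
    rw [this, mhT_add σ hc, mhT_single σ hc, pow_one]
  have step1 : ∀ i : Fin r, mhT σ (mhtr (i : ℕ) a') • mhp σ x i (a' i)
      = (mhT σ (mhtr (i : ℕ) a) • mhp σ x i (a i)) * D (i : ℕ) := by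
    intro i
    rcases lt_trichotomy (j : ℕ) (i : ℕ) with hji | hji | hji
    · have hne : i ≠ j := fun he => by have := congrArg Fin.val he; omega
      have ha'i : a' i = a i := by
        simp only [ha', Pi.single_eq_of_ne hne, add_zero]
      have hDi : D (i : ℕ) = h ((i : ℕ) + 1) / h (i : ℕ) := by
        simp only [hD]; rw [if_pos hji]
      have key : σ j • mhp σ x i (a i) = mhp σ x i (a i) * ((σ i ^ a i) • x j / x j) := by
        have c2 := mh_claim2 σ x hc hcompat i j (a i) 1
        rw [pow_one, mhp_one] at c2
        have h5 : σ j • mhp σ x i (a i) * x j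
            = (mhp σ x i (a i) * ((σ i ^ a i) • x j / x j)) * x j := by
          rw [mul_assoc, div_mul_cancel, c2, mul_comm]
        exact mul_right_cancel h5
      have hstep : mhT σ (mhtr (i : ℕ) a) • ((σ i ^ a i) • x j) = h ((i : ℕ) + 1) := by
        rw [hh, ← mul_smul, ← mhT_trstep σ hc a (i : ℕ) i.isLt]
      rw [htr2 _ hji, ha'i, hDi, mul_smul, key, smul_mul', smul_div', hstep, hh]
    · have hij : i = j := Fin.ext hji.symm
      subst hij
      have ha'i : a' i = a i + 1 := by simp [ha']
      have hDi : D (i : ℕ) = h ((i : ℕ) + 1) := by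
        simp [hD]
      rw [htr1 _ le_rfl, ha'i, hDi, mhp_succ, smul_mul', ← mul_smul,
        ← mhT_trstep σ hc a (i : ℕ) i.isLt]
    · have hne : i ≠ j := fun he => by have := congrArg Fin.val he; omega
      have ha'i : a' i = a i := by
        simp only [ha', Pi.single_eq_of_ne hne, add_zero]
      have hDi : D (i : ℕ) = 1 := by
        have e1 : ¬ ((j : ℕ) < (i : ℕ)) := by omega
        have e2 : ¬ ((i : ℕ) = (j : ℕ)) := by omega
        simp only [hD]
        rw [if_neg e1, if_neg e2]
      rw [htr1 _ (le_of_lt hji), ha'i, hDi, mul_one]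
  have hDprod : ∏ k ∈ Finset.range r, D k = h r := by
    have hjr : (j : ℕ) + 1 ≤ r := j.isLt
    rw [Finset.range_eq_Ico, ← Finset.prod_Ico_consecutive _ (Nat.zero_le ((j : ℕ) + 1)) hjr]
    have h1 : ∏ k ∈ Finset.Ico 0 ((j : ℕ) + 1), D k = h ((j : ℕ) + 1) := by
      rw [Finset.prod_eq_single_of_mem (j : ℕ)
        (by simp [Finset.mem_Ico, Nat.lt_succ_self])
        (fun k hk hkj => by
          rw [Finset.mem_Ico] at hk
          have e1 : ¬ ((j : ℕ) < k) := by omega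
          simp only [hD]
          rw [if_neg e1, if_neg hkj])]
      simp [hD]
    have h2 : ∏ k ∈ Finset.Ico ((j : ℕ) + 1) r, D k = h r / h ((j : ℕ) + 1) := by
      calc ∏ k ∈ Finset.Ico ((j : ℕ) + 1) r, D k
          = ∏ k ∈ Finset.Ico ((j : ℕ) + 1) r, (h (k + 1) / h k) :=
            Finset.prod_congr rfl (fun k hk => by
              rw [Finset.mem_Ico] at hk
              simp only [hD]
              rw [if_pos (by omega)])
        _ = h r / h ((j : ℕ) + 1) := by
            rw [Finset.prod_Ico_eq_div _ hjr, Finset.prod_range_div, Finset.prod_range_div]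
            exact div_div_div_cancel_right _ _ _
    rw [h1, h2]
    exact mul_div_cancel _ _
  calc mhC σ x a' = ∏ i : Fin r, (mhT σ (mhtr i.1 a) • mhp σ x i (a i)) * D i.1 :=
        Finset.prod_congr rfl (fun i _ => step1 i)
    _ = (∏ i : Fin r, mhT σ (mhtr i.1 a) • mhp σ x i (a i)) * ∏ i : Fin r, D i.1 :=
        Finset.prod_mul_distrib
    _ = mhC σ x a * ∏ k ∈ Finset.range r, D k := by
        rw [Fin.prod_univ_eq_prod_range D r]
        rfl
    _ = mhC σ x a * mhT σ a • x j := by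
        rw [hDprod]
        simp only [hh]
        rw [mhtr_full]


lemma mh_A (hc : ∀ i j, Commute (σ i) (σ j))
    (hcompat : ∀ i j, σ i • x j * x i = σ j • x i * x j)
    (b a : Fin r → ℕ) :
    mhC σ x (fun i => a i + b i) = mhC σ x a * mhT σ a • mhC σ x b := by
  classical
  suffices H : ∀ (N : ℕ) (b : Fin r → ℕ), (∑ i, b i) ≤ N → ∀ a,
      mhC σ x (fun i => a i + b i) = mhC σ x a * mhT σ a • mhC σ x b by
    exact H (∑ i, b i) b le_rfl a
  intro N
  induction N with
  | zero =>
    intro b hb a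
    have hb0 : ∀ i, b i = 0 := by
      intro i
      have := Finset.single_le_sum (f := b) (fun i _ => Nat.zero_le _) (Finset.mem_univ i)
      omega
    have : b = fun _ => 0 := funext hb0
    subst this
    simp only [mhC_zero, smul_one, mul_one, add_zero]
  | succ N ih =>
    intro b hb a
    by_cases hb0 : ∀ i, b i = 0
    · have : b = fun _ => 0 := funext hb0
      subst this
      simp only [mhC_zero, smul_one, mul_one, add_zero]
    · push_neg at hb0
      obtain ⟨j, hj⟩ := hb0
      set b' : Fin r → ℕ := Function.update b j (b j - 1) with hb'
      have hbj : b j = b' j + 1 := by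
        simp only [hb', Function.update_self]
        omega
      have hbsplit : b = fun i => b' i + (Pi.single j 1 : Fin r → ℕ) i := by
        funext i
        rcases eq_or_ne i j with rfl | hne
        · rw [Pi.single_eq_same, ← hbj]
        · rw [Pi.single_eq_of_ne hne, add_zero, hb', Function.update_of_ne hne]
      have hsum : ∑ i, b' i ≤ N := by
        have h1 : ∑ i, b i = b j + ∑ i ∈ Finset.univ.erase j, b i :=
          (Finset.add_sum_erase _ _ (Finset.mem_univ j)).symm
        have h2 : ∑ i, b' i = b' j + ∑ i ∈ Finset.univ.erase j, b' i :=
          (Finset.add_sum_erase _ _ (Finset.mem_univ j)).symm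
        have h3 : ∑ i ∈ Finset.univ.erase j, b' i = ∑ i ∈ Finset.univ.erase j, b i :=
          Finset.sum_congr rfl (fun i hi => by
            rw [hb', Function.update_of_ne (Finset.ne_of_mem_erase hi)])
        omega
      have e1 : (fun i => a i + b i) = fun i => (a i + b' i) + (Pi.single j 1 : Fin r → ℕ) i := by
        funext i
        rw [hbsplit]
        ring
      rw [e1, mh_A1 σ x hc hcompat (fun i => a i + b' i) j, ih b' hsum a,
        mhT_add σ hc a b', hbsplit, mh_A1 σ x hc hcompat b' j,
        smul_mul', mul_smul, mul_assoc]

lemma mhC_mod {n : Fin r → ℕ} (hpos : ∀ i, 0 < n i)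
    (hord : ∀ i, σ i ^ n i = 1)
    (hnorm : ∀ i, mhp σ x i (n i) = 1) (a : Fin r → ℕ) :
    mhC σ x (fun i => a i % n i) = mhC σ x a := by
  unfold mhC
  refine Finset.prod_congr rfl (fun i _ => ?_)
  have hT : mhT σ (mhtr i.1 (fun i' => a i' % n i')) = mhT σ (mhtr i.1 a) := by
    refine mhT_congr σ (fun i' => ?_)
    simp only [mhtr]
    rcases lt_or_ge (i' : ℕ) i.1 with h1 | h1
    · rw [if_pos h1, if_pos h1]
      exact (pow_eq_pow_mod (a i') (hord i')).symm
    · rw [if_neg (not_lt.2 h1), if_neg (not_lt.2 h1)]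
  rw [hT, ← mhp_mod σ x hpos hnorm]

lemma mhC_welldef {n : Fin r → ℕ} (hpos : ∀ i, 0 < n i)
    (hord : ∀ i, σ i ^ n i = 1)
    (hnorm : ∀ i, mhp σ x i (n i) = 1)
    (huniq : ∀ a b : Fin r → ℕ, mhT σ a = mhT σ b → ∀ i, a i % n i = b i % n i)
    {a b : Fin r → ℕ} (hab : mhT σ a = mhT σ b) :
    mhC σ x a = mhC σ x b := by
  rw [← mhC_mod σ x hpos hord hnorm a, ← mhC_mod σ x hpos hord hnorm b]
  congr 1
  exact funext (huniq a b hab)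



theorem mh_main {n : Fin r → ℕ}
    (hc : ∀ i j, Commute (σ i) (σ j))
    (hpos : ∀ i, 0 < n i)
    (hord : ∀ i, σ i ^ n i = 1)
    (hnorm : ∀ i, mhp σ x i (n i) = 1)
    (hcompat : ∀ i j, σ i • x j * x i = σ j • x i * x j)
    (huniq : ∀ a b : Fin r → ℕ, mhT σ a = mhT σ b → ∀ i, a i % n i = b i % n i)
    (hsurj : ∀ g : G, ∃ a : Fin r → ℕ, g = mhT σ a) :
    ∃ f : G → M, (∀ g h, f (g * h) = g • f h * f g) ∧ ∀ i, f (σ i) = x i := by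
  choose e he using hsurj
  refine ⟨fun g => mhC σ x (e g), ?_, ?_⟩
  · intro g h
    have h1 : mhT σ (e (g * h)) = mhT σ (fun i => e g i + e h i) := by
      rw [mhT_add σ hc, ← he g, ← he h, ← he (g * h)]
    have h2 : mhC σ x (e (g * h)) = mhC σ x (fun i => e g i + e h i) :=
      mhC_welldef σ x hpos hord hnorm huniq h1
    show mhC σ x (e (g * h)) = g • mhC σ x (e h) * mhC σ x (e g)
    rw [h2, mh_A σ x hc hcompat (e h) (e g), ← he g, mul_comm]
  · intro i
    have h1 : mhT σ (e (σ i)) = mhT σ (Pi.single i 1) := by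
      rw [mhT_single σ hc, pow_one, ← he]
    have h2 : mhC σ x (e (σ i)) = mhC σ x (Pi.single i 1) :=
      mhC_welldef σ x hpos hord hnorm huniq h1
    have h3 : (Pi.single i 1 : Fin r → ℕ) = fun i' => (fun _ => 0) i' + (Pi.single i 1 : Fin r → ℕ) i' := by
      funext i'
      simp
    show mhC σ x (e (σ i)) = x i
    rw [h2, h3, mh_A1 σ x hc hcompat (fun _ => 0) i, mhC_zero, mhT_zero, one_mul, one_smul]

end Core



/-- Multi-cyclic Hilbert 90: `F/K` finite Galois with group the internal direct product
`⟨σ 1⟩ × ⋯ × ⟨σ r⟩` of cyclic subgroups. `Nᵢ`, the norm of `F` over the fixed field of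
`σ i`, is the product of the conjugates `(σ i)^k x` for `0 ≤ k < orderOf (σ i)`.
If `Nᵢ(xᵢ) = 1` for all `i` and `σᵢ(xⱼ)/xⱼ = σⱼ(xᵢ)/xᵢ` for all `i, j`, then there is
`y ∈ Fˣ` with `xᵢ = σᵢ(y)/y` for all `i`. -/
theorem multicyclic_hilbert90 {K F : Type*} [Field K] [Field F] [Algebra K F]
    [FiniteDimensional K F] [IsGalois K F] {r : ℕ}
    (σ : Fin r → (F ≃ₐ[K] F))
    (hcomm : ∀ i j, σ i * σ j = σ j * σ i)
    (hgen : ∀ g : F ≃ₐ[K] F, ∃ e : Fin r → ℤ, g = (List.ofFn fun i => σ i ^ e i).prod)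
    (hind : iSupIndep fun i => Subgroup.zpowers (σ i))
    (x : Fin r → Fˣ)
    (hnorm : ∀ i, ∏ k ∈ Finset.range (orderOf (σ i)), ((σ i) ^ k) (x i : F) = 1)
    (hcompat : ∀ i j, (σ i) (x j : F) / (x j : F) = (σ j) (x i : F) / (x i : F)) :
    ∃ y : Fˣ, ∀ i, (x i : F) = (σ i) (y : F) / (y : F) := by

  classical
  haveI : Finite (F ≃ₐ[K] F) := inferInstance
  have hcomm' : ∀ i j, Commute (σ i) (σ j) := hcomm
  have hpos : ∀ i, 0 < orderOf (σ i) := fun i => orderOf_pos (σ i)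
  have hord : ∀ i, σ i ^ orderOf (σ i) = 1 := fun i => pow_orderOf_eq_one (σ i)
  have hval : ∀ (g : F ≃ₐ[K] F) (u : Fˣ), ((g • u : Fˣ) : F) = g (u : F) := fun g u => by
    rw [AlgEquiv.smul_units_def]; rfl
  have hnormU : ∀ i, mhp σ x i (orderOf (σ i)) = 1 := by
    intro i
    apply Units.ext
    have h1 : ((mhp σ x i (orderOf (σ i)) : Fˣ) : F)
        = ∏ k ∈ Finset.range (orderOf (σ i)), (((σ i ^ k) • x i : Fˣ) : F) :=
      map_prod (Units.coeHom F) _ _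
    rw [h1]
    rw [Finset.prod_congr rfl (fun k _ => hval (σ i ^ k) (x i))]
    exact hnorm i
  have hcompatU : ∀ i j, σ i • x j * x i = σ j • x i * x j := by
    intro i j
    have h0 := hcompat i j
    rw [div_eq_div_iff (x j).ne_zero (x i).ne_zero] at h0
    apply Units.ext
    rw [Units.val_mul, Units.val_mul, hval, hval]
    exact h0
  have huniq : ∀ a b : Fin r → ℕ, mhT σ a = mhT σ b →
      ∀ i, a i % orderOf (σ i) = b i % orderOf (σ i) := by
    intro a b hab i
    set c : Fin r → (F ≃ₐ[K] F) := fun i' => σ i' ^ ((a i' : ℤ) - (b i' : ℤ)) with hcdef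
    have hcc : ∀ i' j', Commute (c i') (c j') := fun i' j' =>
      Commute.zpow_zpow (hcomm' i' j') _ _
    have hkey : (List.ofFn c).prod = 1 := by
      have h1 : (List.ofFn fun i' => c i' * σ i' ^ ((b i' : ℤ))).prod
          = (List.ofFn c).prod * (List.ofFn fun i' => σ i' ^ ((b i' : ℤ))).prod :=
        mh_listProd_mul _ _ (fun i' j' => Commute.zpow_zpow (hcomm' i' j') _ _)
      have h2 : (fun i' => c i' * σ i' ^ ((b i' : ℤ))) = fun i' => σ i' ^ ((a i' : ℤ)) := by
        funext i'
        rw [hcdef]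
        rw [← zpow_add, sub_add_cancel]
      have h3 : (List.ofFn fun i' => σ i' ^ ((a i' : ℤ))).prod = mhT σ a := by
        unfold mhT
        congr 1
      have h4 : (List.ofFn fun i' => σ i' ^ ((b i' : ℤ))).prod = mhT σ b := by
        unfold mhT
        congr 1
      rw [h2, h3, h4, hab] at h1
      exact right_eq_mul.mp h1
    have hext := mh_listProd_extract c hcc i
    rw [hkey] at hext
    have hrest : (List.ofFn (Function.update c i 1)).prod
        ∈ ⨆ (j') (_ : j' ≠ i), Subgroup.zpowers (σ j') := by
      apply Subgroup.list_prod_mem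
      intro g hg
      rw [List.mem_ofFn] at hg
      obtain ⟨k, rfl⟩ := hg
      rcases eq_or_ne k i with rfl | hki
      · rw [Function.update_self]
        exact Subgroup.one_mem _
      · rw [Function.update_of_ne hki]
        have hle : Subgroup.zpowers (σ k) ≤ ⨆ (j') (_ : j' ≠ i), Subgroup.zpowers (σ j') :=
          le_iSup_of_le k (le_iSup_of_le hki le_rfl)
        exact hle (Subgroup.mem_zpowers_iff.mpr ⟨_, rfl⟩)
    have hci : c i = ((List.ofFn (Function.update c i 1)).prod)⁻¹ :=
      eq_inv_of_mul_eq_one_left hext.symm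
    have hmem : c i ∈ ⨆ (j') (_ : j' ≠ i), Subgroup.zpowers (σ j') := by
      rw [hci]
      exact inv_mem hrest
    have hone : c i = 1 :=
      Subgroup.disjoint_def.mp (hind i) (Subgroup.mem_zpowers_iff.mpr ⟨_, rfl⟩) hmem
    have hdvd : ((orderOf (σ i) : ℤ)) ∣ ((a i : ℤ) - (b i : ℤ)) :=
      orderOf_dvd_iff_zpow_eq_one.mpr hone
    exact (Nat.modEq_iff_dvd.mpr hdvd).symm
  have hsurj : ∀ g : F ≃ₐ[K] F, ∃ a : Fin r → ℕ, g = mhT σ a := by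
    intro g
    obtain ⟨e, hg⟩ := hgen g
    refine ⟨fun i => ((e i) % ((orderOf (σ i) : ℤ))).toNat, ?_⟩
    rw [hg]
    unfold mhT
    congr 1
    refine congrArg List.ofFn (funext fun i => ?_)
    have h1 : σ i ^ e i = σ i ^ (e i % ((orderOf (σ i) : ℤ))) :=
      (zpow_mod_orderOf (σ i) (e i)).symm
    have h2 : (0:ℤ) ≤ e i % ((orderOf (σ i) : ℤ)) :=
      Int.emod_nonneg _ (by exact_mod_cast (hpos i).ne')
    rw [h1, ← zpow_natCast]
    congr 1
    exact (Int.toNat_of_nonneg h2).symm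
  obtain ⟨f, hf, hfσ⟩ := mh_main σ x hcomm' hpos hord hnormU hcompatU huniq hsurj
  have hco : groupCohomology.IsMulCocycle₁ f := hf
  obtain ⟨β, hβ⟩ := groupCohomology.isMulCoboundary₁_of_isMulCocycle₁_of_aut_to_units f hco
  refine ⟨β, fun i => ?_⟩
  have h5 := hβ (σ i)
  rw [hfσ i] at h5
  calc (x i : F) = ((σ i • β / β : Fˣ) : F) := by rw [h5]
    _ = σ i (β : F) / (β : F) := by rw [Units.val_div_eq_div_val, hval]
end

section
/- Let $F/K$ be Galois with group $\langle \sigma_1 \rangle \times \langle \sigma_2 \rangle$, with $N_i$ the norm of $F$ over the fixed field $F_i$ of $\sigma_i$. Given $u, b_1, b_2 \in F^\times$, suppose the system $N_1(x_1) = b_1$, $N_2(x_2) = b_2$, $\frac{\sigma_2(x_1)}{x_1} \cdot \frac{x_2}{\sigma_1(x_2)} = u$ has a solution $(x_1, x_2)$. Then the full set of solutions is $\{(x_1 \cdot \sigma_1(y)/y,\; x_2 \cdot \sigma_2(y)/y) : y \in F^\times\}$. -/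
open Finset

lemma bicyclic_forward {K F : Type*} [Field K] [Field F] [Algebra K F]
    [FiniteDimensional K F] (σ₁ σ₂ : F ≃ₐ[K] F)
    (hcomm : σ₁ * σ₂ = σ₂ * σ₁)
    (hgen : ∀ g : F ≃ₐ[K] F, ∃ i j : ℤ, g = σ₁ ^ i * σ₂ ^ j)
    (hdisj : Subgroup.zpowers σ₁ ⊓ Subgroup.zpowers σ₂ = ⊥)
    (a c : Fˣ)
    (hNa : ∏ k ∈ range (orderOf σ₁), (σ₁ ^ k) • a = 1)
    (hNc : ∏ k ∈ range (orderOf σ₂), (σ₂ ^ k) • c = 1)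
    (hrel : σ₂ • a * c = σ₁ • c * a) :
    ∃ y : Fˣ, a = σ₁ • y / y ∧ c = σ₂ • y / y := by
  classical
  set m := orderOf σ₁ with hm
  set n := orderOf σ₂ with hn
  have hm0 : 0 < m := orderOf_pos σ₁
  have hn0 : 0 < n := orderOf_pos σ₂
  have hC : Commute σ₁ σ₂ := hcomm
  set B : ℕ → Fˣ := fun i => ∏ k ∈ range i, (σ₁ ^ k) • a with hB
  set D : ℕ → Fˣ := fun j => ∏ l ∈ range j, (σ₂ ^ l) • c with hD
  have hBadd : ∀ p q : ℕ, B (p + q) = B p * (σ₁ ^ p) • B q := by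
    intro p q
    simp only [hB, prod_range_add, Finset.smul_prod', smul_smul, ← pow_add]
  have hDadd : ∀ p q : ℕ, D (p + q) = D p * (σ₂ ^ p) • D q := by
    intro p q
    simp only [hD, prod_range_add, Finset.smul_prod', smul_smul, ← pow_add]
  have hBm : B m = 1 := hNa
  have hDn : D n = 1 := hNc
  have hBmod : ∀ p : ℕ, B (p % m) = B p := by
    intro p
    conv_rhs => rw [← Nat.mod_add_div p m]
    generalize p / m = q
    induction q with
    | zero => simp
    | succ t ih => rw [Nat.mul_succ, ← Nat.add_assoc, hBadd, hBm, smul_one, mul_one, ih]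
  have hDmod : ∀ p : ℕ, D (p % n) = D p := by
    intro p
    conv_rhs => rw [← Nat.mod_add_div p n]
    generalize p / n = q
    induction q with
    | zero => simp
    | succ t ih => rw [Nat.mul_succ, ← Nat.add_assoc, hDadd, hDn, smul_one, mul_one, ih]
  -- integer versions
  set r₁ : ℤ → ℕ := fun i => (i % (m : ℤ)).toNat with hr₁
  set r₂ : ℤ → ℕ := fun j => (j % (n : ℤ)).toNat with hr₂
  have hr₁cast : ∀ i : ℤ, ((r₁ i : ℤ)) = i % (m : ℤ) := fun i =>
    Int.toNat_of_nonneg (Int.emod_nonneg _ (by exact_mod_cast hm0.ne'))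
  have hr₂cast : ∀ j : ℤ, ((r₂ j : ℤ)) = j % (n : ℤ) := fun j =>
    Int.toNat_of_nonneg (Int.emod_nonneg _ (by exact_mod_cast hn0.ne'))
  have hz₁ : ∀ i : ℤ, σ₁ ^ i = σ₁ ^ (r₁ i) := by
    intro i
    rw [← zpow_natCast, hr₁cast i, hm, zpow_mod_orderOf]
  have hz₂ : ∀ j : ℤ, σ₂ ^ j = σ₂ ^ (r₂ j) := by
    intro j
    rw [← zpow_natCast, hr₂cast j, hn, zpow_mod_orderOf]
  set A : ℤ → Fˣ := fun i => B (r₁ i) with hA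
  set E : ℤ → Fˣ := fun j => D (r₂ j) with hE
  have hAcongr : ∀ i i' : ℤ, i % (m : ℤ) = i' % (m : ℤ) → A i = A i' := by
    intro i i' h; simp only [hA, hr₁, h]
  have hEcongr : ∀ j j' : ℤ, j % (n : ℤ) = j' % (n : ℤ) → E j = E j' := by
    intro j j' h; simp only [hE, hr₂, h]
  have hAnat : ∀ p : ℕ, A (p : ℤ) = B p := by
    intro p
    have h := hr₁cast (p : ℤ)
    have : r₁ (p : ℤ) = p % m := by
      have : ((r₁ (p:ℤ) : ℤ)) = ((p % m : ℕ) : ℤ) := by rw [h]; push_cast; ring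
      exact_mod_cast this
    rw [hA]; simp only [this, hBmod]
  have hEnat : ∀ p : ℕ, E (p : ℤ) = D p := by
    intro p
    have h := hr₂cast (p : ℤ)
    have : r₂ (p : ℤ) = p % n := by
      have : ((r₂ (p:ℤ) : ℤ)) = ((p % n : ℕ) : ℤ) := by rw [h]; push_cast; ring
      exact_mod_cast this
    rw [hE]; simp only [this, hDmod]
  have hAadd : ∀ i i' : ℤ, A (i + i') = A i * (σ₁ ^ i) • A i' := by
    intro i i'
    have h1 : A (i + i') = A ((r₁ i + r₁ i' : ℕ) : ℤ) := by
      apply hAcongr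
      rw [Int.add_emod i i', ← hr₁cast i, ← hr₁cast i', Nat.cast_add, Int.add_emod ((r₁ i : ℤ))]
    rw [h1, hAnat, hBadd, hz₁ i]
  have hEadd : ∀ j j' : ℤ, E (j + j') = E j * (σ₂ ^ j) • E j' := by
    intro j j'
    have h1 : E (j + j') = E ((r₂ j + r₂ j' : ℕ) : ℤ) := by
      apply hEcongr
      rw [Int.add_emod j j', ← hr₂cast j, ← hr₂cast j', Nat.cast_add, Int.add_emod ((r₂ j : ℤ))]
    rw [h1, hEnat, hDadd, hz₂ j]
  -- compatibility, natural-number version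
  have compat1 : ∀ p : ℕ, σ₂ • B p * c = (σ₁ ^ p) • c * B p := by
    intro p
    induction p with
    | zero => simp [hB]
    | succ t ih =>
      have hBs : B (t + 1) = B t * (σ₁ ^ t) • a := by
        simp [hB, prod_range_succ]
      have hrelt := congrArg (fun z => (σ₁ ^ t) • z) hrel
      simp only [smul_mul', smul_smul] at hrelt
      have hc0 : σ₂ * σ₁ ^ t = σ₁ ^ t * σ₂ := ((hC.pow_left t).eq).symm
      rw [hBs]
      simp only [smul_mul', smul_smul, hc0, pow_succ]
      rw [← Units.val_inj] at hrelt ⊢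
      have ihF := congrArg Units.val ih
      simp only [Units.val_mul, AlgEquiv.smul_units_def, Units.coe_map,
        MonoidHom.coe_coe] at hrelt ihF ⊢
      linear_combination ((((σ₁ ^ t : F ≃ₐ[K] F) * σ₂) (a : F))) * ihF +
        ((B t : F)) * hrelt
  have compat : ∀ p q : ℕ, (σ₂ ^ q) • B p * D q = (σ₁ ^ p) • D q * B p := by
    intro p q
    induction q with
    | zero => simp [hD]
    | succ t ih =>
      have hDs : D (t + 1) = D t * (σ₂ ^ t) • c := by
        simp [hD, prod_range_succ]
      have h1t := congrArg (fun z => (σ₂ ^ t) • z) (compat1 p)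
      simp only [smul_mul', smul_smul] at h1t
      have hc1 : σ₂ ^ t * σ₁ ^ p = σ₁ ^ p * σ₂ ^ t := ((hC.pow_pow p t).eq).symm
      rw [hc1] at h1t
      rw [hDs]
      simp only [smul_mul', smul_smul, pow_succ]
      rw [← Units.val_inj] at h1t ⊢
      have ihF := congrArg Units.val ih
      simp only [Units.val_mul, AlgEquiv.smul_units_def, Units.coe_map,
        MonoidHom.coe_coe] at h1t ihF ⊢
      linear_combination (((σ₁ ^ p : F ≃ₐ[K] F) * σ₂ ^ t) (c : F)) * ihF +
        ((D t : F)) * h1t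
  have compatZ : ∀ i j : ℤ, (σ₂ ^ j) • A i * E j = (σ₁ ^ i) • E j * A i := by
    intro i j
    rw [hz₁ i, hz₂ j]
    exact compat (r₁ i) (r₂ j)
  -- the cocycle
  choose I J hIJ using hgen
  set f : (F ≃ₐ[K] F) → Fˣ := fun g => A (I g) * (σ₁ ^ I g) • E (J g) with hf_def
  have fspec : ∀ i j : ℤ, f (σ₁ ^ i * σ₂ ^ j) = A i * (σ₁ ^ i) • E j := by
    intro i j
    set g := σ₁ ^ i * σ₂ ^ j with hg
    have h5 : σ₁ ^ I g * σ₂ ^ J g = σ₁ ^ i * σ₂ ^ j := (hIJ g).symm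
    have h6 : σ₁ ^ (I g - i) = σ₂ ^ (j - J g) := by
      calc σ₁ ^ (I g - i) = σ₁ ^ (-i) * (σ₁ ^ I g * σ₂ ^ J g) * σ₂ ^ (-(J g)) := by group
      _ = σ₁ ^ (-i) * (σ₁ ^ i * σ₂ ^ j) * σ₂ ^ (-(J g)) := by rw [h5]
      _ = σ₂ ^ (j - J g) := by group
    have h7 : σ₁ ^ (I g - i) = 1 := by
      have hmem : σ₁ ^ (I g - i) ∈ Subgroup.zpowers σ₁ ⊓ Subgroup.zpowers σ₂ := by
        refine Subgroup.mem_inf.mpr ⟨Subgroup.zpow_mem _ (Subgroup.mem_zpowers σ₁) _, ?_⟩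
        rw [h6]; exact Subgroup.zpow_mem _ (Subgroup.mem_zpowers σ₂) _
      rw [hdisj] at hmem
      exact Subgroup.mem_bot.mp hmem
    have h8 : σ₂ ^ (j - J g) = 1 := by rw [← h6, h7]
    have hdvd1 : ((m : ℤ)) ∣ I g - i := by
      rw [hm]; exact orderOf_dvd_iff_zpow_eq_one.mpr h7
    have hdvd2 : ((n : ℤ)) ∣ j - J g := by
      rw [hn]; exact orderOf_dvd_iff_zpow_eq_one.mpr h8
    have hIm : I g % (m : ℤ) = i % (m : ℤ) := Int.ModEq.symm (Int.modEq_iff_dvd.mpr hdvd1)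
    have hJn : J g % (n : ℤ) = j % (n : ℤ) := Int.modEq_iff_dvd.mpr hdvd2
    have h9 : σ₁ ^ I g = σ₁ ^ i := by
      have h10 : σ₁ ^ i * σ₁ ^ (I g - i) = σ₁ ^ I g := by group
      rw [← h10, h7, mul_one]
    show A (I g) * (σ₁ ^ I g) • E (J g) = A i * (σ₁ ^ i) • E j
    rw [hAcongr _ _ hIm, hEcongr _ _ hJn, h9]
  have hf : groupCohomology.IsMulCocycle₁ f := by
    intro g h
    have hgh : g * h = σ₁ ^ (I g + I h) * σ₂ ^ (J g + J h) := by
      conv_lhs => rw [hIJ g, hIJ h]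
      have hcp : σ₂ ^ J g * σ₁ ^ I h = σ₁ ^ I h * σ₂ ^ J g :=
        ((hC.zpow_zpow (I h) (J g)).eq).symm
      calc σ₁ ^ I g * σ₂ ^ J g * (σ₁ ^ I h * σ₂ ^ J h)
          = σ₁ ^ I g * (σ₂ ^ J g * σ₁ ^ I h) * σ₂ ^ J h := by group
        _ = σ₁ ^ I g * (σ₁ ^ I h * σ₂ ^ J g) * σ₂ ^ J h := by rw [hcp]
        _ = σ₁ ^ (I g + I h) * σ₂ ^ (J g + J h) := by group
    have hsm : ∀ z : Fˣ, g • z = (σ₁ ^ I g * σ₂ ^ J g) • z := fun z => by rw [← hIJ g]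
    have e2 : σ₁ ^ I g * σ₂ ^ J g * σ₁ ^ I h = σ₁ ^ I g * σ₁ ^ I h * σ₂ ^ J g := by
      rw [mul_assoc, mul_assoc]
      exact congrArg (σ₁ ^ I g * ·) ((hC.zpow_zpow (I h) (J g)).eq).symm
    have key := congrArg (fun z => (σ₁ ^ I g) • z) (compatZ (I h) (J g))
    simp only [smul_mul', smul_smul] at key
    rw [hgh, fspec]
    show A (I g + I h) * (σ₁ ^ (I g + I h)) • E (J g + J h)
        = g • (A (I h) * (σ₁ ^ I h) • E (J h)) * (A (I g) * (σ₁ ^ I g) • E (J g))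
    rw [hAadd, hEadd, hsm]
    simp only [smul_mul', smul_smul, zpow_add, e2]
    rw [← Units.val_inj] at key ⊢
    simp only [Units.val_mul, AlgEquiv.smul_units_def, Units.coe_map,
      MonoidHom.coe_coe] at key ⊢
    linear_combination (-(A (I g) : F) *
      (((σ₁ ^ I g * σ₁ ^ I h * σ₂ ^ J g : F ≃ₐ[K] F)) ((E (J h) : F)))) * key
  obtain ⟨β, hβ⟩ := groupCohomology.isMulCoboundary₁_of_isMulCocycle₁_of_aut_to_units f hf
  have hfa : f σ₁ = a := by
    have hrw : σ₁ = σ₁ ^ (1 : ℤ) * σ₂ ^ (0 : ℤ) := by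
      rw [zpow_one, zpow_zero, mul_one]
    rw [hrw, fspec]
    have hE0 : E (0 : ℤ) = 1 := by
      rw [show ((0 : ℤ)) = ((0 : ℕ) : ℤ) by simp, hEnat]; simp [hD]
    have hA1 : A (1 : ℤ) = a := by
      rw [show ((1 : ℤ)) = ((1 : ℕ) : ℤ) by simp, hAnat]
      show (∏ k ∈ range 1, (σ₁ ^ k) • a) = a
      rw [prod_range_one, pow_zero, one_smul]
    rw [hE0, hA1, smul_one, mul_one]
  have hfc : f σ₂ = c := by
    have hrw : σ₂ = σ₁ ^ (0 : ℤ) * σ₂ ^ (1 : ℤ) := by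
      rw [zpow_one, zpow_zero, one_mul]
    rw [hrw, fspec]
    have hE1 : E (1 : ℤ) = c := by
      rw [show ((1 : ℤ)) = ((1 : ℕ) : ℤ) by simp, hEnat]
      show (∏ k ∈ range 1, (σ₂ ^ k) • c) = c
      rw [prod_range_one, pow_zero, one_smul]
    have hA0 : A (0 : ℤ) = 1 := by
      rw [show ((0 : ℤ)) = ((0 : ℕ) : ℤ) by simp, hAnat]; simp [hB]
    rw [hE1, hA0, zpow_zero, one_smul, one_mul]
  exact ⟨β, by rw [← hfa, ← hβ σ₁], by rw [← hfc, ← hβ σ₂]⟩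



/-- Structure of the solution set of the bicyclic splitting system.  `F/K` is finite
Galois with group `⟨σ₁⟩ × ⟨σ₂⟩` (internal direct product); `Nᵢ`, the norm of `F` over
the fixed field of `σᵢ`, is the product of the conjugates under powers of `σᵢ`.
If `(x₁, x₂)` solves `N₁ x₁ = b₁`, `N₂ x₂ = b₂`, `(σ₂ x₁ / x₁) * (x₂ / σ₁ x₂) = u`,
then the solutions are exactly the pairs `(x₁ σ₁(y)/y, x₂ σ₂(y)/y)` for `y ∈ Fˣ`. -/
theorem bicyclic_solution_set {K F : Type*} [Field K] [Field F] [Algebra K F]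
    [FiniteDimensional K F] [IsGalois K F]
    (σ₁ σ₂ : F ≃ₐ[K] F)
    (hcomm : σ₁ * σ₂ = σ₂ * σ₁)
    (hgen : ∀ g : F ≃ₐ[K] F, ∃ i j : ℤ, g = σ₁ ^ i * σ₂ ^ j)
    (hdisj : Subgroup.zpowers σ₁ ⊓ Subgroup.zpowers σ₂ = ⊥)
    (u b₁ b₂ : Fˣ) (x₁ x₂ : Fˣ)
    (h1 : ∏ k ∈ Finset.range (orderOf σ₁), (σ₁ ^ k) (x₁ : F) = (b₁ : F))
    (h2 : ∏ k ∈ Finset.range (orderOf σ₂), (σ₂ ^ k) (x₂ : F) = (b₂ : F))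
    (h3 : (σ₂ (x₁ : F) / (x₁ : F)) * ((x₂ : F) / σ₁ (x₂ : F)) = (u : F)) :
    ∀ x₁' x₂' : Fˣ,
      ((∏ k ∈ Finset.range (orderOf σ₁), (σ₁ ^ k) (x₁' : F) = (b₁ : F)) ∧
       (∏ k ∈ Finset.range (orderOf σ₂), (σ₂ ^ k) (x₂' : F) = (b₂ : F)) ∧
       (σ₂ (x₁' : F) / (x₁' : F)) * ((x₂' : F) / σ₁ (x₂' : F)) = (u : F))
      ↔ ∃ y : Fˣ, (x₁' : F) = (x₁ : F) * (σ₁ (y : F) / (y : F)) ∧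
          (x₂' : F) = (x₂ : F) * (σ₂ (y : F) / (y : F)) := by
  intro x₁' x₂'
  have convert1 : ∀ (σ : F ≃ₐ[K] F) (x b : Fˣ) (m : ℕ),
      (∏ k ∈ Finset.range m, (σ ^ k) (x : F) = (b : F)) ↔
        (∏ k ∈ Finset.range m, (σ ^ k) • x = b) := by
    intro σ x b m
    rw [← Units.val_inj]
    simp [AlgEquiv.smul_units_def]
  have convert3 : ∀ (z₁ z₂ w : Fˣ),
      ((σ₂ (z₁ : F) / (z₁ : F)) * ((z₂ : F) / σ₁ (z₂ : F)) = (w : F)) ↔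
        (σ₂ • z₁ * z₂ = w * (z₁ * σ₁ • z₂)) := by
    intro z₁ z₂ w
    rw [div_mul_div_comm, div_eq_iff (by
      simp [map_eq_zero]), ← Units.val_inj]
    simp only [Units.val_mul, AlgEquiv.smul_units_def, Units.coe_map, MonoidHom.coe_coe]
  have hu1 : ∏ k ∈ Finset.range (orderOf σ₁), (σ₁ ^ k) • x₁ = b₁ := (convert1 _ _ _ _).mp h1
  have hu2 : ∏ k ∈ Finset.range (orderOf σ₂), (σ₂ ^ k) • x₂ = b₂ := (convert1 _ _ _ _).mp h2
  have hu3 : σ₂ • x₁ * x₂ = u * (x₁ * σ₁ • x₂) := (convert3 _ _ _).mp h3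
  constructor
  · rintro ⟨g1, g2, g3⟩
    have hu1' : ∏ k ∈ Finset.range (orderOf σ₁), (σ₁ ^ k) • x₁' = b₁ := (convert1 _ _ _ _).mp g1
    have hu2' : ∏ k ∈ Finset.range (orderOf σ₂), (σ₂ ^ k) • x₂' = b₂ := (convert1 _ _ _ _).mp g2
    have hu3' : σ₂ • x₁' * x₂' = u * (x₁' * σ₁ • x₂') := (convert3 _ _ _).mp g3
    have hNa : ∏ k ∈ Finset.range (orderOf σ₁), (σ₁ ^ k) • (x₁' / x₁) = 1 := by
      simp only [smul_div', Finset.prod_div_distrib, hu1, hu1', div_self']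
    have hNc : ∏ k ∈ Finset.range (orderOf σ₂), (σ₂ ^ k) • (x₂' / x₂) = 1 := by
      simp only [smul_div', Finset.prod_div_distrib, hu2, hu2', div_self']
    have hrel : σ₂ • (x₁' / x₁) * (x₂' / x₂) = σ₁ • (x₂' / x₂) * (x₁' / x₁) := by
      simp only [smul_div']
      rw [div_mul_div_comm, div_mul_div_comm, div_eq_div_iff_mul_eq_mul, hu3', hu3]
      rw [← Units.val_inj]
      simp only [Units.val_mul, AlgEquiv.smul_units_def, Units.coe_map, MonoidHom.coe_coe]
      ring
    obtain ⟨y, ha, hc⟩ := bicyclic_forward σ₁ σ₂ hcomm hgen hdisj (x₁' / x₁) (x₂' / x₂)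
      hNa hNc hrel
    refine ⟨y, ?_, ?_⟩
    · have : x₁' = x₁ * (σ₁ • y / y) := by
        rw [div_eq_iff_eq_mul] at ha
        rw [ha, mul_comm]
      rw [← Units.val_inj] at this
      simpa [AlgEquiv.smul_units_def] using this
    · have : x₂' = x₂ * (σ₂ • y / y) := by
        rw [div_eq_iff_eq_mul] at hc
        rw [hc, mul_comm]
      rw [← Units.val_inj] at this
      simpa [AlgEquiv.smul_units_def] using this
  · rintro ⟨y, hy1, hy2⟩
    have hy1u : x₁' = x₁ * (σ₁ • y / y) := by
      rw [← Units.val_inj]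
      simpa [AlgEquiv.smul_units_def] using hy1
    have hy2u : x₂' = x₂ * (σ₂ • y / y) := by
      rw [← Units.val_inj]
      simpa [AlgEquiv.smul_units_def] using hy2
    have tele : ∀ (σ : F ≃ₐ[K] F), ∏ k ∈ Finset.range (orderOf σ), (σ ^ k) • (σ • y / y) = 1 := by
      intro σ
      have e : ∀ k : ℕ, (σ ^ k) • (σ • y) = (σ ^ (k + 1)) • y := fun k => by
        rw [smul_smul, ← pow_succ]
      simp only [smul_div', e, Finset.prod_div_distrib]
      have h' := (Finset.prod_range_succ' (fun k => (σ ^ k) • y) (orderOf σ)).symm.trans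
        (Finset.prod_range_succ (fun k => (σ ^ k) • y) (orderOf σ))
      rw [pow_zero, one_smul, pow_orderOf_eq_one, one_smul] at h'
      rw [mul_right_cancel h', div_self']
    refine ⟨?_, ?_, ?_⟩
    · rw [convert1, hy1u]
      simp only [smul_mul', Finset.prod_mul_distrib, hu1, tele σ₁, mul_one]
    · rw [convert1, hy2u]
      simp only [smul_mul', Finset.prod_mul_distrib, hu2, tele σ₂, mul_one]
    · rw [convert3, hy1u, hy2u]
      have hcy : (σ₂ * σ₁) • y = (σ₁ * σ₂) • y := by rw [hcomm]
      simp only [smul_mul', smul_div', smul_smul, hcy]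
      rw [← Units.val_inj] at hu3 ⊢
      have hy0 : (y : F) ≠ 0 := y.ne_zero
      have hy1' : (((σ₁ : F ≃ₐ[K] F)) (y : F)) ≠ 0 := by simp [map_eq_zero]
      have hy2' : (((σ₂ : F ≃ₐ[K] F)) (y : F)) ≠ 0 := by simp [map_eq_zero]
      have hy12 : (((σ₁ * σ₂ : F ≃ₐ[K] F)) (y : F)) ≠ 0 := by simp [map_eq_zero]
      simp only [Units.val_mul, Units.val_div_eq_div_val, AlgEquiv.smul_units_def,
        Units.coe_map, MonoidHom.coe_coe, AlgEquiv.mul_apply] at hu3 ⊢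
      field_simp
      linear_combination hu3
end

section
/- Let $F/K$ be Galois with group $\langle \sigma_1 \rangle \times \langle \sigma_2 \rangle$ and norms $N_1, N_2$ as above. Suppose $u, b_1, b_2 \in F^\times$ satisfy $N_1(u) = \sigma_2(b_1)/b_1$ and $N_2(u) = b_2/\sigma_1(b_2)$, and suppose the system $N_1(x_1) = b_1$, $N_2(x_2) = b_2$, $\frac{\sigma_2(x_1)}{x_1}\frac{x_2}{\sigma_1(x_2)} = u$ is solvable. Then for every $x_1' \in F^\times$ with $N_1(x_1') = b_1$ there exists $x_2' \in F^\times$ such that $(x_1', x_2')$ also solves the system. -/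
theorem cyclic_h90 {K F : Type*} [Field K] [Field F] [Algebra K F]
    [FiniteDimensional K F] (σ : F ≃ₐ[K] F) (c : F) (hc0 : c ≠ 0)
    (hc : ∏ k ∈ Finset.range (orderOf σ), (σ ^ k) c = 1) :
    ∃ d : F, d ≠ 0 ∧ c = σ d / d := by
  set n := orderOf σ with hn
  have hnpos : 0 < n := orderOf_pos σ
  set a : ℕ → F := fun j => ∏ k ∈ Finset.range j, (σ ^ k) c with ha
  have hpow : ∀ (k : ℕ) (x : F), σ ((σ ^ k) x) = (σ ^ (k + 1)) x := by
    intro k x; rw [pow_succ']; rfl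
  have ha0 : ∀ j, a j ≠ 0 := fun j =>
    Finset.prod_ne_zero_iff.2 fun k _ => by
      simpa using (map_ne_zero_iff _ (σ ^ k).injective).2 hc0
  have hstep : ∀ j, a (j + 1) = σ (a j) * c := by
    intro j
    simp only [ha]
    rw [Finset.prod_range_succ' (fun k => (σ ^ k) c), map_prod]
    simp only [hpow, pow_zero, AlgEquiv.one_apply]
  have hli : LinearIndependent F (fun (f : F ≃ₐ[K] F) => (f : F → F)) :=
    LinearIndependent.comp (ι' := F ≃ₐ[K] F)
      (linearIndependent_monoidHom F F) (fun f => (f : F →* F))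
      (fun x y h => by ext t; exact DFunLike.ext_iff.1 h t)
  have hinj : Set.InjOn (fun k => σ ^ k) (Finset.range n : Set ℕ) := by
    intro i hi j hj hij
    exact pow_injOn_Iio_orderOf (by simpa using hi) (by simpa using hj) hij
  have hz : ∃ z : F, ∑ k ∈ Finset.range n, a k * (σ ^ k) z ≠ 0 := by
    by_contra h
    push_neg at h
    have := linearIndependent_iff'.1 ((hli.comp (fun k : Finset.range n => σ ^ (k : ℕ))
      (fun i j hij => Subtype.ext (hinj i.2 j.2 hij)))) Finset.univ
      (fun k => a k) ?_ ⟨0, by simpa using hnpos⟩ (Finset.mem_univ _)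
    · exact ha0 0 this
    · funext z
      have := h z
      simpa [Finset.sum_attach, Finset.sum_coe_sort] using
        (Finset.sum_attach (Finset.range n) (fun k => a k * (σ ^ k) z)).trans this
  obtain ⟨z, hz⟩ := hz
  set β := ∑ k ∈ Finset.range n, a k * (σ ^ k) z with hβ
  set f : ℕ → F := fun k => a k * (σ ^ k) z with hf
  have hfn : f n = f 0 := by
    simp only [hf, ha]
    rw [hc, pow_orderOf_eq_one]
    simp
  have key : c * σ β = β := by
    rw [hβ, map_sum, Finset.mul_sum]
    calc ∑ k ∈ Finset.range n, c * σ (a k * (σ ^ k) z)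
        = ∑ k ∈ Finset.range n, f (k + 1) := by
          refine Finset.sum_congr rfl fun k _ => ?_
          simp only [hf]
          rw [hstep, map_mul, hpow]; ring
      _ = ∑ k ∈ Finset.range n, f k := by
          have h1 := Finset.sum_range_succ' f n
          have h2 := Finset.sum_range_succ f n
          rw [h2, hfn] at h1
          exact add_right_cancel h1.symm
  have hσβ : σ β ≠ 0 := (map_ne_zero_iff _ σ.injective).2 hz
  refine ⟨β⁻¹, inv_ne_zero hz, ?_⟩
  rw [map_inv₀]
  field_simp
  linear_combination key


/-- If the bicyclic splitting system (with compatible data `u, b₁, b₂`) is solvable, then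
every `x₁'` with `N₁ x₁' = b₁` can be completed to a solution `(x₁', x₂')`.  Here `F/K`
is finite Galois with group `⟨σ₁⟩ × ⟨σ₂⟩` and `Nᵢ` is the norm of `F` over the fixed
field of `σᵢ`, written as a product of conjugates. -/
theorem bicyclic_complete_solution {K F : Type*} [Field K] [Field F] [Algebra K F]
    [FiniteDimensional K F] [IsGalois K F]
    (σ₁ σ₂ : F ≃ₐ[K] F)
    (hcomm : σ₁ * σ₂ = σ₂ * σ₁)
    (hgen : ∀ g : F ≃ₐ[K] F, ∃ i j : ℤ, g = σ₁ ^ i * σ₂ ^ j)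
    (hdisj : Subgroup.zpowers σ₁ ⊓ Subgroup.zpowers σ₂ = ⊥)
    (u b₁ b₂ : Fˣ)
    (hu1 : ∏ k ∈ Finset.range (orderOf σ₁), (σ₁ ^ k) (u : F) = σ₂ (b₁ : F) / (b₁ : F))
    (hu2 : ∏ k ∈ Finset.range (orderOf σ₂), (σ₂ ^ k) (u : F) = (b₂ : F) / σ₁ (b₂ : F))
    (hsolv : ∃ x₁ x₂ : Fˣ,
      (∏ k ∈ Finset.range (orderOf σ₁), (σ₁ ^ k) (x₁ : F) = (b₁ : F)) ∧
      (∏ k ∈ Finset.range (orderOf σ₂), (σ₂ ^ k) (x₂ : F) = (b₂ : F)) ∧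
      (σ₂ (x₁ : F) / (x₁ : F)) * ((x₂ : F) / σ₁ (x₂ : F)) = (u : F)) :
    ∀ x₁' : Fˣ, (∏ k ∈ Finset.range (orderOf σ₁), (σ₁ ^ k) (x₁' : F) = (b₁ : F)) →
      ∃ x₂' : Fˣ,
        (∏ k ∈ Finset.range (orderOf σ₂), (σ₂ ^ k) (x₂' : F) = (b₂ : F)) ∧
        (σ₂ (x₁' : F) / (x₁' : F)) * ((x₂' : F) / σ₁ (x₂' : F)) = (u : F) := by
  intro x₁' hx₁'
  obtain ⟨x₁, x₂, h1, h2, h3⟩ := hsolv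
  have hc : ∏ k ∈ Finset.range (orderOf σ₁), (σ₁ ^ k) ((x₁' : F) / (x₁ : F)) = 1 := by
    simp only [map_div₀]
    rw [Finset.prod_div_distrib, hx₁', h1, div_self b₁.ne_zero]
  obtain ⟨d, hd0, hcd⟩ := cyclic_h90 σ₁ _ (div_ne_zero x₁'.ne_zero x₁.ne_zero) hc
  have hσ₂d : σ₂ d ≠ 0 := (map_ne_zero_iff _ σ₂.injective).2 hd0
  have ht : σ₂ d / d ≠ 0 := div_ne_zero hσ₂d hd0
  refine ⟨x₂ * Units.mk0 (σ₂ d / d) ht, ?_, ?_⟩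
  · simp only [Units.val_mul, Units.val_mk0, map_mul, map_div₀]
    rw [Finset.prod_mul_distrib, Finset.prod_div_distrib, h2]
    have hpow2 : ∀ k : ℕ, (σ₂ ^ k) (σ₂ d) = (σ₂ ^ (k + 1)) d := by
      intro k; rw [pow_succ]; rfl
    set m := orderOf σ₂ with hm
    set g : ℕ → F := fun k => (σ₂ ^ k) d with hg
    have hgm : g m = g 0 := by show (σ₂ ^ m) d = (σ₂ ^ 0) d; rw [hm, pow_orderOf_eq_one, pow_zero]
    have htel : ∏ k ∈ Finset.range m, (σ₂ ^ k) (σ₂ d) = ∏ k ∈ Finset.range m, (σ₂ ^ k) d := by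
      have : ∏ k ∈ Finset.range m, (σ₂ ^ k) (σ₂ d) = ∏ k ∈ Finset.range m, g (k + 1) :=
        Finset.prod_congr rfl fun k _ => hpow2 k
      rw [this]
      have h1' := Finset.prod_range_succ' g m
      have h2' := Finset.prod_range_succ g m
      rw [h2', hgm] at h1'
      have hg0 : g 0 ≠ 0 := by simpa [hg] using hd0
      exact mul_right_cancel₀ hg0 h1'.symm
    rw [htel, div_self, mul_one]
    exact Finset.prod_ne_zero_iff.2 fun k _ => (map_ne_zero_iff _ (σ₂ ^ k).injective).2 hd0
  · simp only [Units.val_mul, Units.val_mk0, map_mul, map_div₀]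
    have hcomm12 : σ₁ (σ₂ d) = σ₂ (σ₁ d) := by
      rw [← AlgEquiv.mul_apply, ← AlgEquiv.mul_apply, hcomm]
    have hx : (x₁' : F) * d = (x₁ : F) * σ₁ d := by
      field_simp at hcd
      linear_combination hcd
    have hσ₂x : σ₂ (x₁' : F) * σ₂ d = σ₂ (x₁ : F) * σ₂ (σ₁ d) := by
      rw [← map_mul, ← map_mul, hx]
    have hσ₁d : σ₁ d ≠ 0 := (map_ne_zero_iff _ σ₁.injective).2 hd0
    have hσ₂σ₁d : σ₂ (σ₁ d) ≠ 0 := (map_ne_zero_iff _ σ₂.injective).2 hσ₁d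
    have hσ₁x₂ : σ₁ (x₂ : F) ≠ 0 := (map_ne_zero_iff _ σ₁.injective).2 x₂.ne_zero
    have hσ₂x₁ : σ₂ (x₁ : F) ≠ 0 := (map_ne_zero_iff _ σ₂.injective).2 x₁.ne_zero
    rw [hcomm12]
    field_simp at h3 ⊢
    linear_combination ((x₂ : F) * σ₁ d) * hσ₂x + (σ₂ (σ₁ d) * σ₁ d) * h3 - ((u : F) * σ₁ (x₂ : F) * σ₂ (σ₁ d)) * hx
end

section
/- Let $F/K$ be Galois with group $\langle \sigma_1 \rangle \times \langle \sigma_2 \rangle$ and norms $N_1, N_2$ as above, and let $u, b_1, b_2 \in F^\times$ satisfy $N_1(u) = \sigma_2(b_1)/b_1$ and $N_2(u) = b_2/\sigma_1(b_2)$. If $x_1 \in F^\times$ satisfies $N_1(x_1) = b_1$, then $N_1\left(u \cdot \frac{x_1}{\sigma_2(x_1)}\right) = 1$; consequently, by Hilbert 90 there exists $x_2' \in F^\times$ with $\frac{\sigma_1(x_2')}{x_2'} = u \cdot \frac{x_1}{\sigma_2(x_1)}$. -/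
open Finset

set_option synthInstance.maxHeartbeats 1000000
set_option maxHeartbeats 1000000

/-- Correctness of step 2 of the splitting algorithm for bicyclic algebras: with
compatible data `u, b₁, b₂`, if `N₁ x₁ = b₁` then `N₁(u · x₁/σ₂(x₁)) = 1`, and hence
(Hilbert 90) there is `x₂'` with `σ₁(x₂')/x₂' = u · x₁/σ₂(x₁)`.  Here `F/K` is finite
Galois with group `⟨σ₁⟩ × ⟨σ₂⟩` and `Nᵢ` is the norm of `F` over the fixed field of
`σᵢ`, written as a product of conjugates. -/
theorem bicyclic_step2 {K F : Type*} [Field K] [Field F] [Algebra K F]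
    [FiniteDimensional K F] [IsGalois K F]
    (σ₁ σ₂ : F ≃ₐ[K] F)
    (hcomm : σ₁ * σ₂ = σ₂ * σ₁)
    (hgen : ∀ g : F ≃ₐ[K] F, ∃ i j : ℤ, g = σ₁ ^ i * σ₂ ^ j)
    (hdisj : Subgroup.zpowers σ₁ ⊓ Subgroup.zpowers σ₂ = ⊥)
    (u b₁ b₂ : Fˣ)
    (hu1 : ∏ k ∈ Finset.range (orderOf σ₁), (σ₁ ^ k) (u : F) = σ₂ (b₁ : F) / (b₁ : F))
    (hu2 : ∏ k ∈ Finset.range (orderOf σ₂), (σ₂ ^ k) (u : F) = (b₂ : F) / σ₁ (b₂ : F))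
    (x₁ : Fˣ)
    (hx₁ : ∏ k ∈ Finset.range (orderOf σ₁), (σ₁ ^ k) (x₁ : F) = (b₁ : F)) :
    (∏ k ∈ Finset.range (orderOf σ₁),
        (σ₁ ^ k) ((u : F) * ((x₁ : F) / σ₂ (x₁ : F))) = 1) ∧
    ∃ x₂' : Fˣ, σ₁ (x₂' : F) / (x₂' : F) = (u : F) * ((x₁ : F) / σ₂ (x₁ : F)) := by
  classical
  set n := orderOf σ₁ with hn
  -- the element whose norm we compute
  set η : F := (u : F) * ((x₁ : F) / σ₂ (x₁ : F)) with hη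
  have hx0 : (x₁ : F) ≠ 0 := x₁.ne_zero
  have hσ₂x0 : σ₂ (x₁ : F) ≠ 0 := by
    simpa using (map_ne_zero σ₂.toRingEquiv.toRingHom).mpr hx0
  have hη0 : η ≠ 0 := by
    apply mul_ne_zero u.ne_zero
    exact div_ne_zero hx0 hσ₂x0
  have hb0 : (b₁ : F) ≠ 0 := b₁.ne_zero
  have hσ₂b0 : σ₂ (b₁ : F) ≠ 0 := by
    simpa using (map_ne_zero σ₂.toRingEquiv.toRingHom).mpr hb0
  -- powers of σ₁ commute with σ₂
  have hcommk : ∀ k : ℕ, ∀ x : F, (σ₁ ^ k) (σ₂ x) = σ₂ ((σ₁ ^ k) x) := by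
    intro k x
    have h : σ₁ ^ k * σ₂ = σ₂ * σ₁ ^ k := (Commute.pow_left hcomm.symm.symm k).symm ▸ rfl
    have h2 : Commute σ₂ σ₁ := hcomm.symm
    have h3 : σ₂ * σ₁ ^ k = σ₁ ^ k * σ₂ := (h2.pow_right k)
    calc (σ₁ ^ k) (σ₂ x) = (σ₁ ^ k * σ₂) x := rfl
      _ = (σ₂ * σ₁ ^ k) x := by rw [← h3]
      _ = σ₂ ((σ₁ ^ k) x) := rfl
  -- Part 1: the norm of η is 1
  have hnorm : ∏ k ∈ range n, (σ₁ ^ k) η = 1 := by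
    have expand : ∏ k ∈ range n, (σ₁ ^ k) η
        = (∏ k ∈ range n, (σ₁ ^ k) (u : F)) *
          ((∏ k ∈ range n, (σ₁ ^ k) (x₁ : F)) /
            ∏ k ∈ range n, (σ₁ ^ k) (σ₂ (x₁ : F))) := by
      rw [← Finset.prod_div_distrib, ← Finset.prod_mul_distrib]
      refine Finset.prod_congr rfl fun k _ => by
        rw [hη, map_mul, map_div₀]
    have hlast : ∏ k ∈ range n, (σ₁ ^ k) (σ₂ (x₁ : F)) = σ₂ (b₁ : F) := by
      rw [← hx₁, map_prod]
      exact Finset.prod_congr rfl fun k _ => hcommk k _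
    rw [expand, hlast, hu1, hx₁]
    field_simp
  refine ⟨hnorm, ?_⟩
  -- Part 2: Hilbert 90 over the fixed field of σ₁
  set E := IntermediateField.fixedField (Subgroup.zpowers σ₁) with hE
  have hmem : σ₁ ∈ IntermediateField.fixingSubgroup E := by
    rw [hE, IntermediateField.fixingSubgroup_fixedField]
    exact Subgroup.mem_zpowers σ₁
  set σ : F ≃ₐ[E] F := (IntermediateField.fixingSubgroupEquiv E) ⟨σ₁, hmem⟩ with hσdef
  -- σ acts like σ₁
  have hσ1 : ∀ x : F, σ x = σ₁ x := fun x => rfl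
  have hσk : ∀ (k : ℕ) (x : F), (σ ^ k) x = (σ₁ ^ k) x := by
    intro k
    induction k with
    | zero => intro x; rfl
    | succ m ih =>
        intro x
        rw [pow_succ, pow_succ, AlgEquiv.mul_apply, AlgEquiv.mul_apply, ih, hσ1]
  -- every E-automorphism of F is a natural power of σ
  have hsurj : ∀ g : F ≃ₐ[E] F, ∃ k : ℕ, g = σ ^ k := by
    intro g
    obtain ⟨⟨τ, hτ⟩, hτg⟩ := (IntermediateField.fixingSubgroupEquiv E).surjective g
    have hτ' : τ ∈ Subgroup.zpowers σ₁ := by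
      rwa [hE, IntermediateField.fixingSubgroup_fixedField] at hτ
    have hτ'' : τ ∈ Submonoid.powers σ₁ := mem_powers_iff_mem_zpowers.mpr hτ'
    obtain ⟨k, hk⟩ := hτ''
    refine ⟨k, ?_⟩
    have : (⟨τ, hτ⟩ : IntermediateField.fixingSubgroup E) = ⟨σ₁, hmem⟩ ^ k := by
      ext
      simp [← hk]
    rw [← hτg, this, map_pow]
  -- equal powers of σ give equal powers of σ₁ on F
  have hpow_eq : ∀ a b : ℕ, σ ^ a = σ ^ b → σ₁ ^ a = σ₁ ^ b := by
    intro a b h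
    ext x
    rw [← hσk, ← hσk, h]
  have hnpos : 0 < n := orderOf_pos σ₁
  -- partial products, as units
  have hprod_ne : ∀ m : ℕ, (∏ i ∈ range m, (σ₁ ^ i) η) ≠ 0 := by
    intro m
    refine Finset.prod_ne_zero_iff.mpr fun i _ => ?_
    simpa using (map_ne_zero (σ₁ ^ i).toRingEquiv.toRingHom).mpr hη0
  set P : ℕ → Fˣ := fun m => Units.mk0 _ (hprod_ne m) with hPdef
  have hPval : ∀ m, (P m : F) = ∏ i ∈ range m, (σ₁ ^ i) η := fun m => rfl
  have hPadd : ∀ a b : ℕ, (P (a + b) : F) = (P a : F) * (σ₁ ^ a) (P b : F) := by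
    intro a b
    rw [hPval, hPval, hPval, Finset.prod_range_add, map_prod]
    congr 1
    refine Finset.prod_congr rfl fun i _ => ?_
    rw [← AlgEquiv.mul_apply, ← pow_add]
  have hPn : (P n : F) = 1 := by rw [hPval]; exact hnorm
  have hPperiod : ∀ q a : ℕ, P (a + q * n) = P a := by
    intro q
    induction q with
    | zero => intro a; simp
    | succ m ih =>
        intro a
        have : a + (m + 1) * n = (a + m * n) + n := by ring
        ext
        rw [this, hPadd, hPn, map_one, mul_one]
        exact congrArg Units.val (ih a)
  have hPmod : ∀ a : ℕ, P a = P (a % n) := by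
    intro a
    conv_lhs => rw [← Nat.mod_add_div a n]
    rw [mul_comm]
    exact hPperiod _ _
  have hPeq : ∀ a b : ℕ, σ₁ ^ a = σ₁ ^ b → P a = P b := by
    intro a b h
    have : a ≡ b [MOD n] := (pow_eq_pow_iff_modEq).mp h
    rw [hPmod a, hPmod b, this]
  -- choose exponents
  choose kf hkf using hsurj
  set f : (F ≃ₐ[E] F) → Fˣ := fun g => P (kf g) with hfdef
  have hcocycle : groupCohomology.IsMulCocycle₁ f := by
    intro g h
    have hg : g = σ ^ kf g := hkf g
    have hh : h = σ ^ kf h := hkf h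
    have hgh : σ ^ kf (g * h) = σ ^ (kf g + kf h) := by
      rw [← hkf (g * h), pow_add, ← hkf g, ← hkf h]
    have h1 : f (g * h) = P (kf g + kf h) := hPeq _ _ (hpow_eq _ _ hgh)
    ext
    rw [h1, hPadd]
    have : ((g • f h : Fˣ) : F) = g ((f h : Fˣ) : F) := by
      rw [AlgEquiv.smul_units_def]
      rfl
    rw [Units.val_mul, this, mul_comm]
    congr 1
    conv_rhs => rw [hg]
    exact (hσk _ _).symm
  obtain ⟨β, hβ⟩ := groupCohomology.isMulCoboundary₁_of_isMulCocycle₁_of_aut_to_units f hcocycle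
  refine ⟨β, ?_⟩
  have hβσ := hβ σ
  have hfσ : (f σ : F) = η := by
    have h1 : σ ^ kf σ = σ ^ 1 := by rw [← hkf σ, pow_one]
    have h2 : f σ = P 1 := hPeq _ _ (hpow_eq _ _ h1)
    rw [h2, hPval]
    simp
  have hval : ((σ • β : Fˣ) : F) = σ₁ (β : F) := by
    rw [AlgEquiv.smul_units_def]
    exact hσ1 _
  have := congrArg Units.val hβσ
  rw [Units.val_div_eq_div_val, hval, hfσ] at this
  rw [this, hη]
end

section
/- Let $F/K$ be Galois with group $\langle \sigma_1 \rangle \times \langle \sigma_2 \rangle$, norms $N_1, N_2$, and $u, b_1, b_2 \in F^\times$ satisfying the compatibility conditions $N_1(u) = \sigma_2(b_1)/b_1$, $N_2(u) = b_2/\sigma_1(b_2)$, $b_i$ fixed by $\sigma_i$. Suppose $x_1 \in F^\times$ with $N_1(x_1) = b_1$, $x_2' \in F^\times$ with $\sigma_1(x_2')/x_2' = u \cdot x_1/\sigma_2(x_1)$, and $x_2'' \in F^\times$ fixed by $\sigma_1$ with $N_2(x_2'') = b_2 N_2(x_2')$. Then $x_2 := (x_2')^{-1} x_2''$ satisfies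 $N_2(x_2) = b_2$ and $\frac{\sigma_2(x_1)}{x_1} \cdot \frac{x_2}{\sigma_1(x_2)} = u$. -/
/-- Correctness of the output of the splitting algorithm for bicyclic algebras: with
compatible data `u, b₁, b₂` (`bᵢ` fixed by `σᵢ`), if `N₁ x₁ = b₁`,
`σ₁(x₂')/x₂' = u · x₁/σ₂(x₁)`, and `x₂''` is fixed by `σ₁` with `N₂ x₂'' = b₂ N₂ x₂'`,
then `x₂ := (x₂')⁻¹ x₂''` satisfies `N₂ x₂ = b₂` and `(σ₂ x₁/x₁)(x₂/σ₁ x₂) = u`.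
Here `F/K` is finite Galois with group `⟨σ₁⟩ × ⟨σ₂⟩` and `Nᵢ` is the norm of `F` over
the fixed field of `σᵢ`, written as a product of conjugates. -/
theorem bicyclic_step4 {K F : Type*} [Field K] [Field F] [Algebra K F]
    [FiniteDimensional K F] [IsGalois K F]
    (σ₁ σ₂ : F ≃ₐ[K] F)
    (hcomm : σ₁ * σ₂ = σ₂ * σ₁)
    (hgen : ∀ g : F ≃ₐ[K] F, ∃ i j : ℤ, g = σ₁ ^ i * σ₂ ^ j)
    (hdisj : Subgroup.zpowers σ₁ ⊓ Subgroup.zpowers σ₂ = ⊥)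
    (u b₁ b₂ : Fˣ)
    (hb₁ : σ₁ (b₁ : F) = (b₁ : F)) (hb₂ : σ₂ (b₂ : F) = (b₂ : F))
    (hu1 : ∏ k ∈ Finset.range (orderOf σ₁), (σ₁ ^ k) (u : F) = σ₂ (b₁ : F) / (b₁ : F))
    (hu2 : ∏ k ∈ Finset.range (orderOf σ₂), (σ₂ ^ k) (u : F) = (b₂ : F) / σ₁ (b₂ : F))
    (x₁ x₂' x₂'' : Fˣ)
    (hx₁ : ∏ k ∈ Finset.range (orderOf σ₁), (σ₁ ^ k) (x₁ : F) = (b₁ : F))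
    (hx₂' : σ₁ (x₂' : F) / (x₂' : F) = (u : F) * ((x₁ : F) / σ₂ (x₁ : F)))
    (hx₂''fix : σ₁ (x₂'' : F) = (x₂'' : F))
    (hx₂'' : ∏ k ∈ Finset.range (orderOf σ₂), (σ₂ ^ k) (x₂'' : F) =
      (b₂ : F) * ∏ k ∈ Finset.range (orderOf σ₂), (σ₂ ^ k) (x₂' : F)) :
    (∏ k ∈ Finset.range (orderOf σ₂), (σ₂ ^ k) (((x₂')⁻¹ * x₂'' : Fˣ) : F) = (b₂ : F)) ∧
    (σ₂ (x₁ : F) / (x₁ : F)) *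
      ((((x₂')⁻¹ * x₂'' : Fˣ) : F) / σ₁ (((x₂')⁻¹ * x₂'' : Fˣ) : F)) = (u : F) := by
  have hP : (∏ k ∈ Finset.range (orderOf σ₂), (σ₂ ^ k) (x₂' : F)) ≠ 0 :=
    Finset.prod_ne_zero_iff.2 fun k _ => by
      exact (map_ne_zero (σ₂ ^ k)).2 (Units.ne_zero x₂')
  constructor
  · have : ∏ k ∈ Finset.range (orderOf σ₂), (σ₂ ^ k) (((x₂')⁻¹ * x₂'' : Fˣ) : F) =
        (∏ k ∈ Finset.range (orderOf σ₂), (σ₂ ^ k) (x₂' : F))⁻¹ *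
        ∏ k ∈ Finset.range (orderOf σ₂), (σ₂ ^ k) (x₂'' : F) := by
      rw [← Finset.prod_inv_distrib, ← Finset.prod_mul_distrib]
      refine Finset.prod_congr rfl fun k _ => ?_
      push_cast
      rw [map_mul, map_inv₀]
    rw [this, hx₂'']
    field_simp
  · have hcast : (((x₂')⁻¹ * x₂'' : Fˣ) : F) = ((x₂' : F))⁻¹ * (x₂'' : F) := by push_cast; ring
    have hσ : σ₁ (((x₂')⁻¹ * x₂'' : Fˣ) : F) = (σ₁ (x₂' : F))⁻¹ * (x₂'' : F) := by
      rw [hcast, map_mul, map_inv₀, hx₂''fix]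
    have hx₁0 : (x₁ : F) ≠ 0 := Units.ne_zero x₁
    have hx₂'0 : (x₂' : F) ≠ 0 := Units.ne_zero x₂'
    have hx₂''0 : (x₂'' : F) ≠ 0 := Units.ne_zero x₂''
    have hσ₂x₁ : σ₂ (x₁ : F) ≠ 0 := by simpa [map_ne_zero] using hx₁0
    have hσ₁x₂' : σ₁ (x₂' : F) ≠ 0 := by simpa [map_ne_zero] using hx₂'0
    rw [hcast, map_mul, map_inv₀, hx₂''fix]
    have h := hx₂'
    field_simp at h ⊢
    linear_combination h
end

section
/- Let $L/K$ be a cyclic field extension of degree $n$ with Galois group generated by $\sigma$, let $A = (L/K, \sigma, a)$ and $B = (L/K, \sigma, b)$ be the corresponding cyclic algebras for $a, b \in K^\times$. Then $A$ and $B$ are isomorphic as $K$-algebras if and only if $a/b$ is a norm from $L$, i.e., $a/b \in N_{L/K}(L^\times)$. -/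
/-- A presentation of a `K`-algebra `A` as the cyclic algebra `(L/K, σ, a)`:
an embedding `ι : L → A` and a unit `v` with `v ι(l) v⁻¹ = ι(σ l)`,
`v ^ [L:K] = a`, and `A = ⊕ᵢ ι(L) vⁱ` (unique representation of every element). -/
structure CyclicAlgebraPresentation (K L A : Type*) [Field K] [Field L] [Algebra K L]
    [Ring A] [Algebra K A] (σ : L ≃ₐ[K] L) (a : K) where
  ι : L →ₐ[K] A
  v : Aˣ
  conj : ∀ l : L, (v : A) * ι l * (↑v⁻¹ : A) = ι (σ l)
  vpow : (v : A) ^ Module.finrank K L = algebraMap K A a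
  repr : ∀ x : A, ∃! c : Fin (Module.finrank K L) → L,
    x = ∑ i, ι (c i) * (v : A) ^ (i : ℕ)

section Aux

/-- If `T y = c • y` then `aeval T q y = q.eval c • y`. -/
theorem aeval_eigen {L V : Type*} [Field L] [AddCommGroup V] [Module L V]
    (T : Module.End L V) (c : L) (y : V) (hy : T y = c • y) (q : Polynomial L) :
    Polynomial.aeval T q y = Polynomial.eval c q • y := by
  induction q using Polynomial.induction_on with
  | C r => simp [Module.algebraMap_end_apply]
  | add p q hp hq => simp [hp, hq, add_smul]
  | monomial m r hm =>
    rw [mul_comm, pow_succ', mul_assoc, map_mul, Module.End.mul_apply, mul_comm, hm]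
    simp only [hy, smul_smul, Polynomial.aeval_X, Polynomial.eval_mul, Polynomial.eval_C,
      Polynomial.eval_pow, Polynomial.eval_X, LinearMap.map_smulₛₗ, RingHom.id_apply, mul_comm]

/-- Eigenvectors with distinct eigenvalues summing to zero are all zero. -/
theorem eigen_sum_zero {L V G : Type*} [Field L] [AddCommGroup V] [Module L V]
    [DecidableEq G] (T : Module.End L V) (μ : G → L) (s : Finset G)
    (hinj : Set.InjOn μ s) (z : G → V)
    (hz : ∀ g ∈ s, T (z g) = μ g • z g) (hsum : ∑ g ∈ s, z g = 0) :
    ∀ g ∈ s, z g = 0 := by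
  classical
  induction s using Finset.induction_on with
  | empty => simp
  | @insert g0 s hg0 ih =>
    have hq := fun (y : V) => aeval_eigen T (μ g0) y
    set q : Polynomial L := ∏ h ∈ s, (Polynomial.X - Polynomial.C (μ h)) with hqdef
    have hqz : ∀ h ∈ s, Polynomial.aeval T q (z h) = 0 := by
      intro h hh
      rw [aeval_eigen T (μ h) (z h) (hz h (Finset.mem_insert_of_mem hh)) q]
      have : Polynomial.eval (μ h) q = 0 := by
        rw [hqdef, Polynomial.eval_prod]
        exact Finset.prod_eq_zero hh (by simp)
      rw [this, zero_smul]
    have hg0z : Polynomial.eval (μ g0) q • z g0 = 0 := by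
      have happ := congrArg (Polynomial.aeval T q) hsum
      rw [map_zero, Finset.sum_insert hg0, map_add, map_sum] at happ
      rw [Finset.sum_eq_zero hqz, add_zero] at happ
      rw [← aeval_eigen T (μ g0) (z g0) (hz g0 (Finset.mem_insert_self g0 s)) q]
      exact happ
    have hne : Polynomial.eval (μ g0) q ≠ 0 := by
      rw [hqdef, Polynomial.eval_prod]
      apply Finset.prod_ne_zero_iff.mpr
      intro h hh
      simp only [Polynomial.eval_sub, Polynomial.eval_X, Polynomial.eval_C, sub_ne_zero]
      exact fun hc => hg0 (by
        have := hinj (Finset.mem_insert_self g0 s) (Finset.mem_insert_of_mem hh) hc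
        rwa [this])
    have hz0 : z g0 = 0 := by
      rcases smul_eq_zero.mp hg0z with h | h
      · exact absurd h hne
      · exact h
    have hsum' : ∑ g ∈ s, z g = 0 := by
      rw [Finset.sum_insert hg0, hz0, zero_add] at hsum
      exact hsum
    intro g hg
    rcases Finset.mem_insert.mp hg with h | h
    · rw [h]; exact hz0
    · exact ih (hinj.mono (Finset.subset_insert g0 s)) (fun g hg => hz g
        (Finset.mem_insert_of_mem hg)) hsum' g h

/-- An element fixed by all automorphisms of a Galois extension lies in the base field. -/
theorem fixed_mem_range {K L : Type*} [Field K] [Field L] [Algebra K L]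
    [FiniteDimensional K L] [IsGalois K L] (y : L) (hy : ∀ g : L ≃ₐ[K] L, g y = y) :
    ∃ c : K, algebraMap K L c = y := by
  have h1 := IsGalois.fixedField_fixingSubgroup (⊥ : IntermediateField K L)
  rw [IntermediateField.fixingSubgroup_bot] at h1
  have h2 : y ∈ IntermediateField.fixedField (⊤ : Subgroup (L ≃ₐ[K] L)) := fun g => hy g
  rw [h1] at h2
  exact IntermediateField.mem_bot.mp h2

/-- The norm as a product of powers of the generator. -/
theorem norm_prod_aux {K L : Type*} [Field K] [Field L] [Algebra K L]
    [FiniteDimensional K L] [IsGalois K L] {σ : L ≃ₐ[K] L}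
    (hσ : ∀ g : L ≃ₐ[K] L, g ∈ Subgroup.zpowers σ) (x : L) :
    algebraMap K L (Algebra.norm K x)
      = ∏ j ∈ Finset.range (Module.finrank K L), (σ ^ j) x := by
  have hord : orderOf σ = Module.finrank K L := by
    rw [orderOf_eq_card_of_forall_mem_zpowers hσ,
      IsGalois.card_aut_eq_finrank]
  rw [Algebra.norm_eq_prod_automorphisms]
  have hbij : Function.Bijective (fun i : Fin (Module.finrank K L) => σ ^ (i : ℕ)) := by
    rw [Fintype.bijective_iff_injective_and_card]
    constructor
    · intro i j hij
      exact Fin.ext (pow_injOn_Iio_orderOf (by rw [hord]; exact i.isLt)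
        (by rw [hord]; exact j.isLt) hij)
    · rw [Fintype.card_fin, ← Nat.card_eq_fintype_card, IsGalois.card_aut_eq_finrank]
  rw [← Fin.prod_univ_eq_prod_range (fun j => (σ ^ j) x) (Module.finrank K L)]
  exact (Fintype.prod_bijective _ hbij _ _ fun i => rfl).symm

end Aux

namespace CyclicAlgebraPresentation

variable {K L A B : Type*} [Field K] [Field L] [Algebra K L]
  [Ring A] [Algebra K A] [Ring B] [Algebra K B]
  {σ : L ≃ₐ[K] L} {a b : K}

theorem nontriv [FiniteDimensional K L] (p : CyclicAlgebraPresentation K L A σ a) :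
    Nontrivial A := by
  by_contra h
  rw [not_nontrivial_iff_subsingleton] at h
  have h0 : 0 < Module.finrank K L := Module.finrank_pos
  have h1 : (fun _ : Fin (Module.finrank K L) => (1 : L)) =
      (fun _ : Fin (Module.finrank K L) => (0 : L)) :=
    (p.repr 0).unique (Subsingleton.elim _ _) (Subsingleton.elim _ _)
  exact one_ne_zero (congrFun h1 ⟨0, h0⟩)

theorem vmul (p : CyclicAlgebraPresentation K L A σ a) (l : L) :
    (p.v : A) * p.ι l = p.ι (σ l) * p.v := by
  have h := p.conj l
  calc (p.v : A) * p.ι l = (p.v : A) * p.ι l * ((↑p.v⁻¹ : A) * p.v) := by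
        rw [Units.inv_mul, mul_one]
    _ = ((p.v : A) * p.ι l * (↑p.v⁻¹ : A)) * p.v := by rw [← mul_assoc]
    _ = p.ι (σ l) * p.v := by rw [h]

theorem pow_mul (p : CyclicAlgebraPresentation K L A σ a) (i : ℕ) (l : L) :
    (p.v : A) ^ i * p.ι l = p.ι ((σ ^ i) l) * (p.v : A) ^ i := by
  induction i generalizing l with
  | zero => simp
  | succ i ih =>
    rw [pow_succ, mul_assoc, p.vmul l, ← mul_assoc, ih (σ l), mul_assoc, ← pow_succ]
    congr 2

theorem unique (p : CyclicAlgebraPresentation K L A σ a)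
    {c d : Fin (Module.finrank K L) → L}
    (h : ∑ i, p.ι (c i) * (p.v : A) ^ (i : ℕ) = ∑ i, p.ι (d i) * (p.v : A) ^ (i : ℕ)) :
    c = d :=
  ExistsUnique.unique (p.repr (∑ i, p.ι (c i) * (p.v : A) ^ (i : ℕ))) rfl h

theorem single (p : CyclicAlgebraPresentation K L A σ a) (l : L)
    (j : Fin (Module.finrank K L)) :
    ∑ i, p.ι ((Pi.single j l : Fin (Module.finrank K L) → L) i) * (p.v : A) ^ (i : ℕ)
      = p.ι l * (p.v : A) ^ (j : ℕ) := by
  rw [Finset.sum_eq_single j]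
  · rw [Pi.single_eq_same]
  · intro i _ hij
    rw [Pi.single_eq_of_ne hij, map_zero, zero_mul]
  · intro h; exact absurd (Finset.mem_univ j) h

theorem mulpow (p : CyclicAlgebraPresentation K L A σ a) (x : L) (m : ℕ) :
    (p.ι x * (p.v : A)) ^ m = p.ι (∏ j ∈ Finset.range m, (σ ^ j) x) * (p.v : A) ^ m := by
  induction m with
  | zero => simp
  | succ m ih =>
    rw [pow_succ, ih, mul_assoc, ← mul_assoc ((p.v : A) ^ m), p.pow_mul, Finset.prod_range_succ,
      map_mul, mul_assoc, mul_assoc, pow_succ]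

/-- Two presentations with the same parameter give a `K`-algebra homomorphism
respecting the standard decomposition. -/
theorem hom_exists [FiniteDimensional K L]
    (pA : CyclicAlgebraPresentation K L A σ a) (pB : CyclicAlgebraPresentation K L B σ a) :
    ∃ f : A →ₐ[K] B, ∀ c : Fin (Module.finrank K L) → L,
      f (∑ i, pA.ι (c i) * (pA.v : A) ^ (i : ℕ)) = ∑ i, pB.ι (c i) * (pB.v : B) ^ (i : ℕ) := by
  classical
  have hn0 : 0 < Module.finrank K L := Module.finrank_pos
  have hcf : ∀ x : A, ∃ c : Fin (Module.finrank K L) → L,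
      x = ∑ i, pA.ι (c i) * (pA.v : A) ^ (i : ℕ) := fun x => (pA.repr x).exists
  choose cf hcfs using hcf
  set F : A → B := fun x => ∑ i, pB.ι (cf x i) * (pB.v : B) ^ (i : ℕ) with hFdef
  have key : ∀ c : Fin (Module.finrank K L) → L,
      F (∑ i, pA.ι (c i) * (pA.v : A) ^ (i : ℕ)) = ∑ i, pB.ι (c i) * (pB.v : B) ^ (i : ℕ) := by
    intro c
    have h1 : cf (∑ i, pA.ι (c i) * (pA.v : A) ^ (i : ℕ)) = c :=
      pA.unique (hcfs _).symm
    simp only [hFdef]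
    rw [h1]
  have hFadd : ∀ x y, F (x + y) = F x + F y := by
    intro x y
    have h : x + y = ∑ i, pA.ι (cf x i + cf y i) * (pA.v : A) ^ (i : ℕ) := by
      simp only [map_add, add_mul, Finset.sum_add_distrib]
      rw [← hcfs x, ← hcfs y]
    rw [h, key]
    simp only [hFdef, map_add, add_mul, Finset.sum_add_distrib]
  set Fa : A →+ B := AddMonoidHom.mk' F hFadd with hFadef
  have hFsum : ∀ {γ : Type} (s : Finset γ) (f : γ → A),
      F (∑ i ∈ s, f i) = ∑ i ∈ s, F (f i) := by
    intro γ s f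
    exact map_sum Fa f s
  have hsingle : ∀ (l : L) (j : Fin (Module.finrank K L)),
      F (pA.ι l * (pA.v : A) ^ (j : ℕ)) = pB.ι l * (pB.v : B) ^ (j : ℕ) := by
    intro l j
    rw [← pA.single l j, key, pB.single]
  have hiota : ∀ l, F (pA.ι l) = pB.ι l := by
    intro l
    have := hsingle l ⟨0, hn0⟩
    simpa using this
  have hple : ∀ (l : L) (j : ℕ), j ≤ Module.finrank K L →
      F (pA.ι l * (pA.v : A) ^ j) = pB.ι l * (pB.v : B) ^ j := by
    intro l j hj
    rcases lt_or_eq_of_le hj with h | h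
    · exact hsingle l ⟨j, h⟩
    · subst h
      rw [pA.vpow, pB.vpow, ← AlgHom.commutes pA.ι a, ← map_mul, hiota, map_mul,
        AlgHom.commutes pB.ι a]
  have hFv : ∀ x, F (x * (pA.v : A)) = F x * (pB.v : B) := by
    intro x
    conv_lhs => rw [hcfs x]
    conv_rhs => rw [hcfs x, key]
    rw [Finset.sum_mul, Finset.sum_mul, hFsum]
    refine Finset.sum_congr rfl fun i _ => ?_
    rw [mul_assoc, ← pow_succ, mul_assoc, ← pow_succ]
    exact hple _ _ i.isLt
  have hFpowr : ∀ (x : A) (m : ℕ), F (x * (pA.v : A) ^ m) = F x * (pB.v : B) ^ m := by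
    intro x m
    induction m with
    | zero => simp
    | succ m ih =>
      rw [pow_succ, ← mul_assoc, hFv, ih, mul_assoc, ← pow_succ]
  have hFr : ∀ (x : A) (l : L), F (x * pA.ι l) = F x * pB.ι l := by
    intro x l
    conv_lhs => rw [hcfs x]
    conv_rhs => rw [hcfs x, key]
    rw [Finset.sum_mul, Finset.sum_mul, hFsum]
    refine Finset.sum_congr rfl fun i _ => ?_
    calc F (pA.ι (cf x i) * (pA.v : A) ^ (i : ℕ) * pA.ι l)
        = F (pA.ι (cf x i * (σ ^ (i : ℕ)) l) * (pA.v : A) ^ (i : ℕ)) := by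
          rw [mul_assoc, pA.pow_mul, ← mul_assoc, ← map_mul]
      _ = pB.ι (cf x i * (σ ^ (i : ℕ)) l) * (pB.v : B) ^ (i : ℕ) := hsingle _ i
      _ = pB.ι (cf x i) * (pB.v : B) ^ (i : ℕ) * pB.ι l := by
          rw [map_mul, mul_assoc, ← pB.pow_mul, ← mul_assoc]
  have hFmul : ∀ x y, F (x * y) = F x * F y := by
    intro x y
    conv_lhs => rw [hcfs y]
    conv_rhs => rw [hcfs y, key]
    rw [Finset.mul_sum, Finset.mul_sum, hFsum]
    refine Finset.sum_congr rfl fun i _ => ?_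
    rw [← mul_assoc, hFpowr, hFr, mul_assoc]
  have hF1 : F 1 = 1 := by
    have h := hiota 1
    rw [map_one] at h
    rw [h, map_one]
  have hF0 : F 0 = 0 := by
    have h : (0 : A) = ∑ i, pA.ι ((fun _ : Fin (Module.finrank K L) => (0 : L)) i)
        * (pA.v : A) ^ (i : ℕ) := by simp
    rw [h, key]
    simp
  have hFcomm : ∀ k : K, F (algebraMap K A k) = algebraMap K B k := by
    intro k
    rw [← AlgHom.commutes pA.ι k, hiota, AlgHom.commutes pB.ι k]
  exact ⟨⟨⟨⟨⟨F, hF1⟩, hFmul⟩, hF0, hFadd⟩, hFcomm⟩, key⟩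

theorem iso_of_same [FiniteDimensional K L]
    (pA : CyclicAlgebraPresentation K L A σ a) (pB : CyclicAlgebraPresentation K L B σ a) :
    Nonempty (A ≃ₐ[K] B) := by
  obtain ⟨f, hf⟩ := hom_exists pA pB
  obtain ⟨g, hg⟩ := hom_exists pB pA
  refine ⟨AlgEquiv.ofAlgHom f g ?_ ?_⟩
  · apply AlgHom.ext
    intro y
    obtain ⟨c, hc⟩ := (pB.repr y).exists
    rw [AlgHom.comp_apply, hc, hg, hf, AlgHom.id_apply]
  · apply AlgHom.ext
    intro x
    obtain ⟨c, hc⟩ := (pA.repr x).exists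
    rw [AlgHom.comp_apply, hc, hf, hg, AlgHom.id_apply]

/-- If `B` carries a presentation with parameter `b`, and also admits an embedding `ι'` and a
unit `w` implementing `σ` with `w ^ n = a`, then `a / b` is a norm. -/
theorem norm_of_two [FiniteDimensional K L] [IsGalois K L]
    (hσ : ∀ g : L ≃ₐ[K] L, g ∈ Subgroup.zpowers σ)
    (pB : CyclicAlgebraPresentation K L B σ b)
    (ι' : L →ₐ[K] B) (w : Bˣ)
    (hconj : ∀ l : L, (w : B) * ι' l * (↑w⁻¹ : B) = ι' (σ l))
    (hwpow : (w : B) ^ Module.finrank K L = algebraMap K B a)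
    (hb : b ≠ 0) :
    ∃ x : L, Algebra.norm K x = a / b := by
  classical
  have hNT : Nontrivial B := pB.nontriv
  have hn0 : 0 < Module.finrank K L := Module.finrank_pos
  -- primitive element
  obtain ⟨θ, hθ⟩ := Field.exists_primitive_element K L
  have hadj : Algebra.adjoin K {θ} = ⊤ := by
    have h := IntermediateField.adjoin_simple_toSubalgebra_of_isAlgebraic
      (IsIntegral.of_finite K θ).isAlgebraic
    rw [hθ, IntermediateField.top_toSubalgebra] at h
    exact h.symm
  have hord : orderOf σ = Module.finrank K L := by
    rw [orderOf_eq_card_of_forall_mem_zpowers hσ, IsGalois.card_aut_eq_finrank]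
  -- basic commutation rules
  have hw : ∀ l : L, (w : B) * ι' l = ι' (σ l) * w := by
    intro l
    calc (w : B) * ι' l = (w : B) * ι' l * ((↑w⁻¹ : B) * w) := by rw [Units.inv_mul, mul_one]
      _ = ((w : B) * ι' l * (↑w⁻¹ : B)) * w := by rw [← mul_assoc]
      _ = ι' (σ l) * w := by rw [hconj]
  -- L-module structure on B through pB.ι
  letI : Module L B := Module.compHom B pB.ι.toRingHom
  have hsmul : ∀ (l : L) (x : B), l • x = pB.ι l * x := fun _ _ => rfl
  haveI : IsScalarTower L L B := ⟨fun l l' x => by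
    simp only [hsmul, smul_eq_mul, map_mul, mul_assoc]⟩
  haveI hfin : Module.Finite L B := by
    refine ⟨⟨Finset.image (fun i : Fin (Module.finrank K L) => (pB.v : B) ^ (i : ℕ))
      Finset.univ, ?_⟩⟩
    rw [eq_top_iff]
    intro x _
    obtain ⟨c, hc⟩ := (pB.repr x).exists
    rw [hc]
    apply Submodule.sum_mem
    intro i _
    rw [← hsmul]
    exact Submodule.smul_mem _ _ (Submodule.subset_span
      (by simp [Finset.coe_image]))
  -- the right-multiplication operator
  set T : Module.End L B :=
    { toFun := fun x => x * ι' θ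
      map_add' := fun x y => add_mul x y (ι' θ)
      map_smul' := fun l x => by simp only [RingHom.id_apply, hsmul, mul_assoc] }
    with hTdef
  have hT : ∀ x : B, T x = x * ι' θ := fun _ => rfl
  set P : (L ≃ₐ[K] L) → B → Prop := fun g x => ∀ l : L, x * ι' l = pB.ι (g l) * x with hPdef
  -- upgrade from θ to all of L
  have hupgrade : ∀ (g : L ≃ₐ[K] L) (x : B), x * ι' θ = pB.ι (g θ) * x → P g x := by
    intro g x hx l
    have hmem : l ∈ Algebra.adjoin K ({θ} : Set L) := by rw [hadj]; trivial
    induction hmem using Algebra.adjoin_induction with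
    | mem z hz =>
      rw [Set.mem_singleton_iff] at hz
      subst hz
      exact hx
    | algebraMap r =>
      rw [AlgHom.commutes, AlgEquiv.commutes, AlgHom.commutes, Algebra.commutes]
    | add z₁ z₂ h₁ h₂ ih₁ ih₂ =>
      rw [map_add, map_add, map_add, mul_add, add_mul, ih₁, ih₂]
    | mul z₁ z₂ h₁ h₂ ih₁ ih₂ =>
      rw [map_mul, map_mul, map_mul, ← mul_assoc, ih₁, mul_assoc, ih₂, ← mul_assoc]
  -- injectivity of g ↦ g θ
  have hinjθ : Function.Injective (fun g : L ≃ₐ[K] L => g θ) := by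
    intro g g' hgg'
    ext l
    have hmem : l ∈ Algebra.adjoin K ({θ} : Set L) := by rw [hadj]; trivial
    induction hmem using Algebra.adjoin_induction with
    | mem z hz =>
      rw [Set.mem_singleton_iff] at hz
      subst hz
      exact hgg'
    | algebraMap r => rw [AlgEquiv.commutes, AlgEquiv.commutes]
    | add z₁ z₂ h₁ h₂ ih₁ ih₂ => rw [map_add, map_add, ih₁, ih₂]
    | mul z₁ z₂ h₁ h₂ ih₁ ih₂ => rw [map_mul, map_mul, ih₁, ih₂]
  -- the Galois-conjugate polynomial
  set F : Polynomial L := ∏ g : (L ≃ₐ[K] L), (Polynomial.X - Polynomial.C (g θ)) with hFdef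
  have hFcoeff : ∀ j : ℕ, ∃ c : K, algebraMap K L c = F.coeff j := by
    intro j
    apply fixed_mem_range
    intro h
    have hmap : F.map (h : L →+* L) = F := by
      rw [hFdef, Polynomial.map_prod]
      refine Fintype.prod_equiv (Equiv.mulLeft h) _ _ fun g => ?_
      simp only [Polynomial.map_sub, Polynomial.map_X, Polynomial.map_C, Equiv.coe_mulLeft,
        AlgEquiv.mul_apply]
      rfl
    calc h (F.coeff j) = (F.map (h : L →+* L)).coeff j := by rw [Polynomial.coeff_map]; rfl
      _ = F.coeff j := by rw [hmap]
  have hFeval : Polynomial.eval θ F = 0 := by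
    rw [hFdef, Polynomial.eval_prod]
    refine Finset.prod_eq_zero (Finset.mem_univ (1 : L ≃ₐ[K] L)) ?_
    simp
  have hTpow : ∀ (j : ℕ) (x : B), (T ^ j) x = x * (ι' θ) ^ j := by
    intro j
    induction j with
    | zero => intro x; simp
    | succ j ih =>
      intro x
      rw [pow_succ, Module.End.mul_apply, hT, ih, mul_assoc, ← pow_succ']
  have hFzero : ∀ x : B, Polynomial.aeval T F x = 0 := by
    intro x
    have h1 : Polynomial.aeval T F = ∑ i ∈ Finset.range (F.natDegree + 1), F.coeff i • T ^ i :=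
      Polynomial.aeval_eq_sum_range T
    rw [h1, LinearMap.sum_apply]
    have h2 : ∀ i ∈ Finset.range (F.natDegree + 1),
        (F.coeff i • T ^ i) x = x * ι' (F.coeff i * θ ^ i) := by
      intro i _
      obtain ⟨c, hc⟩ := hFcoeff i
      calc (F.coeff i • T ^ i) x = pB.ι (algebraMap K L c) * (x * (ι' θ) ^ i) := by
            rw [LinearMap.smul_apply, hTpow, hsmul, hc]
        _ = x * (ι' θ) ^ i * algebraMap K B c := by
            rw [AlgHom.commutes, Algebra.commutes]
        _ = x * ι' (F.coeff i * θ ^ i) := by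
            rw [map_mul, map_pow, ← hc, AlgHom.commutes, mul_assoc, ← Algebra.commutes]
    rw [Finset.sum_congr rfl h2, ← Finset.mul_sum, ← map_sum, ← Polynomial.eval_eq_sum_range,
      hFeval, map_zero, mul_zero]
  -- Lagrange interpolation decomposition
  have hinjOn : Set.InjOn (fun g : L ≃ₐ[K] L => g θ)
      ↑(Finset.univ : Finset (L ≃ₐ[K] L)) := Function.Injective.injOn hinjθ
  have hone : (1 : Polynomial L) =
      ∑ g : L ≃ₐ[K] L, Lagrange.basis Finset.univ (fun g : L ≃ₐ[K] L => g θ) g := by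
    have h := Lagrange.eq_interpolate (f := (1 : Polynomial L)) hinjOn
      (by rw [Polynomial.degree_one, Finset.card_univ]
          exact_mod_cast Fintype.card_pos)
    rw [Lagrange.interpolate_apply] at h
    simpa using h
  have hdecomp : ∀ x : B, ∃ z : (L ≃ₐ[K] L) → B, (∀ g, P g (z g)) ∧ x = ∑ g, z g := by
    intro x
    refine ⟨fun g => Polynomial.aeval T (Lagrange.basis Finset.univ
      (fun g : L ≃ₐ[K] L => g θ) g) x, fun g => ?_, ?_⟩
    · apply hupgrade
      have hb1 : Lagrange.basis Finset.univ (fun g : L ≃ₐ[K] L => g θ) g =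
          Polynomial.C (∏ h ∈ Finset.univ.erase g, ((g θ) - (h θ))⁻¹) *
          ∏ h ∈ Finset.univ.erase g, (Polynomial.X - Polynomial.C (h θ)) := by
        rw [Lagrange.basis]
        simp only [Lagrange.basisDivisor]
        rw [Finset.prod_mul_distrib, map_prod]
      have hfact : (Polynomial.X - Polynomial.C (g θ)) * Lagrange.basis Finset.univ
          (fun g : L ≃ₐ[K] L => g θ) g =
          Polynomial.C (∏ h ∈ Finset.univ.erase g, ((g θ) - (h θ))⁻¹) * F := by
        rw [hb1, mul_left_comm, hFdef]
        congr 1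
        exact Finset.mul_prod_erase Finset.univ
          (fun h : L ≃ₐ[K] L => Polynomial.X - Polynomial.C (h θ)) (Finset.mem_univ g)
      have h3 := congrArg (fun q => Polynomial.aeval T q x) hfact
      simp only [map_mul] at h3
      rw [Module.End.mul_apply, Module.End.mul_apply] at h3
      have h4 : Polynomial.aeval T (Polynomial.X - Polynomial.C (g θ)) =
          T - algebraMap L (Module.End L B) (g θ) := by
        rw [map_sub, Polynomial.aeval_X, Polynomial.aeval_C]
      rw [h4] at h3
      have h5 : Polynomial.aeval T (Polynomial.C
          (∏ h ∈ Finset.univ.erase g, ((g θ) - (h θ))⁻¹)) (Polynomial.aeval T F x) = 0 := by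
        rw [Polynomial.aeval_C, Module.algebraMap_end_apply, hFzero, smul_zero]
      rw [h5, LinearMap.sub_apply, Module.algebraMap_end_apply] at h3
      have h6 := sub_eq_zero.mp h3
      rw [hT, hsmul] at h6
      exact h6
    · calc x = Polynomial.aeval T (1 : Polynomial L) x := by
            rw [map_one, Module.End.one_apply]
        _ = ∑ g : L ≃ₐ[K] L, Polynomial.aeval T (Lagrange.basis Finset.univ
            (fun g : L ≃ₐ[K] L => g θ) g) x := by
            rw [hone, map_sum, LinearMap.sum_apply]
  -- produce a nonzero element intertwining ι' and pB.ι
  obtain ⟨z, hzP, hz1⟩ := hdecomp 1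
  have hex : ∃ g, z g ≠ 0 := by
    by_contra hno
    push_neg at hno
    rw [Finset.sum_eq_zero (fun g _ => hno g)] at hz1
    exact one_ne_zero hz1
  obtain ⟨g0, hg0⟩ := hex
  obtain ⟨m, hm⟩ : ∃ m : ℕ, σ ^ m = g0⁻¹ := by
    obtain ⟨m, hm⟩ := mem_powers_iff_mem_zpowers.mpr (hσ g0⁻¹)
    exact ⟨m, hm⟩
  have hstep : ∀ (g : L ≃ₐ[K] L) (x : B), P g x → P (g * σ) (x * w) := by
    intro g x hPg l
    calc x * (w : B) * ι' l = x * ((w : B) * ι' l) := by rw [mul_assoc]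
      _ = x * (ι' (σ l) * (w : B)) := by rw [hw]
      _ = (x * ι' (σ l)) * (w : B) := by rw [mul_assoc]
      _ = (pB.ι (g (σ l)) * x) * (w : B) := by rw [hPg (σ l)]
      _ = pB.ι ((g * σ) l) * (x * (w : B)) := by rw [AlgEquiv.mul_apply, mul_assoc]
  have hPpow : ∀ (g : L ≃ₐ[K] L) (x : B) (m : ℕ), P g x →
      P (g * σ ^ m) (x * (w : B) ^ m) := by
    intro g x m hPg
    induction m with
    | zero => simpa using hPg
    | succ m ih =>
      have h7 := hstep _ _ ih
      rw [show g * σ ^ m * σ = g * σ ^ (m + 1) by rw [pow_succ, mul_assoc],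
        show x * (w : B) ^ m * (w : B) = x * (w : B) ^ (m + 1) by
          rw [pow_succ, mul_assoc]] at h7
      exact h7
  obtain ⟨u, hudef⟩ : ∃ u : B, u = z g0 * (w : B) ^ m := ⟨_, rfl⟩
  have hu : ∀ l, u * ι' l = pB.ι l * u := by
    intro l
    have h8 := hPpow g0 (z g0) m (hzP g0)
    rw [hm, mul_inv_cancel, ← hudef] at h8
    have h9 := h8 l
    rwa [AlgEquiv.one_apply] at h9
  have hune : u ≠ 0 := by
    rw [hudef, ← Units.val_pow_eq_pow_val]
    exact fun h => hg0 ((Units.mul_left_eq_zero (w ^ m)).mp h)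
  -- right multiplication by u is bijective
  set Ru : Module.End L B :=
    { toFun := fun x => x * u
      map_add' := fun x y => add_mul x y u
      map_smul' := fun l x => by simp only [RingHom.id_apply, hsmul, mul_assoc] }
    with hRudef
  have hRuinj : Function.Injective Ru := by
    rw [← LinearMap.ker_eq_bot, LinearMap.ker_eq_bot']
    intro x hx
    have hx2 : x * u = 0 := hx
    obtain ⟨c, hc⟩ := (pB.repr x).exists
    have hx' : ∑ i : Fin (Module.finrank K L),
        pB.ι (c i) * (pB.v : B) ^ (i : ℕ) * u = 0 := by
      rw [← Finset.sum_mul, ← hc]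
      exact hx2
    have hinj2 : Set.InjOn (fun i : Fin (Module.finrank K L) => (σ ^ (i : ℕ)) θ)
        ↑(Finset.univ : Finset (Fin (Module.finrank K L))) := by
      intro i _ j _ hij
      have h10 : σ ^ (i : ℕ) = σ ^ (j : ℕ) := hinjθ hij
      exact Fin.ext (pow_injOn_Iio_orderOf (by rw [hord]; exact i.isLt)
        (by rw [hord]; exact j.isLt) h10)
    have hcomm : ∀ i : Fin (Module.finrank K L),
        pB.ι (c i) * pB.ι ((σ ^ (i : ℕ)) θ) = pB.ι ((σ ^ (i : ℕ)) θ) * pB.ι (c i) := by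
      intro i
      rw [← map_mul, ← map_mul, mul_comm]
    have heig : ∀ i ∈ (Finset.univ : Finset (Fin (Module.finrank K L))),
        T (pB.ι (c i) * (pB.v : B) ^ (i : ℕ) * u)
          = ((σ ^ (i : ℕ)) θ) • (pB.ι (c i) * (pB.v : B) ^ (i : ℕ) * u) := by
      intro i _
      rw [hT, hsmul]
      calc pB.ι (c i) * (pB.v : B) ^ (i : ℕ) * u * ι' θ
          = pB.ι (c i) * (pB.v : B) ^ (i : ℕ) * (u * ι' θ) := by rw [mul_assoc]
        _ = pB.ι (c i) * (pB.v : B) ^ (i : ℕ) * (pB.ι θ * u) := by rw [hu]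
        _ = pB.ι (c i) * ((pB.v : B) ^ (i : ℕ) * pB.ι θ) * u := by noncomm_ring
        _ = pB.ι (c i) * (pB.ι ((σ ^ (i : ℕ)) θ) * (pB.v : B) ^ (i : ℕ)) * u := by
            rw [pB.pow_mul]
        _ = (pB.ι (c i) * pB.ι ((σ ^ (i : ℕ)) θ)) * ((pB.v : B) ^ (i : ℕ) * u) := by
            noncomm_ring
        _ = (pB.ι ((σ ^ (i : ℕ)) θ) * pB.ι (c i)) * ((pB.v : B) ^ (i : ℕ) * u) := by
            rw [hcomm]
        _ = pB.ι ((σ ^ (i : ℕ)) θ) * (pB.ι (c i) * (pB.v : B) ^ (i : ℕ) * u) := by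
            noncomm_ring
    have hallz := eigen_sum_zero T (fun i : Fin (Module.finrank K L) => (σ ^ (i : ℕ)) θ)
      Finset.univ hinj2 _ heig hx'
    have hcall : ∀ i : Fin (Module.finrank K L), c i = 0 := by
      intro i
      by_contra hci
      have hU : IsUnit (pB.ι (c i) * (pB.v : B) ^ (i : ℕ)) := by
        refine IsUnit.mul ?_ ?_
        · exact (isUnit_iff_ne_zero.mpr hci).map pB.ι
        · rw [← Units.val_pow_eq_pow_val]
          exact (pB.v ^ (i : ℕ)).isUnit
      exact hune ((hU.mul_right_eq_zero).mp (hallz i (Finset.mem_univ i)))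
    rw [hc, Finset.sum_eq_zero]
    intro i _
    rw [hcall i, map_zero, zero_mul]
  haveI : FiniteDimensional L B := hfin
  have hRusurj : Function.Surjective Ru := LinearMap.injective_iff_surjective.mp hRuinj
  obtain ⟨t, ht⟩ := hRusurj 1
  have ht' : t * u = 1 := ht
  have hut : u * t = 1 := by
    apply hRuinj
    show u * t * u = Ru 1
    show u * t * u = 1 * u
    rw [mul_assoc, ht', mul_one, one_mul]
  have htl : ∀ l : L, t * pB.ι l = ι' l * t := by
    intro l
    calc t * pB.ι l = t * (pB.ι l * (u * t)) := by rw [hut, mul_one]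
      _ = t * ((pB.ι l * u) * t) := by noncomm_ring
      _ = t * ((u * ι' l) * t) := by rw [← hu]
      _ = (t * u) * (ι' l * t) := by noncomm_ring
      _ = ι' l * t := by rw [ht', one_mul]
  obtain ⟨w', hw'def⟩ : ∃ x : B, x = u * (w : B) * t := ⟨_, rfl⟩
  have hw'conj : ∀ l : L, w' * pB.ι l = pB.ι (σ l) * w' := by
    intro l
    calc w' * pB.ι l = u * (w : B) * (t * pB.ι l) := by rw [hw'def, mul_assoc]
      _ = u * (w : B) * (ι' l * t) := by rw [htl]
      _ = u * ((w : B) * ι' l) * t := by noncomm_ring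
      _ = u * (ι' (σ l) * (w : B)) * t := by rw [hw]
      _ = (u * ι' (σ l)) * ((w : B) * t) := by noncomm_ring
      _ = (pB.ι (σ l) * u) * ((w : B) * t) := by rw [hu]
      _ = pB.ι (σ l) * (u * (w : B) * t) := by noncomm_ring
      _ = pB.ι (σ l) * w' := by rw [← hw'def]
  have hw'pow : w' ^ Module.finrank K L = algebraMap K B a := by
    have hconjpow : ∀ j : ℕ, w' ^ j = u * (w : B) ^ j * t := by
      intro j
      induction j with
      | zero => rw [pow_zero, pow_zero, mul_one, hut]
      | succ j ih =>
        calc w' ^ (j + 1) = (u * (w : B) ^ j * t) * w' := by rw [pow_succ, ih]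
          _ = (u * (w : B) ^ j * t) * (u * (w : B) * t) := by rw [hw'def]
          _ = u * (w : B) ^ j * ((t * u) * ((w : B) * t)) := by noncomm_ring
          _ = u * (w : B) ^ j * ((w : B) * t) := by rw [ht', one_mul]
          _ = u * ((w : B) ^ j * (w : B)) * t := by noncomm_ring
          _ = u * (w : B) ^ (j + 1) * t := by rw [← pow_succ]
    rw [hconjpow, hwpow, ← Algebra.commutes, mul_assoc, hut, mul_one]
  have hvinvl : ∀ l : L, (↑pB.v⁻¹ : B) * pB.ι l = pB.ι (σ⁻¹ l) * (↑pB.v⁻¹ : B) := by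
    intro l
    have h10 := pB.vmul (σ⁻¹ l)
    have h11 : σ (σ⁻¹ l) = l := by
      rw [← AlgEquiv.mul_apply, mul_inv_cancel, AlgEquiv.one_apply]
    rw [h11] at h10
    calc (↑pB.v⁻¹ : B) * pB.ι l
        = (↑pB.v⁻¹ : B) * pB.ι l * ((pB.v : B) * (↑pB.v⁻¹ : B)) := by
          rw [Units.mul_inv, mul_one]
      _ = (↑pB.v⁻¹ : B) * ((pB.ι l * (pB.v : B)) * (↑pB.v⁻¹ : B)) := by noncomm_ring
      _ = (↑pB.v⁻¹ : B) * (((pB.v : B) * pB.ι (σ⁻¹ l)) * (↑pB.v⁻¹ : B)) := by rw [← h10]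
      _ = ((↑pB.v⁻¹ : B) * (pB.v : B)) * (pB.ι (σ⁻¹ l) * (↑pB.v⁻¹ : B)) := by noncomm_ring
      _ = pB.ι (σ⁻¹ l) * (↑pB.v⁻¹ : B) := by rw [Units.inv_mul, one_mul]
  obtain ⟨y, hydef⟩ : ∃ x : B, x = w' * (↑pB.v⁻¹ : B) := ⟨_, rfl⟩
  have hycomm : ∀ l : L, y * pB.ι l = pB.ι l * y := by
    intro l
    have h11 : σ (σ⁻¹ l) = l := by
      rw [← AlgEquiv.mul_apply, mul_inv_cancel, AlgEquiv.one_apply]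
    calc y * pB.ι l = w' * ((↑pB.v⁻¹ : B) * pB.ι l) := by rw [hydef, mul_assoc]
      _ = w' * (pB.ι (σ⁻¹ l) * (↑pB.v⁻¹ : B)) := by rw [hvinvl]
      _ = (w' * pB.ι (σ⁻¹ l)) * (↑pB.v⁻¹ : B) := by rw [mul_assoc]
      _ = (pB.ι (σ (σ⁻¹ l)) * w') * (↑pB.v⁻¹ : B) := by rw [hw'conj]
      _ = pB.ι l * y := by rw [h11, hydef, mul_assoc]
  have hyunit : IsUnit y := by
    have hUu : IsUnit u := ⟨⟨u, t, hut, ht'⟩, rfl⟩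
    have hUt : IsUnit t := ⟨⟨t, u, ht', hut⟩, rfl⟩
    have h12 : IsUnit w' := by
      rw [hw'def]
      exact (hUu.mul w.isUnit).mul hUt
    rw [hydef]
    exact h12.mul (pB.v⁻¹).isUnit
  -- expand y in the basis: only the 0-th coefficient survives
  obtain ⟨c, hc⟩ := (pB.repr y).exists
  have hcoefeq : ∀ (l : L) (i : Fin (Module.finrank K L)),
      c i * (σ ^ (i : ℕ)) l = l * c i := by
    intro l i
    have h13 : y * pB.ι l
        = ∑ i, pB.ι ((fun i => c i * (σ ^ (i : ℕ)) l) i) * (pB.v : B) ^ (i : ℕ) := by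
      rw [hc, Finset.sum_mul]
      refine Finset.sum_congr rfl fun i _ => ?_
      rw [mul_assoc, pB.pow_mul, ← mul_assoc, ← map_mul]
    have h14 : pB.ι l * y
        = ∑ i, pB.ι ((fun i => l * c i) i) * (pB.v : B) ^ (i : ℕ) := by
      rw [hc, Finset.mul_sum]
      refine Finset.sum_congr rfl fun i _ => ?_
      rw [← mul_assoc, ← map_mul]
    have h15 := pB.unique ((h13.symm.trans (hycomm l)).trans h14)
    exact congrFun h15 i
  have hczero : ∀ i : Fin (Module.finrank K L), (i : ℕ) ≠ 0 → c i = 0 := by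
    intro i hi
    have hne1 : σ ^ (i : ℕ) ≠ 1 := by
      intro h15
      have h16 := orderOf_le_of_pow_eq_one (Nat.pos_of_ne_zero hi) h15
      rw [hord] at h16
      exact absurd h16 (not_le.mpr i.isLt)
    have hl : ∃ l : L, (σ ^ (i : ℕ)) l ≠ l := by
      by_contra hno
      push_neg at hno
      exact hne1 (AlgEquiv.ext hno)
    obtain ⟨l, hl⟩ := hl
    have h16 := hcoefeq l i
    rw [mul_comm l (c i)] at h16
    have h17 : c i * ((σ ^ (i : ℕ)) l - l) = 0 := by rw [mul_sub, h16, sub_self]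
    rcases mul_eq_zero.mp h17 with h | h
    · exact h
    · exact absurd (sub_eq_zero.mp h) hl
  have hyval : y = pB.ι (c ⟨0, hn0⟩) := by
    rw [hc, Finset.sum_eq_single (⟨0, hn0⟩ : Fin (Module.finrank K L))]
    · simp
    · intro i _ hii
      rw [hczero i (fun h => hii (Fin.ext h)), map_zero, zero_mul]
    · intro h; exact absurd (Finset.mem_univ _) h
  have hc0 : c ⟨0, hn0⟩ ≠ 0 := by
    intro h
    exact hyunit.ne_zero (by rw [hyval, h, map_zero])
  -- conclude: a = N(c₀) b
  have hwy : w' = pB.ι (c ⟨0, hn0⟩) * (pB.v : B) := by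
    rw [← hyval, hydef, mul_assoc, Units.inv_mul, mul_one]
  have hprod : algebraMap K B a
      = pB.ι (∏ j ∈ Finset.range (Module.finrank K L), (σ ^ j) (c ⟨0, hn0⟩))
        * (pB.v : B) ^ Module.finrank K L := by
    rw [← hw'pow, hwy, pB.mulpow]
  rw [pB.vpow] at hprod
  have hnormprod : algebraMap K L (Algebra.norm K (c ⟨0, hn0⟩))
      = ∏ j ∈ Finset.range (Module.finrank K L), (σ ^ j) (c ⟨0, hn0⟩) := by
    rw [Algebra.norm_eq_prod_automorphisms]
    have hbij : Function.Bijective (fun i : Fin (Module.finrank K L) => σ ^ (i : ℕ)) := by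
      rw [Fintype.bijective_iff_injective_and_card]
      constructor
      · intro i j hij
        exact Fin.ext (pow_injOn_Iio_orderOf (by rw [hord]; exact i.isLt)
          (by rw [hord]; exact j.isLt) hij)
      · rw [Fintype.card_fin, ← Nat.card_eq_fintype_card, IsGalois.card_aut_eq_finrank]
    rw [← Fin.prod_univ_eq_prod_range (fun j => (σ ^ j) (c ⟨0, hn0⟩)) (Module.finrank K L)]
    exact (Fintype.prod_bijective _ hbij _ _ fun i => rfl).symm
  rw [← hnormprod, AlgHom.commutes, ← map_mul] at hprod
  have hab : a = Algebra.norm K (c ⟨0, hn0⟩) * b := RingHom.injective (algebraMap K B) hprod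
  refine ⟨c ⟨0, hn0⟩, ?_⟩
  rw [hab, mul_div_assoc, div_self hb, mul_one]

end CyclicAlgebraPresentation
/-- `(L/K, σ, a) ≅ (L/K, σ, b)` iff `a/b` is a norm from `L`; here `L/K` is cyclic
with Galois group generated by `σ`. -/
theorem cyclic_algebra_iso_iff_norm {K L A B : Type*} [Field K] [Field L] [Algebra K L]
    [FiniteDimensional K L] [IsGalois K L]
    (σ : L ≃ₐ[K] L) (hσ : ∀ g : L ≃ₐ[K] L, g ∈ Subgroup.zpowers σ)
    [Ring A] [Algebra K A] [Ring B] [Algebra K B]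
    (a b : K) (ha : a ≠ 0) (hb : b ≠ 0)
    (pA : CyclicAlgebraPresentation K L A σ a)
    (pB : CyclicAlgebraPresentation K L B σ b) :
    Nonempty (A ≃ₐ[K] B) ↔ ∃ x : L, Algebra.norm K x = a / b := by
  classical
  constructor
  · rintro ⟨φ⟩
    refine CyclicAlgebraPresentation.norm_of_two hσ pB (φ.toAlgHom.comp pA.ι)
      (Units.map φ.toAlgHom.toRingHom.toMonoidHom pA.v) ?_ ?_ hb
    · intro l
      show φ (↑pA.v) * φ (pA.ι l) * φ (↑pA.v⁻¹) = φ (pA.ι (σ l))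
      rw [← map_mul, ← map_mul, pA.conj l]
    · show φ (↑pA.v) ^ Module.finrank K L = algebraMap K B a
      rw [← map_pow, pA.vpow, AlgEquiv.commutes]
  · rintro ⟨x, hx⟩
    have hx0 : x ≠ 0 := by
      rintro rfl
      rw [Algebra.norm_zero] at hx
      exact (div_ne_zero ha hb) hx.symm
    have hnormx : ∀ m : ℕ, ∏ j ∈ Finset.range m, (σ ^ j) x ≠ 0 := by
      intro m
      apply Finset.prod_ne_zero_iff.mpr
      intro j _
      intro h
      exact hx0 ((map_eq_zero_iff (σ ^ j) (σ ^ j).injective).mp h)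
    set xu : Bˣ := Units.map pB.ι.toRingHom.toMonoidHom (Units.mk0 x hx0) with hxudef
    have hxuval : (xu : B) = pB.ι x := rfl
    have hxuinv : ((xu⁻¹ : Bˣ) : B) = pB.ι x⁻¹ := rfl
    have hpowW : ∀ i : ℕ, ((xu * pB.v : Bˣ) : B) ^ i
        = pB.ι (∏ j ∈ Finset.range i, (σ ^ j) x) * (pB.v : B) ^ i := by
      intro i
      rw [Units.val_mul, hxuval, pB.mulpow]
    refine CyclicAlgebraPresentation.iso_of_same pA
      { ι := pB.ι, v := xu * pB.v, conj := ?_, vpow := ?_, repr := ?_ }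
    · intro l
      rw [Units.val_mul, mul_inv_rev, Units.val_mul, hxuval, hxuinv]
      calc pB.ι x * ↑pB.v * pB.ι l * ((↑pB.v⁻¹ : B) * pB.ι x⁻¹)
          = pB.ι x * ((pB.v : B) * pB.ι l * (↑pB.v⁻¹ : B)) * pB.ι x⁻¹ := by noncomm_ring
        _ = pB.ι x * pB.ι (σ l) * pB.ι x⁻¹ := by rw [pB.conj]
        _ = pB.ι (σ l) := by
            rw [← map_mul, ← map_mul, mul_comm x (σ l), mul_assoc,
              mul_inv_cancel₀ hx0, mul_one]
    · rw [hpowW, pB.vpow, ← norm_prod_aux hσ x, AlgHom.commutes, ← map_mul, hx,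
        div_mul_cancel₀ a hb]
    · intro zz
      obtain ⟨c, hc, hcu⟩ := pB.repr zz
      refine ⟨fun i => c i * (∏ j ∈ Finset.range (i : ℕ), (σ ^ j) x)⁻¹, ?_, ?_⟩
      · rw [hc]
        refine Finset.sum_congr rfl fun i _ => ?_
        rw [hpowW, ← mul_assoc, ← map_mul, inv_mul_cancel_right₀ (hnormx _)]
      · intro c' hc'
        have h2 : zz = ∑ i, pB.ι (c' i * ∏ j ∈ Finset.range (i : ℕ), (σ ^ j) x)
            * (pB.v : B) ^ (i : ℕ) := by
          rw [hc']
          refine Finset.sum_congr rfl fun i _ => ?_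
          rw [hpowW, ← mul_assoc, ← map_mul]
        have h3 := hcu _ h2
        funext i
        have h4 := congrFun h3 i
        rw [← h4, mul_inv_cancel_right₀ (hnormx _)]
end

section
/- Let $L/K$ be cyclic of degree $n$ with group $\langle \sigma \rangle$. The cyclic algebra $(L/K, \sigma, a)$ is isomorphic to the matrix algebra $M_n(K)$ if and only if $a \in N_{L/K}(L^\times)$. -/
open Finset Module

section aux

variable {K L : Type*} [Field K] [Field L] [Algebra K L]
    [FiniteDimensional K L] [IsGalois K L]

lemma CyclicAux.prod_eq_norm (σ : L ≃ₐ[K] L) (hσ : ∀ g : L ≃ₐ[K] L, g ∈ Subgroup.zpowers σ)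
    (x : L) :
    ∏ j ∈ Finset.range (Module.finrank K L), (σ ^ j) x = algebraMap K L (Algebra.norm K x) := by
  have ho : orderOf σ = Module.finrank K L := by
    rw [orderOf_eq_card_of_forall_mem_zpowers hσ,
      IsGalois.card_aut_eq_finrank]
  have hbij : Function.Bijective (fun j : Fin (orderOf σ) => σ ^ (j : ℕ)) := by
    rw [Fintype.bijective_iff_surjective_and_card]
    refine ⟨?_, by simp [ho, ← Nat.card_eq_fintype_card, IsGalois.card_aut_eq_finrank, Nat.card_fin]⟩
    intro g
    obtain ⟨k, hk⟩ := (isOfFinOrder_of_finite σ).mem_powers_iff_mem_zpowers.2 (hσ g)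
    exact ⟨⟨k % orderOf σ, Nat.mod_lt _ (isOfFinOrder_of_finite σ).orderOf_pos⟩,
      by simpa [pow_mod_orderOf] using hk⟩
  calc ∏ j ∈ Finset.range (Module.finrank K L), (σ ^ j) x
      = ∏ j : Fin (orderOf σ), (σ ^ (j : ℕ)) x := by
        rw [← ho]
        exact (Fin.prod_univ_eq_prod_range (fun j => (σ ^ j) x) (orderOf σ)).symm
    _ = ∏ g : L ≃ₐ[K] L, g x := hbij.prod_comp (fun g => g x)
    _ = algebraMap K L (Algebra.norm K x) := (Algebra.norm_eq_prod_automorphisms (K := K) x).symm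

lemma CyclicAux.norm_of_matrix (σ : L ≃ₐ[K] L) (hσ : ∀ g : L ≃ₐ[K] L, g ∈ Subgroup.zpowers σ)
    (a : K)
    (ρ : L →ₐ[K] Matrix (Fin (Module.finrank K L)) (Fin (Module.finrank K L)) K)
    (V : Matrix (Fin (Module.finrank K L)) (Fin (Module.finrank K L)) K)
    (hconj : ∀ l : L, V * ρ l = ρ (σ l) * V)
    (hVn : V ^ (Module.finrank K L) = algebraMap K _ a) :
    ∃ x : L, Algebra.norm K x = a := by
  have hnpos : 0 < Module.finrank K L := finrank_pos
  let f : L →+* Module.End K (Fin (Module.finrank K L) → K) :=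
    { toFun := fun l => (ρ l).mulVecLin
      map_one' := by ext m; simp
      map_mul' := fun l l' => by
        ext m
        simp [Matrix.mulVecLin_mul, Module.End.mul_apply]
      map_zero' := by simp
      map_add' := fun l l' => by simp }
  letI : Module L (Fin (Module.finrank K L) → K) := Module.compHom _ f
  have hsmul : ∀ (l : L) (m : Fin (Module.finrank K L) → K), l • m = (ρ l).mulVec m := fun l m => rfl
  haveI : IsScalarTower K L (Fin (Module.finrank K L) → K) := ⟨fun k l m => by
    rw [hsmul, hsmul, map_smul, Matrix.smul_mulVec]⟩
  haveI : Module.Finite L (Fin (Module.finrank K L) → K) := Module.Finite.of_restrictScalars_finite K L _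
  have htower : Module.finrank K L * Module.finrank L (Fin (Module.finrank K L) → K)
      = Module.finrank K (Fin (Module.finrank K L) → K) :=
    Module.finrank_mul_finrank K L _
  have hMn : Module.finrank K (Fin (Module.finrank K L) → K) = Module.finrank K L := by
    simp [Module.finrank_pi]
  have h1 : Module.finrank L (Fin (Module.finrank K L) → K) = 1 := by
    rw [hMn] at htower
    exact Nat.eq_of_mul_eq_mul_left hnpos (by omega)
  have hm0 : (fun _ => 1 : Fin (Module.finrank K L) → K) ≠ 0 := by
    intro h
    simpa using congrFun h ⟨0, hnpos⟩
  obtain ⟨x, hxm⟩ := (finrank_eq_one_iff_of_nonzero' (fun _ => 1 : Fin (Module.finrank K L) → K) hm0).1 h1 (V.mulVec (fun _ => 1))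
  have hVsl : ∀ (l : L) (m : Fin (Module.finrank K L) → K), V.mulVec (l • m) = (σ l) • V.mulVec m := by
    intro l m
    rw [hsmul, hsmul, Matrix.mulVec_mulVec, hconj, ← Matrix.mulVec_mulVec]
  have key : ∀ i : ℕ, (V ^ i).mulVec ((fun _ => (1:K)) : Fin (Module.finrank K L) → K) = (∏ j ∈ Finset.range i, (σ ^ j) x) • ((fun _ => (1:K)) : Fin (Module.finrank K L) → K) := by
    intro i
    induction i with
    | zero => simp [Matrix.one_mulVec]
    | succ i ih =>
      have hmap : σ (∏ j ∈ Finset.range i, (σ ^ j) x) = ∏ j ∈ Finset.range i, (σ ^ (j + 1)) x := by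
        rw [map_prod]
        exact Finset.prod_congr rfl fun j _ => by rw [pow_succ']; rfl
      rw [pow_succ', ← Matrix.mulVec_mulVec, ih, hVsl, ← hxm, smul_smul, hmap,
        Finset.prod_range_succ']
      simp
  have hfin := key (Module.finrank K L)
  rw [hVn, CyclicAux.prod_eq_norm σ hσ x] at hfin
  have hleft : (algebraMap K (Matrix (Fin (Module.finrank K L)) (Fin (Module.finrank K L)) K) a).mulVec ((fun _ => (1:K)) : Fin (Module.finrank K L) → K) = a • ((fun _ => (1:K)) : Fin (Module.finrank K L) → K) := by
    rw [Algebra.algebraMap_eq_smul_one, Matrix.smul_mulVec, Matrix.one_mulVec]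
  have hright : (algebraMap K L (Algebra.norm K x)) • ((fun _ => (1:K)) : Fin (Module.finrank K L) → K) = (Algebra.norm K x) • ((fun _ => (1:K)) : Fin (Module.finrank K L) → K) :=
    algebraMap_smul L _ ((fun _ => (1:K)) : Fin (Module.finrank K L) → K)
  rw [hleft, hright] at hfin
  refine ⟨x, ?_⟩
  have h0 : (Algebra.norm K x - a) • ((fun _ => (1:K)) : Fin (Module.finrank K L) → K) = (0 : Fin (Module.finrank K L) → K) := by
    rw [sub_smul, hfin, sub_self]
  rcases smul_eq_zero.1 h0 with h | h
  · exact sub_eq_zero.1 h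
  · exact absurd h hm0

lemma CyclicAux.split_of_norm {A : Type*} [Ring A] [Algebra K A]
    (σ : L ≃ₐ[K] L) (hσ : ∀ g : L ≃ₐ[K] L, g ∈ Subgroup.zpowers σ)
    (a : K) (ha : a ≠ 0) (pA : CyclicAlgebraPresentation K L A σ a)
    (x : L) (hx : Algebra.norm K x = a) :
    Nonempty (A ≃ₐ[K] Matrix (Fin (Module.finrank K L)) (Fin (Module.finrank K L)) K) := by
  have hnpos : 0 < Module.finrank K L := finrank_pos
  have hx0 : x ≠ 0 := fun h => ha (by rw [← hx, h, Algebra.norm_zero])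
  have ho : orderOf σ = Module.finrank K L := by
    rw [orderOf_eq_card_of_forall_mem_zpowers hσ,
      IsGalois.card_aut_eq_finrank]
  have hσn : σ ^ (Module.finrank K L) = 1 := by rw [← ho]; exact pow_orderOf_eq_one σ
  -- the twisted multiplication operator
  set T : Module.End K L := Algebra.lmul K L x * σ.toLinearMap with hTdef
  have hT : ∀ y : L, T y = x * σ y := fun y => rfl
  have hTl : ∀ l : L, T * Algebra.lmul K L l = Algebra.lmul K L (σ l) * T := by
    intro l
    apply LinearMap.ext
    intro y
    simp only [Module.End.mul_apply, hT, Algebra.lmul, AlgHom.coe_mk, Module.End.mul_apply]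
    show x * σ (l * y) = σ l * (x * σ y)
    rw [map_mul]; ring
  have hmapσ : ∀ (i : ℕ), σ (∏ j ∈ Finset.range i, (σ ^ j) x) = ∏ j ∈ Finset.range i, (σ ^ (j + 1)) x := by
    intro i
    rw [map_prod]
    exact Finset.prod_congr rfl fun j _ => by rw [pow_succ']; rfl
  have hTi : ∀ (i : ℕ) (y : L), (T ^ i) y = (∏ j ∈ Finset.range i, (σ ^ j) x) * (σ ^ i) y := by
    intro i
    induction i with
    | zero => intro y; simp
    | succ i ih =>
      intro y
      rw [pow_succ', Module.End.mul_apply, ih, hT, map_mul, hmapσ, Finset.prod_range_succ']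
      have h1 : σ ((σ ^ i) y) = (σ ^ (i + 1)) y := by rw [pow_succ']; rfl
      rw [h1]
      simp only [pow_zero, AlgEquiv.one_apply]
      ring
  have hTn : T ^ (Module.finrank K L) = Algebra.lmul K L (algebraMap K L a) := by
    apply LinearMap.ext
    intro y
    rw [hTi, CyclicAux.prod_eq_norm σ hσ x, hx, hσn]
    simp only [AlgEquiv.one_apply]
    rfl
  -- representation machinery
  let r : A → (Fin (Module.finrank K L) → L) := fun z => (pA.repr z).choose
  have hr : ∀ z : A, z = ∑ i, pA.ι (r z i) * (pA.v : A) ^ (i : ℕ) :=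
    fun z => (pA.repr z).choose_spec.1
  have hru : ∀ (z : A) (c : Fin (Module.finrank K L) → L),
      z = ∑ i, pA.ι (c i) * (pA.v : A) ^ (i : ℕ) → c = r z :=
    fun z c h => (pA.repr z).choose_spec.2 c h
  let φc : (Fin (Module.finrank K L) → L) → Module.End K L :=
    fun c => ∑ i, Algebra.lmul K L (c i) * T ^ (i : ℕ)
  let ψ : A → Module.End K L := fun z => φc (r z)
  have hψz : ∀ z : A, ψ z = ∑ i, Algebra.lmul K L (r z i) * T ^ (i : ℕ) := fun z => rfl
  have hψc : ∀ c : Fin (Module.finrank K L) → L,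
      ψ (∑ i, pA.ι (c i) * (pA.v : A) ^ (i : ℕ)) = φc c := by
    intro c
    have h := hru _ c rfl
    show φc (r (∑ i, pA.ι (c i) * (pA.v : A) ^ (i : ℕ))) = φc c
    rw [← h]
  have hvl : ∀ l : L, (pA.v : A) * pA.ι l = pA.ι (σ l) * (pA.v : A) := by
    intro l
    rw [← pA.conj l, mul_assoc ((pA.v : A) * pA.ι l), Units.inv_mul, mul_one]
  -- linearity of ψ
  have hψadd : ∀ z w : A, ψ (z + w) = ψ z + ψ w := by
    intro z w
    have h1 : z + w = ∑ i, pA.ι ((r z + r w) i) * (pA.v : A) ^ (i : ℕ) := by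
      conv_lhs => rw [hr z, hr w]
      simp only [Pi.add_apply, map_add, add_mul, Finset.sum_add_distrib]
    have h2 := hru _ _ h1
    show φc (r (z + w)) = φc (r z) + φc (r w)
    rw [← h2]
    simp only [φc, Pi.add_apply, map_add, add_mul, Finset.sum_add_distrib]
  have hψsmul : ∀ (k : K) (z : A), ψ (k • z) = k • ψ z := by
    intro k z
    have h1 : k • z = ∑ i, pA.ι ((k • r z) i) * (pA.v : A) ^ (i : ℕ) := by
      conv_lhs => rw [hr z]
      simp only [Pi.smul_apply, map_smul, smul_mul_assoc, Finset.smul_sum]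
    have h2 := hru _ _ h1
    show φc (r (k • z)) = k • φc (r z)
    rw [← h2]
    simp only [φc, Pi.smul_apply, map_smul, smul_mul_assoc, Finset.smul_sum]
  let ψL : A →ₗ[K] Module.End K L :=
    { toFun := ψ, map_add' := hψadd, map_smul' := fun k z => by simpa using hψsmul k z }
  have hψsum : ∀ f : Fin (Module.finrank K L) → A, ψ (∑ i, f i) = ∑ i, ψ (f i) :=
    fun f => map_sum ψL f Finset.univ
  -- values on monomials
  have hrep : ∀ (l : L) (k : ℕ) (hk : k < Module.finrank K L),
      pA.ι l * (pA.v : A) ^ k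
        = ∑ i : Fin (Module.finrank K L),
            pA.ι (if (i : ℕ) = k then l else 0) * (pA.v : A) ^ (i : ℕ) := by
    intro l k hk
    have h : ∀ i : Fin (Module.finrank K L),
        pA.ι (if (i : ℕ) = k then l else 0) * (pA.v : A) ^ (i : ℕ)
          = if i = ⟨k, hk⟩ then pA.ι l * (pA.v : A) ^ k else 0 := by
      intro i
      by_cases hik : i = ⟨k, hk⟩
      · subst hik; simp
      · have h2 : ¬((i : ℕ) = k) := fun hc => hik (Fin.ext hc)
        simp [hik, h2]
    rw [Finset.sum_congr rfl fun i _ => h i, Finset.sum_ite_eq' Finset.univ,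
      if_pos (Finset.mem_univ _)]
  have hφδ : ∀ (l : L) (k : ℕ) (hk : k < Module.finrank K L),
      φc (fun i => if (i : ℕ) = k then l else 0) = Algebra.lmul K L l * T ^ k := by
    intro l k hk
    have h : ∀ i : Fin (Module.finrank K L),
        Algebra.lmul K L (if (i : ℕ) = k then l else 0) * T ^ (i : ℕ)
          = if i = ⟨k, hk⟩ then Algebra.lmul K L l * T ^ k else 0 := by
      intro i
      by_cases hik : i = ⟨k, hk⟩
      · subst hik; simp
      · have h2 : ¬((i : ℕ) = k) := fun hc => hik (Fin.ext hc)
        simp [hik, h2]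
    show (∑ i, Algebra.lmul K L ((fun i : Fin (Module.finrank K L) =>
        if (i : ℕ) = k then l else 0) i) * T ^ (i : ℕ)) = _
    rw [Finset.sum_congr rfl fun i _ => h i, Finset.sum_ite_eq' Finset.univ,
      if_pos (Finset.mem_univ _)]
  have hψιk : ∀ (l : L) (k : ℕ) (hk : k < Module.finrank K L),
      ψ (pA.ι l * (pA.v : A) ^ k) = Algebra.lmul K L l * T ^ k := by
    intro l k hk
    rw [hrep l k hk, hψc, hφδ l k hk]
  have hvn : (pA.v : A) ^ (Module.finrank K L) = pA.ι (algebraMap K L a) := by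
    rw [pA.vpow]; exact (pA.ι.commutes a).symm
  have hψιk' : ∀ (l : L) (k : ℕ), k ≤ Module.finrank K L →
      ψ (pA.ι l * (pA.v : A) ^ k) = Algebra.lmul K L l * T ^ k := by
    intro l k hk
    rcases lt_or_eq_of_le hk with h | h
    · exact hψιk l k h
    · subst h
      rw [hvn, ← map_mul]
      have h0 := hψιk (l * algebraMap K L a) 0 hnpos
      rw [pow_zero, mul_one] at h0
      rw [h0, map_mul, hTn, pow_zero, mul_one]
  -- ψ intertwines multiplication by v and by ι l
  have hψv : ∀ z : A, ψ ((pA.v : A) * z) = T * ψ z := by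
    intro z
    have hz : (pA.v : A) * z
        = ∑ i : Fin (Module.finrank K L), pA.ι (σ (r z i)) * (pA.v : A) ^ ((i : ℕ) + 1) := by
      conv_lhs => rw [hr z]
      rw [Finset.mul_sum]
      refine Finset.sum_congr rfl fun i _ => ?_
      rw [← mul_assoc, hvl, mul_assoc, ← pow_succ']
    rw [hz, hψsum]
    have h1 : ∀ i : Fin (Module.finrank K L),
        ψ (pA.ι (σ (r z i)) * (pA.v : A) ^ ((i : ℕ) + 1))
          = Algebra.lmul K L (σ (r z i)) * T ^ ((i : ℕ) + 1) :=
      fun i => hψιk' (σ (r z i)) ((i : ℕ) + 1) i.isLt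
    rw [Finset.sum_congr rfl fun i _ => h1 i, hψz z, Finset.mul_sum]
    refine Finset.sum_congr rfl fun i _ => ?_
    rw [← mul_assoc, hTl, mul_assoc, ← pow_succ']
  have hψvk : ∀ (k : ℕ) (z : A), ψ ((pA.v : A) ^ k * z) = T ^ k * ψ z := by
    intro k
    induction k with
    | zero => intro z; simp
    | succ k ih =>
      intro z
      rw [pow_succ', mul_assoc, hψv, ih, ← mul_assoc, ← pow_succ']
  have hψι : ∀ (l : L) (z : A), ψ (pA.ι l * z) = Algebra.lmul K L l * ψ z := by
    intro l z
    have hz : pA.ι l * z = ∑ i, pA.ι (l * r z i) * (pA.v : A) ^ (i : ℕ) := by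
      conv_lhs => rw [hr z]
      rw [Finset.mul_sum]
      exact Finset.sum_congr rfl fun i _ => by rw [← mul_assoc, ← map_mul]
    have h2 := hru _ _ hz
    show φc (r (pA.ι l * z)) = _
    rw [← h2]
    show (∑ i, Algebra.lmul K L ((fun i => l * r z i) i) * T ^ (i : ℕ)) = _
    rw [hψz z, Finset.mul_sum]
    exact Finset.sum_congr rfl fun i _ => by rw [map_mul, mul_assoc]
  -- ψ is multiplicative
  have hψmul : ∀ z w : A, ψ (z * w) = ψ z * ψ w := by
    intro z w
    conv_lhs => rw [hr z, Finset.sum_mul]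
    have h1 : ∀ i : Fin (Module.finrank K L),
        pA.ι (r z i) * (pA.v : A) ^ (i : ℕ) * w = pA.ι (r z i) * ((pA.v : A) ^ (i : ℕ) * w) :=
      fun i => by rw [mul_assoc]
    rw [Finset.sum_congr rfl fun i _ => h1 i, hψsum]
    have h2 : ∀ i : Fin (Module.finrank K L),
        ψ (pA.ι (r z i) * ((pA.v : A) ^ (i : ℕ) * w))
          = Algebra.lmul K L (r z i) * T ^ (i : ℕ) * ψ w := by
      intro i
      rw [hψι, hψvk, ← mul_assoc]
    rw [Finset.sum_congr rfl fun i _ => h2 i, hψz z, Finset.sum_mul]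
  have hψone : ψ 1 = 1 := by
    have h := hψιk 1 0 hnpos
    simp only [map_one, pow_zero, mul_one, one_mul] at h
    exact h
  let ψA : A →ₐ[K] Module.End K L := AlgHom.ofLinearMap ψL hψone hψmul
  -- injectivity via Dedekind independence of characters
  have hinj : Function.Injective ψA := by
    rw [injective_iff_map_eq_zero]
    intro z hz
    have hp : ∀ i : ℕ, (∏ j ∈ Finset.range i, (σ ^ j) x) ≠ 0 := by
      intro i
      refine Finset.prod_ne_zero_iff.2 fun j _ => ?_
      intro hj
      exact hx0 ((σ ^ j).injective (by simpa using hj))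
    have hz' : ∀ y : L,
        ∑ i : Fin (Module.finrank K L),
          (r z i * ∏ j ∈ Finset.range (i : ℕ), (σ ^ j) x) * (σ ^ (i : ℕ)) y = 0 := by
      intro y
      have h0 : (ψ z) y = 0 := by
        have : ψA z = 0 := hz
        rw [show ψ z = ψA z from rfl, this]
        rfl
      rw [hψz z] at h0
      rw [LinearMap.sum_apply] at h0
      rw [← h0]
      refine Finset.sum_congr rfl fun i _ => ?_
      rw [Module.End.mul_apply, hTi]
      show (r z i * ∏ j ∈ Finset.range (i : ℕ), (σ ^ j) x) * (σ ^ (i : ℕ)) y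
        = r z i * ((∏ j ∈ Finset.range (i : ℕ), (σ ^ j) x) * (σ ^ (i : ℕ)) y)
      ring
    let F : Fin (Module.finrank K L) → (L →* L) :=
      fun i => ((σ ^ (i : ℕ)).toAlgHom.toRingHom.toMonoidHom : L →* L)
    have hFinj : Function.Injective F := by
      intro i j hij
      have heq : σ ^ (i : ℕ) = σ ^ (j : ℕ) := by
        apply AlgEquiv.ext
        intro y
        exact DFunLike.congr_fun hij y
      exact Fin.ext (pow_injOn_Iio_orderOf
        (by rw [ho]; exact i.isLt) (by rw [ho]; exact j.isLt) heq)
    have hli := (linearIndependent_monoidHom L L).comp F hFinj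
    have hz0 := Fintype.linearIndependent_iff.1 hli
      (fun i => r z i * ∏ j ∈ Finset.range (i : ℕ), (σ ^ j) x) ?_
    · have hc0 : ∀ i, r z i = 0 := by
        intro i
        rcases mul_eq_zero.1 (hz0 i) with h | h
        · exact h
        · exact absurd h (hp _)
      rw [hr z]
      simp [hc0]
    · funext y
      simp only [Finset.sum_apply, Pi.smul_apply, Function.comp_apply, smul_eq_mul, Pi.zero_apply]
      exact hz' y
  -- dimension count
  let Bl : (Fin (Module.finrank K L) → L) →ₗ[K] A :=
    { toFun := fun c => ∑ i, pA.ι (c i) * (pA.v : A) ^ (i : ℕ)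
      map_add' := fun c d => by
        simp only [Pi.add_apply, map_add, add_mul, Finset.sum_add_distrib]
      map_smul' := fun k c => by
        simp only [Pi.smul_apply, map_smul, smul_mul_assoc, Finset.smul_sum, RingHom.id_apply] }
  have hBbij : Function.Bijective Bl := by
    constructor
    · intro c d h
      have hc := hru (Bl c) c rfl
      have hd := hru (Bl d) d rfl
      rw [hc, hd, h]
    · intro z
      exact ⟨r z, (hr z).symm⟩
  let Be : (Fin (Module.finrank K L) → L) ≃ₗ[K] A := LinearEquiv.ofBijective Bl hBbij
  haveI : FiniteDimensional K A := Module.Finite.equiv Be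
  have hdimA : Module.finrank K A = Module.finrank K L * Module.finrank K L := by
    rw [← LinearEquiv.finrank_eq Be, Module.finrank_pi_fintype]
    simp [mul_comm]
  have hdimE : Module.finrank K (Module.End K L) = Module.finrank K L * Module.finrank K L :=
    Module.finrank_linearMap K K L L
  have hsurj : Function.Surjective ψA :=
    (LinearMap.injective_iff_surjective_of_finrank_eq_finrank
      (by rw [hdimA, hdimE]) (f := ψL)).1 hinj
  exact ⟨(AlgEquiv.ofBijective ψA ⟨hinj, hsurj⟩).trans (algEquivMatrix (Module.finBasis K L))⟩

end aux

/-- The cyclic algebra `(L/K, σ, a)`, with `L/K` cyclic of degree `n` and Galois group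
generated by `σ`, is split (isomorphic to `Mₙ(K)`) iff `a ∈ N_{L/K}(L^×)`. -/
theorem cyclic_algebra_split_iff_norm {K L A : Type*} [Field K] [Field L] [Algebra K L]
    [FiniteDimensional K L] [IsGalois K L] {n : ℕ} (hn : Module.finrank K L = n)
    (σ : L ≃ₐ[K] L) (hσ : ∀ g : L ≃ₐ[K] L, g ∈ Subgroup.zpowers σ)
    [Ring A] [Algebra K A]
    (a : K) (ha : a ≠ 0)
    (pA : CyclicAlgebraPresentation K L A σ a) :
    Nonempty (A ≃ₐ[K] Matrix (Fin n) (Fin n) K) ↔ ∃ x : L, Algebra.norm K x = a := by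
  subst hn
  constructor
  · rintro ⟨e⟩
    have hvl : ∀ l : L, (pA.v : A) * pA.ι l = pA.ι (σ l) * (pA.v : A) := by
      intro l
      rw [← pA.conj l, mul_assoc ((pA.v : A) * pA.ι l), Units.inv_mul, mul_one]
    refine CyclicAux.norm_of_matrix σ hσ a (e.toAlgHom.comp pA.ι) (e pA.v) ?_ ?_
    · intro l
      have h : e ((pA.v : A) * pA.ι l) = e (pA.ι (σ l) * (pA.v : A)) := by rw [hvl]
      simpa [map_mul] using h
    · rw [← map_pow, pA.vpow, AlgEquiv.commutes]
  · rintro ⟨x, hx⟩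
    exact CyclicAux.split_of_norm σ hσ a ha pA x hx
end

section
/- Let $A$ be a central simple $K$-algebra, $L \subseteq A$ a subfield cyclic Galois over $K$ of degree $n_0$ with group $\langle \sigma \rangle$, $B = Z_A(L)$ its centralizer, and $v \in A^\times$ an element with $v x v^{-1} = \sigma(x)$ for all $x \in L$. Then $v B v^{-1} = B$, $v^{n_0} \in B^\times$, and $A = \bigoplus_{i=0}^{n_0 - 1} B v^i$ as a $K$-vector space. -/
open Polynomial

section Aux

variable {K L A : Type*} [Field K] [Field L] [Algebra K L]
  [Ring A] [Algebra K A] (ι : L →ₐ[K] A) (θ : L)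

/-- Left multiplication by `ι l` as a ring hom into endomorphisms. -/
noncomputable def rhoAux : L →+* Module.End K A :=
  ((Algebra.lmul K A).comp ι).toRingHom

lemma rhoAux_apply (l : L) (x : A) : rhoAux ι l x = ι l * x := rfl

/-- Right multiplication by `ι θ`. -/
noncomputable def RAux : Module.End K A := LinearMap.mulRight K (ι θ)

lemma RAux_apply (x : A) : RAux ι θ x = x * ι θ := rfl

lemma commAux (l : L) : Commute (rhoAux ι l) (RAux ι θ) := by
  apply LinearMap.ext; intro x
  simp only [Module.End.mul_apply, rhoAux_apply, RAux_apply, mul_assoc]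

noncomputable def EAux (q : L[X]) : Module.End K A := eval₂ (rhoAux ι) (RAux ι θ) q

lemma EAux_mul (q₁ q₂ : L[X]) : EAux ι θ (q₁ * q₂) = EAux ι θ q₁ * EAux ι θ q₂ :=
  eval₂_mul_noncomm _ _ fun _ => commAux ι θ _

lemma RAux_pow (n : ℕ) (x : A) : (RAux ι θ ^ n) x = x * (ι θ) ^ n := by
  rw [RAux, LinearMap.pow_mulRight, LinearMap.mulRight_apply]

lemma aevalRAux (q : K[X]) (x : A) :
    (Polynomial.aeval (RAux ι θ) q) x = x * (Polynomial.aeval (ι θ) q) := by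
  induction q using Polynomial.induction_on' with
  | add p q hp hq => simp [map_add, LinearMap.add_apply, hp, hq, mul_add]
  | monomial n a =>
      rw [aeval_monomial, aeval_monomial, Module.End.mul_apply, RAux_pow,
        Module.algebraMap_end_apply, ← Algebra.smul_def, mul_smul_comm]

lemma EAux_map (q : K[X]) : EAux ι θ (q.map (algebraMap K L)) = Polynomial.aeval (RAux ι θ) q := by
  rw [EAux, eval₂_map, aeval_def]
  congr 1
  refine RingHom.ext fun k => LinearMap.ext fun x => ?_
  rw [RingHom.comp_apply, rhoAux_apply, AlgHom.commutes, Module.algebraMap_end_apply,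
    Algebra.smul_def]

lemma EAux_eig (q : L[X]) (z : A) (l : L) (hz : z * ι θ = ι l * z) :
    EAux ι θ q z = ι (q.eval l) * z := by
  have hpow : ∀ n : ℕ, z * (ι θ) ^ n = ι (l ^ n) * z := by
    intro n
    induction n with
    | zero => simp
    | succ n ih =>
        rw [pow_succ, pow_succ, ← mul_assoc, ih, map_mul, mul_assoc, hz, ← mul_assoc,
          ← map_mul]
  induction q using Polynomial.induction_on' with
  | add p q hp hq =>
      rw [EAux, eval₂_add, LinearMap.add_apply, ← EAux.eq_def, ← EAux.eq_def, hp, hq,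
        eval_add, map_add, add_mul]
  | monomial n a =>
      rw [EAux, eval₂_monomial, Module.End.mul_apply, RAux_pow, hpow, eval_monomial,
        rhoAux_apply, ← mul_assoc, ← map_mul]

end Aux

section Aux2

variable {K L : Type*} [Field K] [Field L] [Algebra K L] [FiniteDimensional K L]

omit [FiniteDimensional K L] in
lemma algEquiv_eq_of_adjoin (θ : L) (hadj : Algebra.adjoin K {θ} = ⊤)
    (g h : L ≃ₐ[K] L) (hgh : g θ = h θ) : g = h := by
  ext x
  have hx : x ∈ Algebra.adjoin K {θ} := hadj ▸ Algebra.mem_top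
  induction hx using Algebra.adjoin_induction with
  | mem y hy => rw [Set.mem_singleton_iff] at hy; rw [hy]; exact hgh
  | algebraMap r => simp
  | add a b _ _ ha hb => rw [map_add, map_add, ha, hb]
  | mul a b _ _ ha hb => rw [map_mul, map_mul, ha, hb]

lemma prodNodes (θ : L) (hθ : IntermediateField.adjoin K {θ} = ⊤) {n : ℕ}
    (hn : Module.finrank K L = n) (r : Fin n → L) (hr : Function.Injective r)
    (hroot : ∀ i, Polynomial.aeval (r i) (minpoly K θ) = 0) :
    (minpoly K θ).map (algebraMap K L) = ∏ i, (X - C (r i)) := by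
  have hint : IsIntegral K θ := Algebra.IsIntegral.isIntegral θ
  have hmonic : ((minpoly K θ).map (algebraMap K L)).Monic := (minpoly.monic hint).map _
  have hPmonic : (∏ i : Fin n, (X - C (r i))).Monic :=
    monic_prod_of_monic _ _ fun i _ => monic_X_sub_C _
  have hdvd : (∏ i : Fin n, (X - C (r i))) ∣ (minpoly K θ).map (algebraMap K L) := by
    refine Finset.prod_dvd_of_coprime ?_ fun i _ => ?_
    · exact (Polynomial.pairwise_coprime_X_sub_C hr).set_pairwise _
    · rw [dvd_iff_isRoot, IsRoot.def, eval_map, ← aeval_def, hroot]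
  have hdeg : ((minpoly K θ).map (algebraMap K L)).natDegree ≤
      (∏ i : Fin n, (X - C (r i))).natDegree := by
    rw [natDegree_map, natDegree_prod _ _ fun i _ => X_sub_C_ne_zero (r i)]
    simp only [natDegree_X_sub_C, Finset.sum_const, Finset.card_univ, Fintype.card_fin,
      smul_eq_mul, mul_one]
    rw [← IntermediateField.adjoin.finrank hint, hθ, IntermediateField.finrank_top', hn]
  exact eq_of_monic_of_dvd_of_natDegree_le hPmonic hmonic hdvd hdeg

end Aux2

/-- Structure of a generalized cyclic algebra: if `A` is a finite-dimensional central
simple `K`-algebra, `L ⊆ A` (via `ι`) a subfield cyclic of degree `n₀` over `K` with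
`Gal(L/K) = ⟨σ⟩`, `B = Z_A(L)` the centralizer, and `v ∈ A^×` satisfies
`v ι(l) v⁻¹ = ι(σ l)`, then `vBv⁻¹ = B`, `v^{n₀} ∈ B^×`, and
`A = ⊕_{i<n₀} B vⁱ` as a `K`-vector space. -/
theorem generalized_cyclic_algebra_structure {K L A : Type*} [Field K] [Field L]
    [Algebra K L] [FiniteDimensional K L] [IsGalois K L]
    {n₀ : ℕ} (hn₀ : Module.finrank K L = n₀)
    (σ : L ≃ₐ[K] L) (hσ : ∀ g : L ≃ₐ[K] L, g ∈ Subgroup.zpowers σ)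
    [Ring A] [Algebra K A] [Algebra.IsCentral K A] [IsSimpleRing A] [FiniteDimensional K A]
    (ι : L →ₐ[K] A)
    (B : Subalgebra K A) (hB : B = Subalgebra.centralizer K (Set.range ι))
    (v : Aˣ) (hv : ∀ l : L, (v : A) * ι l * (↑v⁻¹ : A) = ι (σ l)) :
    ((fun x : A => (v : A) * x * (↑v⁻¹ : A)) '' (B : Set A) = (B : Set A)) ∧
    ((v : A) ^ n₀ ∈ B ∧ (↑v⁻¹ : A) ^ n₀ ∈ B) ∧
    (∀ x : A, ∃! c : Fin n₀ → B, x = ∑ i, (c i : A) * (v : A) ^ (i : ℕ)) := by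
  subst hB
  set u : A := (v : A) with hu
  set w : A := (↑v⁻¹ : A) with hw
  have huw : u * w = 1 := v.mul_inv
  have hwu : w * u = 1 := v.inv_mul
  -- basic commutation identities
  have hσinv : ∀ l : L, σ (σ⁻¹ l) = l := fun l => by
    rw [← AlgEquiv.mul_apply, mul_inv_cancel, AlgEquiv.one_apply]
  have hinvσ : ∀ l : L, σ⁻¹ (σ l) = l := fun l => by
    rw [← AlgEquiv.mul_apply, inv_mul_cancel, AlgEquiv.one_apply]
  have hvl : ∀ l : L, u * ι l = ι (σ l) * u := fun l => by
    calc u * ι l = u * ι l * (w * u) := by rw [hwu, mul_one]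
    _ = (u * ι l * w) * u := by simp only [mul_assoc]
    _ = ι (σ l) * u := by rw [hv l]
  have hwl : ∀ l : L, w * ι l = ι (σ⁻¹ l) * w := fun l => by
    have h := hv (σ⁻¹ l)
    rw [hσinv] at h
    calc w * ι l = w * (u * ι (σ⁻¹ l) * w) := by rw [h]
    _ = (w * u) * ι (σ⁻¹ l) * w := by simp only [mul_assoc]
    _ = ι (σ⁻¹ l) * w := by rw [hwu, one_mul]
  have hupow : ∀ (k : ℕ) (l : L), u ^ k * ι l = ι ((σ ^ k) l) * u ^ k := by
    intro k
    induction k with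
    | zero => simp
    | succ k ih =>
        intro l
        rw [pow_succ, mul_assoc, hvl, ← mul_assoc, ih, pow_succ, AlgEquiv.mul_apply,
          mul_assoc]
  have hwpow : ∀ (k : ℕ) (l : L), w ^ k * ι l = ι ((σ⁻¹ ^ k) l) * w ^ k := by
    intro k
    induction k with
    | zero => simp
    | succ k ih =>
        intro l
        rw [pow_succ, mul_assoc, hwl, ← mul_assoc, ih, pow_succ, AlgEquiv.mul_apply,
          mul_assoc]
  have hwu_pow : ∀ k : ℕ, w ^ k * u ^ k = 1 := by
    intro k
    induction k with
    | zero => simp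
    | succ k ih => rw [pow_succ w, pow_succ' u, mul_assoc, ← mul_assoc w u, hwu, one_mul, ih]
  have huw_pow : ∀ k : ℕ, u ^ k * w ^ k = 1 := by
    intro k
    induction k with
    | zero => simp
    | succ k ih => rw [pow_succ u, pow_succ' w, mul_assoc, ← mul_assoc u w, huw, one_mul, ih]
  have hmemB : ∀ a : A, (∀ l : L, ι l * a = a * ι l) →
      a ∈ Subalgebra.centralizer K (Set.range ι) := fun a ha =>
    (Subalgebra.mem_centralizer_iff K).mpr (by rintro g ⟨l, rfl⟩; exact ha l)
  have hmemB' : ∀ a : A, a ∈ Subalgebra.centralizer K (Set.range ι) →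
      ∀ l : L, ι l * a = a * ι l := fun a ha l =>
    (Subalgebra.mem_centralizer_iff K).mp ha _ ⟨l, rfl⟩
  -- order of σ
  have hord : orderOf σ = n₀ := by
    have h1 : Subgroup.zpowers σ = ⊤ := by rw [Subgroup.eq_top_iff']; exact hσ
    have h2 := Nat.card_zpowers σ
    rw [h1, Subgroup.card_top, IsGalois.card_aut_eq_finrank,
      hn₀] at h2
    exact h2.symm
  have hσn : σ ^ n₀ = 1 := by rw [← hord]; exact pow_orderOf_eq_one σ
  refine ⟨?_, ⟨?_, ?_⟩, ?_⟩
  · -- conjugation preserves B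
    ext a
    simp only [Set.mem_image, SetLike.mem_coe]
    constructor
    · rintro ⟨b, hb, rfl⟩
      refine hmemB _ fun l => ?_
      have hb' := hmemB' b hb
      calc ι l * (u * b * w) = (ι l * u) * b * w := by simp only [mul_assoc]
      _ = (u * ι (σ⁻¹ l)) * b * w := by rw [hvl, hσinv]
      _ = u * (ι (σ⁻¹ l) * b) * w := by simp only [mul_assoc]
      _ = u * (b * ι (σ⁻¹ l)) * w := by rw [hb']
      _ = u * b * (ι (σ⁻¹ l) * w) := by simp only [mul_assoc]
      _ = u * b * (w * ι l) := by rw [hwl]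
      _ = u * b * w * ι l := by simp only [mul_assoc]
    · intro ha
      refine ⟨w * a * u, ?_, ?_⟩
      · refine hmemB _ fun l => ?_
        have ha' := hmemB' a ha
        calc ι l * (w * a * u) = (ι l * w) * a * u := by simp only [mul_assoc]
        _ = (w * ι (σ l)) * a * u := by rw [hwl, hinvσ]
        _ = w * (ι (σ l) * a) * u := by simp only [mul_assoc]
        _ = w * (a * ι (σ l)) * u := by rw [ha']
        _ = w * a * (ι (σ l) * u) := by simp only [mul_assoc]
        _ = w * a * (u * ι l) := by rw [hvl]
        _ = w * a * u * ι l := by simp only [mul_assoc]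
      · show u * (w * a * u) * w = a
        calc u * (w * a * u) * w = (u * w) * a * (u * w) := by simp only [mul_assoc]
        _ = a := by rw [huw, one_mul, mul_one]
  · -- u ^ n₀ ∈ B
    refine hmemB _ fun l => ?_
    rw [hupow n₀ l, hσn, AlgEquiv.one_apply]
  · -- w ^ n₀ ∈ B
    refine hmemB _ fun l => ?_
    rw [hwpow n₀ l, inv_pow, hσn, inv_one, AlgEquiv.one_apply]
  · -- the decomposition
    intro x
    -- Galois / primitive element data
    obtain ⟨θ, hθ⟩ := Field.exists_primitive_element K L
    have hint : IsIntegral K θ := Algebra.IsIntegral.isIntegral θ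
    have hadj : Algebra.adjoin K {θ} = ⊤ := by
      have h := IntermediateField.adjoin_simple_toSubalgebra_of_isAlgebraic (F := K) (α := θ) hint.isAlgebraic
      rw [hθ] at h
      rw [← h, IntermediateField.top_toSubalgebra]
    set r : Fin n₀ → L := fun i => (σ ^ (i : ℕ)) θ with hr
    have hrinj : Function.Injective r := by
      intro i j hij
      have hgh : σ ^ (i : ℕ) = σ ^ (j : ℕ) := algEquiv_eq_of_adjoin θ hadj _ _ hij
      exact Fin.ext (pow_injOn_Iio_orderOf (by rw [hord]; exact i.isLt)
        (by rw [hord]; exact j.isLt) hgh)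
    have hroot : ∀ i, Polynomial.aeval (r i) (minpoly K θ) = 0 := fun i => by
      rw [hr]
      rw [aeval_algHom_apply, minpoly.aeval, map_zero]
    have hP : (minpoly K θ).map (algebraMap K L) = ∏ i, (X - C (r i)) :=
      prodNodes θ hθ hn₀ r hrinj hroot
    have hEP : EAux ι θ ((minpoly K θ).map (algebraMap K L)) = 0 := by
      rw [EAux_map]
      apply LinearMap.ext; intro z
      rw [aevalRAux, aeval_algHom_apply, minpoly.aeval, map_zero, mul_zero,
        LinearMap.zero_apply]
    have hn₀pos : 0 < n₀ := hn₀ ▸ Module.finrank_pos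
    haveI : Nonempty (Fin n₀) := Fin.pos_iff_nonempty.mp hn₀pos
    set Bp : Fin n₀ → L[X] := fun i => Lagrange.basis Finset.univ r i with hBp
    set y : Fin n₀ → A := fun i => EAux ι θ (Bp i) x with hy
    have hsum : ∑ i, y i = x := by
      have h1 : ∑ i, EAux ι θ (Bp i) = 1 := by
        simp only [EAux]
        rw [← eval₂_finset_sum, hBp, Lagrange.sum_basis hrinj.injOn Finset.univ_nonempty,
          eval₂_one]
      calc ∑ i, y i = (∑ i, EAux ι θ (Bp i)) x := by rw [LinearMap.sum_apply]
      _ = x := by rw [h1, Module.End.one_apply]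
    have heig : ∀ i, y i * ι θ = ι (r i) * y i := by
      intro i
      have hdvd : (∏ j, (X - C (r j))) ∣ (X - C (r i)) * Bp i := by
        refine Finset.prod_dvd_of_coprime
          ((Polynomial.pairwise_coprime_X_sub_C hrinj).set_pairwise _) fun j _ => ?_
        rw [dvd_iff_isRoot, IsRoot.def, eval_mul]
        by_cases hji : j = i
        · subst hji; rw [eval_sub, eval_X, eval_C, sub_self, zero_mul]
        · rw [hBp, Lagrange.eval_basis_of_ne (fun h => hji h.symm) (Finset.mem_univ j),
            mul_zero]
      obtain ⟨q, hq⟩ := hdvd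
      have h0 : EAux ι θ ((X - C (r i)) * Bp i) = 0 := by
        rw [hq, EAux_mul, ← hP, hEP, zero_mul]
      have h1 : EAux ι θ ((X - C (r i)) * Bp i)
          = (RAux ι θ - rhoAux ι (r i)) * EAux ι θ (Bp i) := by
        rw [EAux_mul]
        congr 1
        simp only [EAux]
        rw [eval₂_sub, eval₂_X, eval₂_C]
      have h2 : ((RAux ι θ - rhoAux ι (r i)) * EAux ι θ (Bp i)) x = 0 := by
        rw [← h1, h0, LinearMap.zero_apply]
      rw [Module.End.mul_apply, LinearMap.sub_apply, RAux_apply, rhoAux_apply] at h2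
      have h3 : y i * ι θ - ι (r i) * y i = 0 := h2
      exact sub_eq_zero.mp h3
    have heig' : ∀ (i : Fin n₀) (l : L), y i * ι l = ι ((σ ^ (i : ℕ)) l) * y i := by
      intro i
      let S : Subalgebra K L :=
        { carrier := {l | y i * ι l = ι ((σ ^ (i : ℕ)) l) * y i}
          mul_mem' := by
            intro a b ha hb
            simp only [Set.mem_setOf_eq] at *
            rw [map_mul, map_mul, ← mul_assoc, ha, mul_assoc, hb, map_mul, mul_assoc]
          one_mem' := by simp
          add_mem' := by
            intro a b ha hb
            simp only [Set.mem_setOf_eq] at *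
            rw [map_add, map_add, mul_add, ha, hb, ← add_mul, ← map_add]
          zero_mem' := by simp
          algebraMap_mem' := by
            intro k
            simp only [Set.mem_setOf_eq, AlgEquiv.commutes, AlgHom.commutes]
            rw [← Algebra.commutes k (y i)]
        }
      have hθS : θ ∈ S := heig i
      have htop : (⊤ : Subalgebra K L) ≤ S := by
        rw [← hadj]
        exact Algebra.adjoin_le (Set.singleton_subset_iff.mpr hθS)
      exact fun l => htop (Algebra.mem_top)
    have hcanc : ∀ (k : ℕ) (l : L), (σ ^ k) ((σ⁻¹ ^ k) l) = l := fun k l => by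
      rw [inv_pow, ← AlgEquiv.mul_apply, mul_inv_cancel, AlgEquiv.one_apply]
    have hcmem : ∀ i : Fin n₀, y i * w ^ (i : ℕ) ∈ Subalgebra.centralizer K (Set.range ι) := by
      intro i
      refine hmemB _ fun l => ?_
      calc ι l * (y i * w ^ (i : ℕ)) = ι ((σ ^ (i : ℕ)) ((σ⁻¹ ^ (i : ℕ)) l)) * y i * w ^ (i : ℕ) := by
            rw [hcanc, mul_assoc]
      _ = (y i * ι ((σ⁻¹ ^ (i : ℕ)) l)) * w ^ (i : ℕ) := by rw [← heig']
      _ = y i * (ι ((σ⁻¹ ^ (i : ℕ)) l) * w ^ (i : ℕ)) := by rw [mul_assoc]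
      _ = y i * (w ^ (i : ℕ) * ι l) := by rw [← hwpow]
      _ = y i * w ^ (i : ℕ) * ι l := by rw [mul_assoc]
    refine ⟨fun i => ⟨y i * w ^ (i : ℕ), hcmem i⟩, ?_, ?_⟩
    · show x = ∑ i, (y i * w ^ (i : ℕ)) * u ^ (i : ℕ)
      rw [← hsum]
      refine Finset.sum_congr rfl fun i _ => ?_
      rw [mul_assoc, hwu_pow, mul_one]
    · intro c' hc'
      have hyc : ∀ j, y j = (c' j : A) * u ^ (j : ℕ) := by
        intro j
        have hz : ∀ i : Fin n₀, ((c' i : A) * u ^ (i : ℕ)) * ι θ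
            = ι (r i) * ((c' i : A) * u ^ (i : ℕ)) := by
          intro i
          have hc'' := hmemB' _ (c' i).2
          calc (c' i : A) * u ^ (i : ℕ) * ι θ = (c' i : A) * (ι (r i) * u ^ (i : ℕ)) := by
                rw [mul_assoc, hupow]
          _ = ((c' i : A) * ι (r i)) * u ^ (i : ℕ) := by rw [mul_assoc]
          _ = (ι (r i) * (c' i : A)) * u ^ (i : ℕ) := by rw [hc'']
          _ = ι (r i) * ((c' i : A) * u ^ (i : ℕ)) := by rw [mul_assoc]
        calc y j = EAux ι θ (Bp j) x := rfl
        _ = ∑ i, EAux ι θ (Bp j) ((c' i : A) * u ^ (i : ℕ)) := by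
              rw [hc', map_sum]
        _ = ∑ i, ι ((Bp j).eval (r i)) * ((c' i : A) * u ^ (i : ℕ)) :=
              Finset.sum_congr rfl fun i _ => EAux_eig ι θ _ _ _ (hz i)
        _ = (c' j : A) * u ^ (j : ℕ) := by
              rw [Finset.sum_eq_single j]
              · rw [hBp, Lagrange.eval_basis_self hrinj.injOn (Finset.mem_univ j), map_one,
                  one_mul]
              · intro i _ hij
                rw [hBp, Lagrange.eval_basis_of_ne (Ne.symm hij) (Finset.mem_univ i), map_zero, zero_mul]
              · intro h; exact absurd (Finset.mem_univ j) h
      funext i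
      apply Subtype.ext
      show (c' i : A) = y i * w ^ (i : ℕ)
      rw [hyc i, mul_assoc, huw_pow, mul_one]
end

section
/- Let $K = \mathbb{Q}(\alpha)$ with $\alpha^3 + \alpha^2 - 2\alpha - 1 = 0$, and let $L = K(\theta)$ where $\theta$ is a root of $x^3 + (\alpha - 2)x^2 + (-\alpha - 1)x + 1 \in K[x]$. Then $L/K$ is a cyclic Galois extension of degree 3, and the map $\theta \mapsto -\theta^2 + (-\alpha + 1)\theta + 2$ extends to a $K$-automorphism of $L$ generating $\mathrm{Gal}(L/K)$. -/
set_option maxHeartbeats 1000000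

open Polynomial


private lemma descent1 : ∀ N : ℕ, ∀ A n : ℤ, A.natAbs + n.natAbs ≤ N →
    A^3 + A^2*n - 2*A*n^2 - n^3 = 0 → A = 0 ∧ n = 0 := by
  intro N
  induction N with
  | zero => intro A n hb _; omega
  | succ N ih =>
    intro A n hb h
    have key : ∀ a m : ZMod 2, a^3 + a^2*m - 2*a*m^2 - m^3 = 0 → a = 0 ∧ m = 0 := by decide
    have hc : ((A : ZMod 2))^3 + ((A:ZMod 2))^2*(n:ZMod 2) - 2*(A:ZMod 2)*(n:ZMod 2)^2 - (n:ZMod 2)^3 = 0 := by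
      exact_mod_cast congrArg (fun x : ℤ => (x : ZMod 2)) h
    obtain ⟨hA2, hn2⟩ := key _ _ hc
    obtain ⟨A', rfl⟩ : (2:ℤ) ∣ A := by
      exact_mod_cast (ZMod.intCast_zmod_eq_zero_iff_dvd A 2).mp hA2
    obtain ⟨n', rfl⟩ : (2:ℤ) ∣ n := by
      exact_mod_cast (ZMod.intCast_zmod_eq_zero_iff_dvd n 2).mp hn2
    have h' : A'^3 + A'^2*n' - 2*A'*n'^2 - n'^3 = 0 :=
      mul_left_cancel₀ (by norm_num : (8:ℤ) ≠ 0) (by linear_combination h)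
    have hb' : A'.natAbs + n'.natAbs ≤ N := by
      simp only [Int.natAbs_mul, show (2:ℤ).natAbs = 2 from rfl] at hb
      omega
    obtain ⟨h1, h2⟩ := ih A' n' hb' h'
    constructor <;> omega

private lemma descent3 : ∀ N : ℕ, ∀ a b c n : ℤ, a.natAbs + b.natAbs + c.natAbs + n.natAbs ≤ N →
    a^3 + (-2)*a^2*n + 6*a*b*c + (-3)*a*c^2 + 2*a*c*n + (-1)*a*n^2 + b^3 + (-3)*b^2*c + b^2*n + 9*b*c^2 + (-6)*b*c*n + (-4)*c^3 + 5*c^2*n + (-1)*c*n^2 + n^3 = 0 →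
    3*a^2*b + a^2*n + 12*a*b*c + (-4)*a*b*n + (-3)*a*c^2 + 4*a*c*n + (-1)*a*n^2 + 2*b^3 + (-3)*b^2*c + 2*b^2*n + 15*b*c^2 + (-10)*b*c*n + (-1)*b*n^2 + (-5)*c^3 + 7*c^2*n + (-2)*c*n^2 = 0 →
    3*a^2*c + 3*a*b^2 + (-6)*a*b*c + 2*a*b*n + 9*a*c^2 + (-6)*a*c*n + (-1)*b^3 + 9*b^2*c + (-3)*b^2*n + (-12)*b*c^2 + 10*b*c*n + (-1)*b*n^2 + 9*c^3 + (-10)*c^2*n = 0 →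
    a = 0 ∧ b = 0 ∧ c = 0 ∧ n = 0 := by
  intro N
  induction N with
  | zero => intro a b c n hb _ _ _; omega
  | succ N ih =>
    intro a b c n hb h1 h2 h3
    have key : ∀ a b c n : ZMod 2,
        a^3 + (-2)*a^2*n + 6*a*b*c + (-3)*a*c^2 + 2*a*c*n + (-1)*a*n^2 + b^3 + (-3)*b^2*c + b^2*n + 9*b*c^2 + (-6)*b*c*n + (-4)*c^3 + 5*c^2*n + (-1)*c*n^2 + n^3 = 0 →
        3*a^2*b + a^2*n + 12*a*b*c + (-4)*a*b*n + (-3)*a*c^2 + 4*a*c*n + (-1)*a*n^2 + 2*b^3 + (-3)*b^2*c + 2*b^2*n + 15*b*c^2 + (-10)*b*c*n + (-1)*b*n^2 + (-5)*c^3 + 7*c^2*n + (-2)*c*n^2 = 0 →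
        3*a^2*c + 3*a*b^2 + (-6)*a*b*c + 2*a*b*n + 9*a*c^2 + (-6)*a*c*n + (-1)*b^3 + 9*b^2*c + (-3)*b^2*n + (-12)*b*c^2 + 10*b*c*n + (-1)*b*n^2 + 9*c^3 + (-10)*c^2*n = 0 →
        a = 0 ∧ b = 0 ∧ c = 0 ∧ n = 0 := by decide
    obtain ⟨ha2, hb2, hc2, hn2⟩ := key (a : ZMod 2) (b : ZMod 2) (c : ZMod 2) (n : ZMod 2)
      (by exact_mod_cast congrArg (fun x : ℤ => (x : ZMod 2)) h1)
      (by exact_mod_cast congrArg (fun x : ℤ => (x : ZMod 2)) h2)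
      (by exact_mod_cast congrArg (fun x : ℤ => (x : ZMod 2)) h3)
    obtain ⟨a', rfl⟩ : (2:ℤ) ∣ a := by
      exact_mod_cast (ZMod.intCast_zmod_eq_zero_iff_dvd a 2).mp ha2
    obtain ⟨b', rfl⟩ : (2:ℤ) ∣ b := by
      exact_mod_cast (ZMod.intCast_zmod_eq_zero_iff_dvd b 2).mp hb2
    obtain ⟨c', rfl⟩ : (2:ℤ) ∣ c := by
      exact_mod_cast (ZMod.intCast_zmod_eq_zero_iff_dvd c 2).mp hc2
    obtain ⟨n', rfl⟩ : (2:ℤ) ∣ n := by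
      exact_mod_cast (ZMod.intCast_zmod_eq_zero_iff_dvd n 2).mp hn2
    have h1' : a'^3 + (-2)*a'^2*n' + 6*a'*b'*c' + (-3)*a'*c'^2 + 2*a'*c'*n' + (-1)*a'*n'^2 + b'^3 + (-3)*b'^2*c' + b'^2*n' + 9*b'*c'^2 + (-6)*b'*c'*n' + (-4)*c'^3 + 5*c'^2*n' + (-1)*c'*n'^2 + n'^3 = 0 :=
      mul_left_cancel₀ (by norm_num : (8:ℤ) ≠ 0) (by linear_combination h1)
    have h2' : 3*a'^2*b' + a'^2*n' + 12*a'*b'*c' + (-4)*a'*b'*n' + (-3)*a'*c'^2 + 4*a'*c'*n' + (-1)*a'*n'^2 + 2*b'^3 + (-3)*b'^2*c' + 2*b'^2*n' + 15*b'*c'^2 + (-10)*b'*c'*n' + (-1)*b'*n'^2 + (-5)*c'^3 + 7*c'^2*n' + (-2)*c'*n'^2 = 0 :=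
      mul_left_cancel₀ (by norm_num : (8:ℤ) ≠ 0) (by linear_combination h2)
    have h3' : 3*a'^2*c' + 3*a'*b'^2 + (-6)*a'*b'*c' + 2*a'*b'*n' + 9*a'*c'^2 + (-6)*a'*c'*n' + (-1)*b'^3 + 9*b'^2*c' + (-3)*b'^2*n' + (-12)*b'*c'^2 + 10*b'*c'*n' + (-1)*b'*n'^2 + 9*c'^3 + (-10)*c'^2*n' = 0 :=
      mul_left_cancel₀ (by norm_num : (8:ℤ) ≠ 0) (by linear_combination h3)
    have hb' : a'.natAbs + b'.natAbs + c'.natAbs + n'.natAbs ≤ N := by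
      simp only [Int.natAbs_mul, show (2:ℤ).natAbs = 2 from rfl] at hb
      omega
    obtain ⟨e1, e2, e3, e4⟩ := ih a' b' c' n' hb' h1' h2' h3'
    refine ⟨by omega, by omega, by omega, by omega⟩

private lemma noRatRoot : ∀ r : ℚ, r^3 + r^2 - 2*r - 1 ≠ 0 := by
  intro r h
  have hden : ((r.den : ℤ) : ℚ) ≠ 0 := by exact_mod_cast r.den_nz
  have hnum : (r.num : ℚ) = r * (r.den : ℚ) := by
    have h0 := Rat.num_div_den r
    have := congrArg (fun x : ℚ => x * (r.den:ℚ)) h0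
    have hd : ((r.den:ℚ)) ≠ 0 := by exact_mod_cast r.den_nz
    simp only [div_mul_cancel₀ _ hd] at this
    exact this
  have hint : r.num^3 + r.num^2*(r.den:ℤ) - 2*r.num*(r.den:ℤ)^2 - (r.den:ℤ)^3 = 0 := by
    have : (r.num:ℚ)^3 + (r.num:ℚ)^2*((r.den:ℤ):ℚ) - 2*(r.num:ℚ)*((r.den:ℤ):ℚ)^2 - ((r.den:ℤ):ℚ)^3 = 0 := by
      rw [hnum]; push_cast; linear_combination ((r.den:ℚ))^3 * h
    exact_mod_cast this
  obtain ⟨-, h2⟩ := descent1 (r.num.natAbs + (r.den:ℤ).natAbs) r.num (r.den:ℤ) le_rfl hint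
  exact absurd h2 (by exact_mod_cast r.den_nz)


open Polynomial

private noncomputable def f₀ : ℚ[X] := X^3 + X^2 - C 2 * X - 1

private lemma f₀_monic : f₀.Monic := by unfold f₀; monicity!

private lemma f₀_natDegree : f₀.natDegree = 3 := by unfold f₀; compute_degree!

private lemma f₀_degree : f₀.degree = 3 := by unfold f₀; compute_degree!

private lemma aeval_f₀ {K : Type*} [Field K] [Algebra ℚ K] (α : K)
    (hα : α^3 + α^2 - 2*α - 1 = 0) : aeval α f₀ = 0 := by
  simp only [f₀, map_add, map_sub, map_mul, map_pow, map_one, aeval_X, aeval_C, aeval_one]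
  norm_num
  linear_combination hα

private lemma minpoly_α {K : Type*} [Field K] [Algebra ℚ K] (α : K)
    (hα : α^3 + α^2 - 2*α - 1 = 0) : minpoly ℚ α = f₀ := by
  refine (minpoly.eq_of_irreducible_of_monic ?_ (aeval_f₀ α hα) f₀_monic).symm
  rw [f₀_monic.irreducible_iff_roots_eq_zero_of_degree_le_three (by rw [f₀_natDegree]; norm_num)
    (by rw [f₀_natDegree])]
  rw [Multiset.eq_zero_iff_forall_notMem]
  intro r hr
  rw [mem_roots'] at hr
  have : r^3 + r^2 - 2*r - 1 = 0 := by
    have := hr.2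
    simp only [IsRoot, f₀, eval_add, eval_sub, eval_mul, eval_pow, eval_X, eval_C, eval_one] at this
    linear_combination this
  exact noRatRoot r this

private lemma indep {K : Type*} [Field K] [Algebra ℚ K] (α : K)
    (hα : α^3 + α^2 - 2*α - 1 = 0) (x y z : ℚ)
    (hxyz : algebraMap ℚ K x + algebraMap ℚ K y * α + algebraMap ℚ K z * α^2 = 0) :
    x = 0 ∧ y = 0 ∧ z = 0 := by
  set q : ℚ[X] := C x + C y * X + C z * X^2 with hq_def
  have haq : aeval α q = 0 := by
    simp only [hq_def, map_add, map_mul, map_pow, aeval_C, aeval_X]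
    exact hxyz
  have hq0 : q = 0 := by
    by_contra hq
    have h1 := minpoly.degree_le_of_ne_zero ℚ α hq haq
    rw [minpoly_α α hα, f₀_degree] at h1
    have h2 : q.degree ≤ 2 := by rw [hq_def]; compute_degree
    have : (3 : WithBot ℕ) ≤ 2 := h1.trans h2
    norm_num at this
  refine ⟨?_, ?_, ?_⟩
  · have := congrArg (fun p => Polynomial.coeff p 0) hq0
    simpa [hq_def, coeff_add, coeff_C, coeff_C_mul, coeff_X, coeff_X_pow] using this
  · have := congrArg (fun p => Polynomial.coeff p 1) hq0
    simpa [hq_def, coeff_add, coeff_C, coeff_C_mul, coeff_X, coeff_X_pow] using this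
  · have := congrArg (fun p => Polynomial.coeff p 2) hq0
    simpa [hq_def, coeff_add, coeff_C, coeff_C_mul, coeff_X, coeff_X_pow] using this

private lemma noRootK {K : Type*} [Field K] [Algebra ℚ K] (α : K)
    (hα : α^3 + α^2 - 2*α - 1 = 0) (hgenK : Algebra.adjoin ℚ {α} = ⊤)
    (β : K) (h : β^3 + (α-2)*β^2 + (-α-1)*β + 1 = 0) : False := by
  obtain ⟨r, hr⟩ : β ∈ (Polynomial.aeval α : ℚ[X] →ₐ[ℚ] K).range := by
    rw [← Algebra.adjoin_singleton_eq_range_aeval, hgenK]; exact Algebra.mem_top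
  set s := r %ₘ f₀ with hs_def
  have hsβ : aeval α s = β := by
    have hdiv := congrArg (aeval α) (modByMonic_add_div r f₀)
    simp only [map_add, map_mul, aeval_f₀ α hα, zero_mul, add_zero] at hdiv
    rw [hdiv]; exact hr
  have hdeg : s.natDegree < 3 := by
    have h1 : s.degree < f₀.degree := degree_modByMonic_lt r f₀_monic
    rw [f₀_degree] at h1
    by_cases hs0 : s = 0
    · simp [hs0]
    · exact (natDegree_lt_iff_degree_lt hs0).mpr (by exact_mod_cast h1)
  set a := s.coeff 0 with ha_def
  set b := s.coeff 1 with hb_def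
  set c := s.coeff 2 with hc_def
  have hβ : β = algebraMap ℚ K a + algebraMap ℚ K b * α + algebraMap ℚ K c * α^2 := by
    rw [← hsβ, aeval_eq_sum_range' hdeg]
    simp only [Finset.sum_range_succ, Finset.sum_range_zero, Algebra.smul_def, zero_add,
      pow_zero, mul_one, pow_one]
    rfl
  rw [hβ] at h
  obtain ⟨h1, h2, h3⟩ := indep α hα
      (a^3 + (-2)*a^2 + 6*a*b*c + (-3)*a*c^2 + 2*a*c + (-1)*a + b^3 + (-3)*b^2*c + b^2 + 9*b*c^2 + (-6)*b*c + (-4)*c^3 + 5*c^2 + (-1)*c + 1)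
      (3*a^2*b + a^2 + 12*a*b*c + (-4)*a*b + (-3)*a*c^2 + 4*a*c + (-1)*a + 2*b^3 + (-3)*b^2*c + 2*b^2 + 15*b*c^2 + (-10)*b*c + (-1)*b + (-5)*c^3 + 7*c^2 + (-2)*c)
      (3*a^2*c + 3*a*b^2 + (-6)*a*b*c + 2*a*b + 9*a*c^2 + (-6)*a*c + (-1)*b^3 + 9*b^2*c + (-3)*b^2 + (-12)*b*c^2 + 10*b*c + (-1)*b + 9*c^3 + (-10)*c^2) (by
    simp only [map_add, map_mul, map_pow, map_neg, map_one, map_ofNat, map_sub]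
    linear_combination h - (α^3*(algebraMap ℚ K c)^3 + 3*α^2*(algebraMap ℚ K b)*(algebraMap ℚ K c)^2 + (-1)*α^2*(algebraMap ℚ K c)^3 + α^2*(algebraMap ℚ K c)^2 + 3*α*(algebraMap ℚ K a)*(algebraMap ℚ K c)^2 + 3*α*(algebraMap ℚ K b)^2*(algebraMap ℚ K c) + (-3)*α*(algebraMap ℚ K b)*(algebraMap ℚ K c)^2 + 2*α*(algebraMap ℚ K b)*(algebraMap ℚ K c) + 3*α*(algebraMap ℚ K c)^3 + (-3)*α*(algebraMap ℚ K c)^2 + 6*(algebraMap ℚ K a)*(algebraMap ℚ K b)*(algebraMap ℚ K c) + (-3)*(algebraMap ℚ K a)*(algebraMap ℚ K c)^2 + 2*(algebraMap ℚ K a)*(algebraMap ℚ K c) + (algebraMap ℚ K b)^3 + (-3)*(algebraMap ℚ K b)^2*(algebraMap ℚ K c) + (algebraMap ℚ K b)^2 + 9*(algebraMap ℚ K b)*(algebraMap ℚ K c)^2 + (-6)*(algebraMap ℚ K b)*(algebraMap ℚ K c) + (-4)*(algebraMap ℚ K c)^3 + 5*(algebraMap ℚ K c)^2 + (-1)*(algebraMap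 ℚ K c)) * hα)
  have hda : ((a.den:ℤ):ℚ) ≠ 0 := by exact_mod_cast a.den_nz
  have hdb : ((b.den:ℤ):ℚ) ≠ 0 := by exact_mod_cast b.den_nz
  have hdc : ((c.den:ℤ):ℚ) ≠ 0 := by exact_mod_cast c.den_nz
  have hna : (a.num:ℚ) = a * (a.den:ℚ) := by
    have h0 := Rat.num_div_den a
    have := congrArg (fun x : ℚ => x * (a.den:ℚ)) h0
    simp only [div_mul_cancel₀ _ (by exact_mod_cast a.den_nz : ((a.den:ℚ)) ≠ 0)] at this
    exact this
  have hnb : (b.num:ℚ) = b * (b.den:ℚ) := by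
    have h0 := Rat.num_div_den b
    have := congrArg (fun x : ℚ => x * (b.den:ℚ)) h0
    simp only [div_mul_cancel₀ _ (by exact_mod_cast b.den_nz : ((b.den:ℚ)) ≠ 0)] at this
    exact this
  have hnc : (c.num:ℚ) = c * (c.den:ℚ) := by
    have h0 := Rat.num_div_den c
    have := congrArg (fun x : ℚ => x * (c.den:ℚ)) h0
    simp only [div_mul_cancel₀ _ (by exact_mod_cast c.den_nz : ((c.den:ℚ)) ≠ 0)] at this
    exact this
  set A : ℤ := a.num * b.den * c.den with hA_def
  set B : ℤ := (a.den:ℤ) * b.num * c.den with hB_def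
  set C : ℤ := (a.den:ℤ) * b.den * c.num with hC_def
  set n : ℤ := (a.den:ℤ) * b.den * c.den with hn_def
  have he1 : A^3 + (-2)*A^2*n + 6*A*B*C + (-3)*A*C^2 + 2*A*C*n + (-1)*A*n^2 + B^3 + (-3)*B^2*C + B^2*n + 9*B*C^2 + (-6)*B*C*n + (-4)*C^3 + 5*C^2*n + (-1)*C*n^2 + n^3 = 0 := by
    have : (((A^3 + (-2)*A^2*n + 6*A*B*C + (-3)*A*C^2 + 2*A*C*n + (-1)*A*n^2 + B^3 + (-3)*B^2*C + B^2*n + 9*B*C^2 + (-6)*B*C*n + (-4)*C^3 + 5*C^2*n + (-1)*C*n^2 + n^3) : ℤ) : ℚ) = 0 := by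
      push_cast [hA_def, hB_def, hC_def, hn_def]
      rw [hna, hnb, hnc]
      linear_combination ((a.den:ℚ)*(b.den:ℚ)*(c.den:ℚ))^3 * h1
    exact_mod_cast this
  have he2 : 3*A^2*B + A^2*n + 12*A*B*C + (-4)*A*B*n + (-3)*A*C^2 + 4*A*C*n + (-1)*A*n^2 + 2*B^3 + (-3)*B^2*C + 2*B^2*n + 15*B*C^2 + (-10)*B*C*n + (-1)*B*n^2 + (-5)*C^3 + 7*C^2*n + (-2)*C*n^2 = 0 := by
    have : (((3*A^2*B + A^2*n + 12*A*B*C + (-4)*A*B*n + (-3)*A*C^2 + 4*A*C*n + (-1)*A*n^2 + 2*B^3 + (-3)*B^2*C + 2*B^2*n + 15*B*C^2 + (-10)*B*C*n + (-1)*B*n^2 + (-5)*C^3 + 7*C^2*n + (-2)*C*n^2) : ℤ) : ℚ) = 0 := by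
      push_cast [hA_def, hB_def, hC_def, hn_def]
      rw [hna, hnb, hnc]
      linear_combination ((a.den:ℚ)*(b.den:ℚ)*(c.den:ℚ))^3 * h2
    exact_mod_cast this
  have he3 : 3*A^2*C + 3*A*B^2 + (-6)*A*B*C + 2*A*B*n + 9*A*C^2 + (-6)*A*C*n + (-1)*B^3 + 9*B^2*C + (-3)*B^2*n + (-12)*B*C^2 + 10*B*C*n + (-1)*B*n^2 + 9*C^3 + (-10)*C^2*n = 0 := by
    have : (((3*A^2*C + 3*A*B^2 + (-6)*A*B*C + 2*A*B*n + 9*A*C^2 + (-6)*A*C*n + (-1)*B^3 + 9*B^2*C + (-3)*B^2*n + (-12)*B*C^2 + 10*B*C*n + (-1)*B*n^2 + 9*C^3 + (-10)*C^2*n) : ℤ) : ℚ) = 0 := by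
      push_cast [hA_def, hB_def, hC_def, hn_def]
      rw [hna, hnb, hnc]
      linear_combination ((a.den:ℚ)*(b.den:ℚ)*(c.den:ℚ))^3 * h3
    exact_mod_cast this
  obtain ⟨-, -, -, hn0⟩ := descent3 (A.natAbs + B.natAbs + C.natAbs + n.natAbs) A B C n
    le_rfl he1 he2 he3
  have hpa : (0:ℤ) < (a.den:ℤ) := by exact_mod_cast a.pos
  have hpb : (0:ℤ) < (b.den:ℤ) := by exact_mod_cast b.pos
  have hpc : (0:ℤ) < (c.den:ℤ) := by exact_mod_cast c.pos
  rw [hn_def] at hn0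
  nlinarith [mul_pos (mul_pos hpa hpb) hpc]

/-- Let `K = ℚ(α)` with `α³ + α² - 2α - 1 = 0` and `L = K(θ)` where
`θ³ + (α-2)θ² + (-α-1)θ + 1 = 0`.  Then `L/K` is cyclic Galois of degree `3` and
`θ ↦ -θ² + (-α+1)θ + 2` extends to a `K`-automorphism of `L` generating `Gal(L/K)`. -/
theorem cubic_tower_galois {K L : Type*} [Field K] [Algebra ℚ K] [Field L] [Algebra K L]
    (α : K) (hα : α ^ 3 + α ^ 2 - 2 * α - 1 = 0)
    (hgenK : Algebra.adjoin ℚ {α} = ⊤)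
    (θ : L)
    (hθ : θ ^ 3 + algebraMap K L (α - 2) * θ ^ 2 + algebraMap K L (-α - 1) * θ + 1 = 0)
    (hgenL : Algebra.adjoin K {θ} = ⊤) :
    IsGalois K L ∧ Module.finrank K L = 3 ∧
    ∃ τ : L ≃ₐ[K] L, τ θ = -θ ^ 2 + algebraMap K L (-α + 1) * θ + 2 ∧
      ∀ g : L ≃ₐ[K] L, g ∈ Subgroup.zpowers τ := by
  classical
  have hθ' : θ^3 + (algebraMap K L α - 2)*θ^2 + (-(algebraMap K L α) - 1)*θ + 1 = 0 := by
    have := hθ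
    simp only [map_sub, map_neg, map_one, map_ofNat] at this
    exact this
  set p : K[X] := X^3 + C (α-2) * X^2 + C (-α-1) * X + 1 with hp_def
  have hmp : p.Monic := by rw [hp_def]; monicity!
  have hdp : p.natDegree = 3 := by rw [hp_def]; compute_degree!
  have hdpd : p.degree = 3 := by rw [hp_def]; compute_degree!
  have haθ : aeval θ p = 0 := by
    simp only [hp_def, map_add, map_mul, map_pow, map_one, aeval_X, aeval_C]
    exact hθ
  have hirr : Irreducible p := by
    rw [hmp.irreducible_iff_roots_eq_zero_of_degree_le_three (by rw [hdp]; norm_num)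
      (by rw [hdp])]
    rw [Multiset.eq_zero_iff_forall_notMem]
    intro x hx
    rw [mem_roots'] at hx
    refine noRootK α hα hgenK x ?_
    have := hx.2
    simp only [IsRoot, hp_def, eval_add, eval_mul, eval_pow, eval_X, eval_C, eval_one] at this
    linear_combination this
  have hminp : minpoly K θ = p := (minpoly.eq_of_irreducible_of_monic hirr haθ hmp).symm
  have hint : IsIntegral K θ := ⟨p, hmp, by rw [← aeval_def]; exact haθ⟩
  set pb : PowerBasis K L := (Algebra.adjoin.powerBasis hint).map
    ((Subalgebra.equivOfEq _ _ hgenL).trans Subalgebra.topEquiv) with hpb_def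
  have hgen : pb.gen = θ := rfl
  haveI : FiniteDimensional K L := pb.finite
  have hfin : Module.finrank K L = 3 := by
    rw [pb.finrank, show pb.dim = (minpoly K θ).natDegree from rfl, hminp, hdp]
  -- the automorphism
  set y : L := -θ ^ 2 + algebraMap K L (-α + 1) * θ + 2 with hy_def
  have hy : aeval y (minpoly K pb.gen) = 0 := by
    rw [hgen, hminp]
    simp only [hp_def, map_add, map_mul, map_pow, map_one, aeval_X, aeval_C, hy_def,
      map_sub, map_neg, map_ofNat]
    linear_combination (-θ^3 - 2*θ^2*(algebraMap K L α) + θ^2 - θ*(algebraMap K L α)^2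
      + θ*(algebraMap K L α) + 2*θ + 2*(algebraMap K L α) - 1) * hθ'
  set τ₀ : L →ₐ[K] L := pb.lift y hy with hτ₀_def
  have hinj : Function.Injective τ₀ := τ₀.toRingHom.injective
  have hsurj : Function.Surjective τ₀ := LinearMap.surjective_of_injective
    (f := τ₀.toLinearMap) hinj
  set τ : L ≃ₐ[K] L := AlgEquiv.ofBijective τ₀ ⟨hinj, hsurj⟩ with hτ_def
  have hτθ : τ θ = y := by
    show τ₀ θ = y
    conv_lhs => rw [← hgen]
    exact pb.lift_gen y hy
  have hext : ∀ f g : L ≃ₐ[K] L, f θ = g θ → f = g := by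
    intro f g hfg
    have : (f : L →ₐ[K] L) = (g : L →ₐ[K] L) := pb.algHom_ext (by rw [hgen]; exact hfg)
    exact AlgEquiv.ext fun x => DFunLike.congr_fun this x
  have hc : ∀ w : L, τ (-w^2 + algebraMap K L (-α + 1) * w + 2)
      = -(τ w)^2 + algebraMap K L (-α + 1) * (τ w) + 2 := by
    intro w
    simp only [map_add, map_mul, map_neg, map_pow, map_ofNat, AlgEquiv.commutes]
  have e2 : τ y = -y^2 + algebraMap K L (-α + 1) * y + 2 := by
    have := hc θ
    rw [hτθ] at this
    rw [hy_def] at this ⊢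
    exact this
  have e3 : τ (-y^2 + algebraMap K L (-α + 1) * y + 2)
      = -(-y^2 + algebraMap K L (-α + 1) * y + 2)^2
        + algebraMap K L (-α + 1) * (-y^2 + algebraMap K L (-α + 1) * y + 2) + 2 := by
    have := hc y
    rw [e2] at this
    exact this
  have hmapna : algebraMap K L (-α + 1) = -(algebraMap K L α) + 1 := by
    simp only [map_add, map_neg, map_one]
  have hτ3 : τ ^ 3 = 1 := by
    apply hext
    simp only [pow_succ, pow_zero, one_mul, AlgEquiv.mul_apply, AlgEquiv.one_apply]
    rw [hτθ, e2, e3, hy_def, hmapna]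
    linear_combination (-θ^5 - 3*θ^4*(algebraMap K L α) + 2*θ^4 - 3*θ^3*(algebraMap K L α)^2
      + 5*θ^3*(algebraMap K L α) + 3*θ^3 - θ^2*(algebraMap K L α)^3
      + 4*θ^2*(algebraMap K L α)^2 + 6*θ^2*(algebraMap K L α) - 5*θ^2
      + θ*(algebraMap K L α)^3 + 3*θ*(algebraMap K L α)^2 - 7*θ*(algebraMap K L α) - 2*θ
      - 2*(algebraMap K L α)^2 - 2*(algebraMap K L α) + 2) * hθ'
  have hτne : τ ≠ 1 := by
    intro h1
    have hyθ : y = θ := by rw [← hτθ, h1, AlgEquiv.one_apply]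
    rw [hy_def, hmapna] at hyθ
    set q : K[X] := X^2 + C α * X - C 2 with hq_def
    have haq : aeval θ q = 0 := by
      simp only [hq_def, map_add, map_sub, map_mul, map_pow, map_ofNat, aeval_X, aeval_C]
      linear_combination -hyθ
    have hqne : q ≠ 0 := by
      intro h0
      have := congrArg (fun r => coeff r 2) h0
      simp [hq_def, coeff_add, coeff_sub, coeff_X_pow, coeff_C_mul, coeff_X, coeff_C] at this
    have hle := minpoly.degree_le_of_ne_zero K θ hqne haq
    rw [hminp, hdpd] at hle
    have hq2 : q.degree ≤ 2 := by rw [hq_def]; compute_degree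
    have : (3 : WithBot ℕ) ≤ 2 := hle.trans hq2
    norm_num at this
  haveI : Fact (Nat.Prime 3) := ⟨by norm_num⟩
  have horder : orderOf τ = 3 := orderOf_eq_prime hτ3 hτne
  have hcard_le : Nat.card (L ≃ₐ[K] L) ≤ 3 := by
    set pl : L[X] := p.map (algebraMap K L) with hpl_def
    have hplne : pl ≠ 0 := (hmp.map (algebraMap K L)).ne_zero
    have hmem : ∀ g : L ≃ₐ[K] L, g θ ∈ pl.roots.toFinset := by
      intro g
      rw [Multiset.mem_toFinset, mem_roots hplne]
      show eval (g θ) pl = 0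
      rw [hpl_def, eval_map, ← aeval_def]
      have h5 : aeval ((g : L →ₐ[K] L) θ) p = (g : L →ₐ[K] L) (aeval θ p) :=
        aeval_algHom_apply _ θ p
      rw [haθ, map_zero] at h5
      exact h5
    have hinj2 : Function.Injective
        (fun g : L ≃ₐ[K] L => (⟨g θ, hmem g⟩ : {x // x ∈ pl.roots.toFinset})) := by
      intro g1 g2 hgg
      exact hext g1 g2 (by simpa using congrArg Subtype.val hgg)
    calc Nat.card (L ≃ₐ[K] L) ≤ Nat.card {x // x ∈ pl.roots.toFinset} :=
          Nat.card_le_card_of_injective _ hinj2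
      _ = pl.roots.toFinset.card := by
          rw [Nat.card_eq_fintype_card, Fintype.card_coe]
      _ ≤ Multiset.card pl.roots := pl.roots.toFinset_card_le
      _ ≤ pl.natDegree := pl.card_roots'
      _ = 3 := by rw [hpl_def, hmp.natDegree_map, hdp]
  have hcard : Nat.card (L ≃ₐ[K] L) = 3 := by
    refine le_antisymm hcard_le ?_
    calc (3:ℕ) = Nat.card (Subgroup.zpowers τ) := by rw [Nat.card_zpowers, horder]
      _ ≤ Nat.card (L ≃ₐ[K] L) := Subgroup.card_le_card_group _
  have hgal : IsGalois K L := by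
    apply IsGalois.of_card_aut_eq_finrank
    rw [hcard, hfin]
  have htop : Subgroup.zpowers τ = ⊤ := by
    apply Subgroup.eq_top_of_le_card
    rw [Nat.card_zpowers, horder, hcard]
  exact ⟨hgal, hfin, τ, hτθ, fun g => by rw [htop]; exact Subgroup.mem_top g⟩
end
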